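/- arXiv:1805.09453 — 5 statements merged into one kernel-verified Lean document; each statement's English description precedes it below -/
import Mathlib

section
/- Under the G-prox PDHG setup with initial dual point p₀ = 0, for every R > 0 and every θ ∈ (0,1), if the iterates are run with step sizes τ = θR/C and σ = θC/R, then for every N ≥ 1 the ergodic average satisfies F(u^N) ≤ RC/(θN) + inf { F(u) : u ∈ H, ‖K(u − u₀)‖_Z ≤ R }. -/
open Filter Topology
open scoped RealInnerProductSpace

lemma norm_combo_sq {E : Type*} [NormedAddCommGroup E] [InnerProductSpace ℝ E]
    (v w : E) (t : ℝ) :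
    ‖t • v + (1 - t) • w‖ ^ 2
      = t * ‖v‖ ^ 2 + (1 - t) * ‖w‖ ^ 2 - t * (1 - t) * ‖v - w‖ ^ 2 := by
  have h1 : (‖t • v + (1 - t) • w‖ : ℝ) ^ 2 = ⟪t • v + (1 - t) • w, t • v + (1 - t) • w⟫ :=
    (real_inner_self_eq_norm_sq _).symm
  have h2 : ‖v - w‖ ^ 2 = ‖v‖ ^ 2 - 2 * ⟪v, w⟫ + ‖w‖ ^ 2 := norm_sub_sq_real v w
  have hv : ⟪v, v⟫ = ‖v‖ ^ 2 := real_inner_self_eq_norm_sq v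
  have hw : ⟪w, w⟫ = ‖w‖ ^ 2 := real_inner_self_eq_norm_sq w
  have hc : ⟪w, v⟫ = ⟪v, w⟫ := real_inner_comm v w
  simp only [inner_add_add_self, real_inner_smul_left, real_inner_smul_right] at h1
  rw [h1, hv, hw, hc]
  linear_combination (t * (1 - t)) * h2

/-- Three-point inequality for the prox step of a convex `EReal`-valued function. -/
lemma three_point {E : Type*} [NormedAddCommGroup E] [InnerProductSpace ℝ E]
    (φ : E → EReal) (hbot : ∀ x, φ x ≠ ⊥)
    (hconv : ∀ a b : E, ∀ t : ℝ, 0 ≤ t → t ≤ 1 →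
      φ (t • a + (1 - t) • b) ≤ (t : EReal) * φ a + ((1 - t : ℝ) : EReal) * φ b)
    (ℓ : E → ℝ)
    (hℓ : ∀ a b : E, ∀ t : ℝ, ℓ (t • a + (1 - t) • b) = t * ℓ a + (1 - t) * ℓ b)
    (x₀ xs : E) (τ : ℝ) (hτ : 0 < τ)
    (hmin : ∀ x : E, φ xs + ((ℓ xs + ‖xs - x₀‖ ^ 2 / (2 * τ) : ℝ) : EReal)
      ≤ φ x + ((ℓ x + ‖x - x₀‖ ^ 2 / (2 * τ) : ℝ) : EReal))
    (x : E) (xr sr : ℝ) (hx : φ x = (xr : EReal)) (hs : φ xs = (sr : EReal)) :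
    sr + ℓ xs + ‖xs - x₀‖ ^ 2 / (2 * τ) + ‖x - xs‖ ^ 2 / (2 * τ)
      ≤ xr + ℓ x + ‖x - x₀‖ ^ 2 / (2 * τ) := by
  set D : ℝ := ‖x - xs‖ ^ 2 / (2 * τ) with hDdef
  have hD : 0 ≤ D := by positivity
  have key : ∀ t : ℝ, 0 < t → t ≤ 1 →
      sr + ℓ xs + ‖xs - x₀‖ ^ 2 / (2 * τ) + (1 - t) * D
        ≤ xr + ℓ x + ‖x - x₀‖ ^ 2 / (2 * τ) := by
    intro t ht0 ht1
    set xt : E := t • x + (1 - t) • xs with hxt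
    have hconvt := hconv x xs t ht0.le ht1
    rw [hx, hs, ← EReal.coe_mul, ← EReal.coe_mul, ← EReal.coe_add] at hconvt
    have hnb : φ xt ≠ ⊥ := hbot xt
    have hnt : φ xt ≠ ⊤ := by
      intro h
      rw [h] at hconvt
      exact (EReal.coe_lt_top _).not_ge hconvt
    obtain ⟨cr, hcr⟩ : ∃ r : ℝ, φ xt = (r : EReal) := ⟨_, (EReal.coe_toReal hnt hnb).symm⟩
    have hcrle : cr ≤ t * xr + (1 - t) * sr := by
      rw [hcr] at hconvt; exact_mod_cast hconvt
    have hmint := hmin xt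
    rw [hs, hcr, ← EReal.coe_add, ← EReal.coe_add] at hmint
    have hminr : sr + (ℓ xs + ‖xs - x₀‖ ^ 2 / (2 * τ))
        ≤ cr + (ℓ xt + ‖xt - x₀‖ ^ 2 / (2 * τ)) := by exact_mod_cast hmint
    have hℓt : ℓ xt = t * ℓ x + (1 - t) * ℓ xs := hℓ x xs t
    have hxt0 : xt - x₀ = t • (x - x₀) + (1 - t) • (xs - x₀) := by
      rw [hxt]; module
    have hdiff : (x - x₀) - (xs - x₀) = x - xs := by abel
    have hnorm : ‖xt - x₀‖ ^ 2 = t * ‖x - x₀‖ ^ 2 + (1 - t) * ‖xs - x₀‖ ^ 2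
        - t * (1 - t) * ‖x - xs‖ ^ 2 := by
      rw [hxt0, norm_combo_sq, hdiff]
    have hτ' : (0:ℝ) < 2 * τ := by linarith
    have hmul : t * (sr + ℓ xs + ‖xs - x₀‖ ^ 2 / (2 * τ) + (1 - t) * D)
        ≤ t * (xr + ℓ x + ‖x - x₀‖ ^ 2 / (2 * τ)) := by
      rw [hDdef]
      rw [hℓt, hnorm] at hminr
      have hexp : (t * ‖x - x₀‖ ^ 2 + (1 - t) * ‖xs - x₀‖ ^ 2
          - t * (1 - t) * ‖x - xs‖ ^ 2) / (2 * τ)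
          = t * (‖x - x₀‖ ^ 2 / (2 * τ)) + (1 - t) * (‖xs - x₀‖ ^ 2 / (2 * τ))
            - t * (1 - t) * (‖x - xs‖ ^ 2 / (2 * τ)) := by ring
      rw [hexp] at hminr
      nlinarith [hminr, hcrle]
    have := (mul_le_mul_iff_right₀ ht0).mp hmul
    linarith
  have hfinal : ∀ ε : ℝ, 0 < ε →
      sr + ℓ xs + ‖xs - x₀‖ ^ 2 / (2 * τ) + D
        ≤ xr + ℓ x + ‖x - x₀‖ ^ 2 / (2 * τ) + ε := by
    intro ε hε
    rcases hD.eq_or_lt with h0 | hDpos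
    · have := key 1 one_pos le_rfl
      rw [← h0] at this ⊢
      linarith
    · set t : ℝ := min 1 (ε / D) with ht
      have ht0 : 0 < t := lt_min one_pos (div_pos hε hDpos)
      have ht1 : t ≤ 1 := min_le_left _ _
      have htD : t * D ≤ ε := by
        have h1 : t ≤ ε / D := min_le_right _ _
        have h2 := mul_le_mul_of_nonneg_right h1 hD
        rwa [div_mul_cancel₀ _ hDpos.ne'] at h2
      have := key t ht0 ht1
      nlinarith [this, htD]
  by_contra hcon
  push_neg at hcon
  have := hfinal ((sr + ℓ xs + ‖xs - x₀‖ ^ 2 / (2 * τ) + D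
      - (xr + ℓ x + ‖x - x₀‖ ^ 2 / (2 * τ))) / 2) (by linarith)
  linarith

/-- Finite Jensen inequality for an `EReal`-valued convex function, with points having
real (finite) values. -/
lemma jensen_avg {E : Type*} [AddCommGroup E] [Module ℝ E]
    (φ : E → EReal) (hbot : ∀ x, φ x ≠ ⊥)
    (hconv : ∀ a b : E, ∀ t : ℝ, 0 ≤ t → t ≤ 1 →
      φ (t • a + (1 - t) • b) ≤ (t : EReal) * φ a + ((1 - t : ℝ) : EReal) * φ b)
    (x : ℕ → E) (v : ℕ → ℝ) (hx : ∀ n, φ (x n) = ((v n : ℝ) : EReal)) :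
    ∀ N : ℕ, 1 ≤ N →
      φ ((N : ℝ)⁻¹ • ∑ n ∈ Finset.range N, x n)
        ≤ (((N : ℝ)⁻¹ * ∑ n ∈ Finset.range N, v n : ℝ) : EReal) := by
  intro N hN
  induction N with
  | zero => omega
  | succ N ih =>
    rcases Nat.eq_or_lt_of_le hN with h1 | h1
    · simp only [← h1]
      simp [hx 0]
    · have hN1 : 1 ≤ N := by omega
      have ihN := ih hN1
      have hNpos : (0:ℝ) < N := by exact_mod_cast hN1
      have hN1pos : (0:ℝ) < (N:ℝ) + 1 := by linarith
      set t : ℝ := ((N:ℝ) + 1)⁻¹ with ht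
      have ht0 : 0 ≤ t := by positivity
      have ht1 : t ≤ 1 := by
        rw [ht]; rw [inv_le_one_iff₀]; right; linarith
      have hsplit : ((N+1 : ℕ) : ℝ)⁻¹ • ∑ n ∈ Finset.range (N+1), x n
          = t • x N + (1 - t) • ((N:ℝ)⁻¹ • ∑ n ∈ Finset.range N, x n) := by
        rw [Finset.sum_range_succ, ht]
        push_cast
        match_scalars
        · field_simp; ring
        · field_simp
      obtain ⟨cr, hcr⟩ : ∃ r : ℝ, φ ((N:ℝ)⁻¹ • ∑ n ∈ Finset.range N, x n) = (r : EReal) := by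
        refine ⟨_, (EReal.coe_toReal ?_ (hbot _)).symm⟩
        intro h
        rw [h] at ihN
        exact (EReal.coe_lt_top _).not_ge ihN
      have hcrle : cr ≤ (N:ℝ)⁻¹ * ∑ n ∈ Finset.range N, v n := by
        rw [hcr] at ihN; exact_mod_cast ihN
      have hc := hconv (x N) ((N:ℝ)⁻¹ • ∑ n ∈ Finset.range N, x n) t ht0 ht1
      rw [hx N, hcr, ← EReal.coe_mul, ← EReal.coe_mul, ← EReal.coe_add] at hc
      rw [hsplit]
      refine hc.trans ?_
      rw [EReal.coe_le_coe_iff]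
      have heq : (((N:ℕ):ℝ) + 1)⁻¹ * ∑ n ∈ Finset.range (N+1), v n
          = t * v N + (1 - t) * ((N:ℝ)⁻¹ * ∑ n ∈ Finset.range N, v n) := by
        rw [Finset.sum_range_succ, ht]
        field_simp
        ring
      push_cast
      rw [heq]
      have h1t0 : 0 ≤ 1 - t := by linarith
      nlinarith [mul_le_mul_of_nonneg_left hcrle h1t0]

lemma quad_bound (C R θ a b : ℝ) (hC : 0 < C) (hR : 0 < R) (hθ0 : 0 < θ) (hθ1 : θ < 1)
    (ha : 0 ≤ a) (hb : 0 ≤ b) :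
    a * b ≤ a ^ 2 / (2 * (θ * R / C)) + b ^ 2 / (2 * (θ * C / R)) := by
  have h1 : a ^ 2 / (2 * (θ * R / C)) = C * a ^ 2 / (2 * θ * R) := by
    field_simp
  have h2 : b ^ 2 / (2 * (θ * C / R)) = R * b ^ 2 / (2 * θ * C) := by
    field_simp
  rw [h1, h2, div_add_div _ _ (by positivity) (by positivity), le_div_iff₀ (by positivity)]
  have key : 2 * C * R * a * b ≤ C ^ 2 * a ^ 2 + R ^ 2 * b ^ 2 := by
    nlinarith [sq_nonneg (C * a - R * b)]
  have hab : 0 ≤ a * b := mul_nonneg ha hb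
  have hcr : 0 < C * R := mul_pos hC hR
  nlinarith [mul_le_mul_of_nonneg_left key (mul_pos hθ0 hθ0).le,
    mul_nonneg (mul_nonneg hab hcr.le) (mul_nonneg hθ0.le (sub_nonneg.2 hθ1.le))]
set_option maxHeartbeats 2000000 in
/-- **G-prox PDHG convergence bound (Theorem 1.1 / 3.1 form).**
Under the G-prox PDHG setup (K an isometry, dual maximizers uniformly bounded by C,
initial dual point p₀ = 0), for every R > 0 and θ ∈ (0,1), running the iterates with
step sizes τ = θR/C and σ = θC/R gives, for every N ≥ 1,
F(u^N) ≤ RC/(θN) + inf { F(u) : ‖K(u − u₀)‖ ≤ R }. -/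

theorem gprox_pdhg_rate
    {H Z : Type*} [NormedAddCommGroup H] [InnerProductSpace ℝ H] [CompleteSpace H]
    [NormedAddCommGroup Z] [InnerProductSpace ℝ Z] [CompleteSpace Z]
    (K : H →L[ℝ] Z)
    (g : H → EReal) (fstar : Z → EReal)
    -- g and f* are proper
    (hg_ne_bot : ∀ u, g u ≠ ⊥) (hg_ne_top : ∃ u, g u ≠ ⊤)
    (hf_ne_bot : ∀ p, fstar p ≠ ⊥) (hf_ne_top : ∃ p, fstar p ≠ ⊤)
    -- g and f* are convex
    (hg_conv : ∀ u v : H, ∀ t : ℝ, 0 ≤ t → t ≤ 1 →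
      g (t • u + (1 - t) • v) ≤ (t : EReal) * g u + ((1 - t : ℝ) : EReal) * g v)
    (hf_conv : ∀ p q : Z, ∀ t : ℝ, 0 ≤ t → t ≤ 1 →
      fstar (t • p + (1 - t) • q) ≤ (t : EReal) * fstar p + ((1 - t : ℝ) : EReal) * fstar q)
    -- g and f* are lower semicontinuous
    (hg_lsc : LowerSemicontinuous g) (hf_lsc : LowerSemicontinuous fstar)
    -- Lagrangian and primal functional
    (L : H → Z → EReal)
    (hL : ∀ u p, L u p = ((inner ℝ (K u) p : ℝ) : EReal) + g u - fstar p)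
    (F : H → EReal) (hF : ∀ u, F u = ⨆ p : Z, L u p)
    -- G-prox setup: K is an isometry (PDHG in the norm ‖K·‖, so ‖K‖ = 1)
    (hK_isom : ∀ u : H, ‖K u‖ = ‖u‖)
    -- the dual maximizers are uniformly bounded by C
    (C : ℝ) (hC : 0 < C)
    (hmax_bdd : ∀ u : H, ∃ pu : Z, ‖pu‖ ≤ C ∧
      IsMaxOn (fun p : Z => ((inner ℝ (K u) p : ℝ) : EReal) - fstar p) Set.univ pu)
    -- parameters and step sizes
    (R θ : ℝ) (hR : 0 < R) (hθ0 : 0 < θ) (hθ1 : θ < 1)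
    (τ σ : ℝ) (hτ : τ = θ * R / C) (hσ : σ = θ * C / R)
    -- initial points and iterates of G-prox PDHG
    (u0 : H) (useq : ℕ → H) (pseq : ℕ → Z) (pbar : ℕ → Z)
    (hu_init : useq 0 = u0) (hp_init : pseq 0 = 0) (hpbar_init : pbar 0 = pseq 0)
    (hu_step : ∀ n : ℕ, IsMinOn
      (fun u : H => g u + ((inner ℝ (K u) (pbar n) : ℝ) : EReal)
        + ((‖u - useq n‖ ^ 2 / (2 * τ) : ℝ) : EReal)) Set.univ (useq (n + 1)))
    (hp_step : ∀ n : ℕ, IsMaxOn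
      (fun p : Z => -fstar p + ((inner ℝ (K (useq (n + 1))) p : ℝ) : EReal)
        - ((‖p - pseq n‖ ^ 2 / (2 * σ) : ℝ) : EReal)) Set.univ (pseq (n + 1)))
    (hpbar_step : ∀ n : ℕ, pbar (n + 1) = (2 : ℝ) • pseq (n + 1) - pseq n)
    -- ergodic averages
    (uavg : ℕ → H)
    (huavg : ∀ N : ℕ, uavg N = (N : ℝ)⁻¹ • ∑ n ∈ Finset.range N, useq (n + 1)) :
    ∀ N : ℕ, 1 ≤ N →
      F (uavg N) ≤ ((R * C / (θ * N) : ℝ) : EReal)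
        + ⨅ u ∈ {u : H | ‖K (u - u0)‖ ≤ R}, F u := by
  intro N hN
  have hτ0 : 0 < τ := by rw [hτ]; positivity
  have hσ0 : 0 < σ := by rw [hσ]; positivity
  obtain ⟨w0, hw0⟩ := hg_ne_top
  obtain ⟨p0, hp0t⟩ := hf_ne_top
  obtain ⟨p0r, hp0r⟩ : ∃ r : ℝ, fstar p0 = (r : EReal) :=
    ⟨_, (EReal.coe_toReal hp0t (hf_ne_bot p0)).symm⟩
  -- Cauchy–Schwarz through the isometry
  have cs : ∀ (x : H) (y : Z), ⟪K x, y⟫ ≤ ‖x‖ * ‖y‖ := by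
    intro x y
    calc ⟪K x, y⟫ ≤ ‖K x‖ * ‖y‖ := real_inner_le_norm _ _
      _ = ‖x‖ * ‖y‖ := by rw [hK_isom]
  have qb : ∀ a b : ℝ, 0 ≤ a → 0 ≤ b → a * b ≤ a ^ 2 / (2 * τ) + b ^ 2 / (2 * σ) := by
    intro a b ha hb
    rw [hτ, hσ]
    exact quad_bound C R θ a b hC hR hθ0 hθ1 ha hb
  -- finiteness of the iterates' values
  have hgfin : ∀ n : ℕ, ∃ r : ℝ, g (useq (n + 1)) = (r : EReal) := by
    intro n
    refine ⟨_, (EReal.coe_toReal ?_ (hg_ne_bot _)).symm⟩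
    intro htop
    have h1 := isMinOn_iff.mp (hu_step n) w0 (Set.mem_univ w0)
    rw [htop] at h1
    rw [EReal.top_add_coe, EReal.top_add_coe] at h1
    obtain ⟨w0r, hw0r⟩ : ∃ r : ℝ, g w0 = (r : EReal) :=
      ⟨_, (EReal.coe_toReal hw0 (hg_ne_bot w0)).symm⟩
    rw [hw0r, ← EReal.coe_add, ← EReal.coe_add, top_le_iff] at h1
    exact EReal.coe_ne_top _ h1
  have hffin : ∀ n : ℕ, ∃ r : ℝ, fstar (pseq (n + 1)) = (r : EReal) := by
    intro n
    refine ⟨_, (EReal.coe_toReal ?_ (hf_ne_bot _)).symm⟩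
    intro htop
    have h1 := isMaxOn_iff.mp (hp_step n) p0 (Set.mem_univ p0)
    rw [htop] at h1
    rw [hp0r] at h1
    simp only [EReal.neg_top, ← EReal.coe_neg, ← EReal.coe_sub, ← EReal.coe_add,
      EReal.bot_add, EReal.bot_sub, le_bot_iff] at h1
    exact EReal.coe_ne_bot _ h1
  choose gs hgs using hgfin
  choose fs hfs using hffin
  -- primal three-point inequality
  have P : ∀ n : ℕ, ∀ x : H, ∀ xr : ℝ, g x = (xr : EReal) →
      gs n + ⟪K (useq (n+1)), pbar n⟫ + ‖useq (n+1) - useq n‖ ^ 2 / (2 * τ)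
        + ‖x - useq (n+1)‖ ^ 2 / (2 * τ)
      ≤ xr + ⟪K x, pbar n⟫ + ‖x - useq n‖ ^ 2 / (2 * τ) := by
    intro n x xr hx
    refine three_point g hg_ne_bot hg_conv (fun u => ⟪K u, pbar n⟫) ?_ (useq n)
      (useq (n+1)) τ hτ0 ?_ x xr (gs n) hx (hgs n)
    · intro a b t
      simp [inner_add_left, real_inner_smul_left]
    · intro x'
      have h1 := isMinOn_iff.mp (hu_step n) x' (Set.mem_univ x')
      rw [add_assoc, add_assoc, ← EReal.coe_add, ← EReal.coe_add] at h1
      exact h1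
  -- dual three-point inequality
  have Dl : ∀ n : ℕ, ∀ y : Z, ∀ yr : ℝ, fstar y = (yr : EReal) →
      fs n + (-⟪K (useq (n+1)), pseq (n+1)⟫) + ‖pseq (n+1) - pseq n‖ ^ 2 / (2 * σ)
        + ‖y - pseq (n+1)‖ ^ 2 / (2 * σ)
      ≤ yr + (-⟪K (useq (n+1)), y⟫) + ‖y - pseq n‖ ^ 2 / (2 * σ) := by
    intro n y yr hy
    refine three_point fstar hf_ne_bot hf_conv (fun p => -⟪K (useq (n+1)), p⟫) ?_ (pseq n)
      (pseq (n+1)) σ hσ0 ?_ y yr (fs n) hy (hfs n)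
    · intro a b t
      simp [inner_add_right, real_inner_smul_right]
      ring
    · intro y'
      have h1 := isMaxOn_iff.mp (hp_step n) y' (Set.mem_univ y')
      by_cases hyt : fstar y' = ⊤
      · rw [hyt, EReal.top_add_coe]
        exact le_top
      · obtain ⟨y'r, hy'r⟩ : ∃ r : ℝ, fstar y' = (r : EReal) :=
          ⟨_, (EReal.coe_toReal hyt (hf_ne_bot y')).symm⟩
        rw [hy'r, hfs n] at h1 ⊢
        simp only [← EReal.coe_neg, ← EReal.coe_add, ← EReal.coe_sub] at h1 ⊢
        rw [EReal.coe_le_coe_iff] at h1 ⊢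
        linarith
  -- displacement sequence
  set q : ℕ → Z := fun n => pseq n - pseq (n - 1) with hqdef
  have hq0 : q 0 = 0 := by simp [hqdef]
  have hqs : ∀ n : ℕ, q (n + 1) = pseq (n + 1) - pseq n := by
    intro n; simp [hqdef]
  have hpbarq : ∀ n : ℕ, pbar n = pseq n + q n := by
    intro n
    cases n with
    | zero => rw [hpbar_init, hq0, add_zero]
    | succ k =>
      rw [hpbar_step k, hqs k]
      module
  have hNr : ((N:ℝ)) ≠ 0 := by positivity
  -- main ergodic estimate against arbitrary finite test points
  have main : ∀ (u : H) (p : Z) (gur fpr : ℝ), g u = (gur : EReal) → fstar p = (fpr : EReal) →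
      ⟪K (uavg N), p⟫ + (N:ℝ)⁻¹ * (∑ n ∈ Finset.range N, gs n) - fpr
        - (⟪K u, (N:ℝ)⁻¹ • ∑ n ∈ Finset.range N, pseq (n+1)⟫ + gur
            - (N:ℝ)⁻¹ * (∑ n ∈ Finset.range N, fs n))
      ≤ (‖u - u0‖ ^ 2 / (2 * τ) + ‖p‖ ^ 2 / (2 * σ)) / N := by
    intro u p gur fpr hgu hfp
    -- the one-step estimate
    have step : ∀ n : ℕ,
        (⟪K (useq (n+1)), p⟫ + gs n - fpr) - (⟪K u, pseq (n+1)⟫ + gur - fs n)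
          ≤ (‖u - useq n‖ ^ 2 / (2 * τ) + ‖p - pseq n‖ ^ 2 / (2 * σ))
            - (‖u - useq (n+1)‖ ^ 2 / (2 * τ) + ‖p - pseq (n+1)‖ ^ 2 / (2 * σ))
            - ‖useq (n+1) - useq n‖ ^ 2 / (2 * τ) - ‖pseq (n+1) - pseq n‖ ^ 2 / (2 * σ)
            + ⟪K (u - useq (n+1)), q n - q (n+1)⟫ := by
      intro n
      have hP := P n u gur hgu
      have hD := Dl n p fpr hfp
      have hiden : ⟪K (u - useq (n+1)), q n - q (n+1)⟫
          = ⟪K u, pbar n⟫ - ⟪K (useq (n+1)), pbar n⟫ - ⟪K u, pseq (n+1)⟫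
            + ⟪K (useq (n+1)), pseq (n+1)⟫ := by
        have h2 : q n - q (n+1) = pbar n - pseq (n+1) := by
          rw [hpbarq n, hqs n]; abel
        rw [h2, map_sub, inner_sub_left, inner_sub_right, inner_sub_right]
        ring
      linarith [hP, hD, hiden.le, hiden.ge]
    -- the energy-type invariant
    have invariant : ∀ M : ℕ,
        (∑ n ∈ Finset.range M,
          ((⟪K (useq (n+1)), p⟫ + gs n - fpr) - (⟪K u, pseq (n+1)⟫ + gur - fs n)))
          + (‖u - useq M‖ ^ 2 / (2 * τ) + ‖p - pseq M‖ ^ 2 / (2 * σ))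
          + ⟪K (u - useq M), q M⟫ + ‖q M‖ ^ 2 / (2 * σ)
        ≤ ‖u - useq 0‖ ^ 2 / (2 * τ) + ‖p - pseq 0‖ ^ 2 / (2 * σ) := by
      intro M
      induction M with
      | zero => simp [hq0]
      | succ M ih =>
        have hst := step M
        have hcs1 : ⟪K (useq M - useq (M+1)), q M⟫
            ≤ ‖useq (M+1) - useq M‖ ^ 2 / (2 * τ) + ‖q M‖ ^ 2 / (2 * σ) := by
          calc ⟪K (useq M - useq (M+1)), q M⟫ ≤ ‖useq M - useq (M+1)‖ * ‖q M‖ := cs _ _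
            _ = ‖useq (M+1) - useq M‖ * ‖q M‖ := by rw [norm_sub_rev]
            _ ≤ _ := qb _ _ (norm_nonneg _) (norm_nonneg _)
        have hinner1 : ⟪K (u - useq (M+1)), q M - q (M+1)⟫
            = ⟪K (u - useq (M+1)), q M⟫ - ⟪K (u - useq (M+1)), q (M+1)⟫ :=
          inner_sub_right _ _ _
        have hinner2 : ⟪K (u - useq (M+1)), q M⟫
            = ⟪K (u - useq M), q M⟫ + ⟪K (useq M - useq (M+1)), q M⟫ := by
          have h3 : u - useq (M+1) = (u - useq M) + (useq M - useq (M+1)) := by abel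
          rw [h3, map_add, inner_add_left]
        have hqs' : ‖q (M+1)‖ ^ 2 / (2 * σ) = ‖pseq (M+1) - pseq M‖ ^ 2 / (2 * σ) := by
          rw [hqs M]
        rw [Finset.sum_range_succ]
        linarith [hst, hcs1, ih, hinner1.le, hinner1.ge, hinner2.le, hinner2.ge, hqs'.le, hqs'.ge]
    -- nonnegativity of the invariant remainder
    have hnn : 0 ≤ (‖u - useq N‖ ^ 2 / (2 * τ) + ‖p - pseq N‖ ^ 2 / (2 * σ))
        + ⟪K (u - useq N), q N⟫ + ‖q N‖ ^ 2 / (2 * σ) := by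
      have h4 : ⟪K (useq N - u), q N⟫ ≤ ‖u - useq N‖ ^ 2 / (2 * τ) + ‖q N‖ ^ 2 / (2 * σ) := by
        calc ⟪K (useq N - u), q N⟫ ≤ ‖useq N - u‖ * ‖q N‖ := cs _ _
          _ = ‖u - useq N‖ * ‖q N‖ := by rw [norm_sub_rev]
          _ ≤ _ := qb _ _ (norm_nonneg _) (norm_nonneg _)
      have h5 : ⟪K (useq N - u), q N⟫ = -⟪K (u - useq N), q N⟫ := by
        have h6 : useq N - u = -(u - useq N) := by abel
        rw [h6, map_neg, inner_neg_left]
      have h7 : 0 ≤ ‖p - pseq N‖ ^ 2 / (2 * σ) := by positivity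
      linarith [h4, h5.le, h5.ge, h7]
    have hSle : (∑ n ∈ Finset.range N,
        ((⟪K (useq (n+1)), p⟫ + gs n - fpr) - (⟪K u, pseq (n+1)⟫ + gur - fs n)))
        ≤ ‖u - u0‖ ^ 2 / (2 * τ) + ‖p‖ ^ 2 / (2 * σ) := by
      have := invariant N
      rw [hu_init, hp_init, sub_zero] at this
      linarith [hnn]
    -- expand the sum and average
    have e1 : ∑ n ∈ Finset.range N, ⟪K (useq (n+1)), p⟫
        = ⟪K (∑ n ∈ Finset.range N, useq (n+1)), p⟫ := by
      rw [map_sum, sum_inner]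
    have e2 : ∑ n ∈ Finset.range N, ⟪K u, pseq (n+1)⟫
        = ⟪K u, ∑ n ∈ Finset.range N, pseq (n+1)⟫ := by
      rw [inner_sum]
    have hexp : (∑ n ∈ Finset.range N,
        ((⟪K (useq (n+1)), p⟫ + gs n - fpr) - (⟪K u, pseq (n+1)⟫ + gur - fs n)))
        = ⟪K (∑ n ∈ Finset.range N, useq (n+1)), p⟫ + (∑ n ∈ Finset.range N, gs n)
          - N * fpr - ⟪K u, ∑ n ∈ Finset.range N, pseq (n+1)⟫ - N * gur
          + (∑ n ∈ Finset.range N, fs n) := by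
      rw [← e1, ← e2]
      simp only [Finset.sum_sub_distrib, Finset.sum_add_distrib, Finset.sum_const,
        Finset.card_range, nsmul_eq_mul]
      ring
    have e3 : ⟪K (uavg N), p⟫ = (N:ℝ)⁻¹ * ⟪K (∑ n ∈ Finset.range N, useq (n+1)), p⟫ := by
      rw [huavg, map_smul]
      exact real_inner_smul_left _ _ _
    have e4 : ⟪K u, (N:ℝ)⁻¹ • ∑ n ∈ Finset.range N, pseq (n+1)⟫
        = (N:ℝ)⁻¹ * ⟪K u, ∑ n ∈ Finset.range N, pseq (n+1)⟫ :=
      real_inner_smul_right _ _ _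
    have hmul := mul_le_mul_of_nonneg_left hSle (by positivity : (0:ℝ) ≤ (N:ℝ)⁻¹)
    rw [hexp] at hmul
    rw [e3, e4, div_eq_mul_inv, mul_comm (‖u - u0‖ ^ 2 / (2 * τ) + ‖p‖ ^ 2 / (2 * σ)) ((N:ℝ)⁻¹)]
    have hring : (N:ℝ)⁻¹ * (⟪K (∑ n ∈ Finset.range N, useq (n+1)), p⟫
          + (∑ n ∈ Finset.range N, gs n) - N * fpr
          - ⟪K u, ∑ n ∈ Finset.range N, pseq (n+1)⟫ - N * gur
          + (∑ n ∈ Finset.range N, fs n))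
        = (N:ℝ)⁻¹ * ⟪K (∑ n ∈ Finset.range N, useq (n+1)), p⟫
          + (N:ℝ)⁻¹ * (∑ n ∈ Finset.range N, gs n) - fpr
          - ((N:ℝ)⁻¹ * ⟪K u, ∑ n ∈ Finset.range N, pseq (n+1)⟫ + gur
              - (N:ℝ)⁻¹ * (∑ n ∈ Finset.range N, fs n)) := by
      field_simp
      ring
    rw [hring] at hmul
    exact hmul
  -- Jensen inequalities for the ergodic averages
  have hgavg : g (uavg N) ≤ (((N:ℝ)⁻¹ * ∑ n ∈ Finset.range N, gs n : ℝ) : EReal) := by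
    rw [huavg]
    exact jensen_avg g hg_ne_bot hg_conv (fun n => useq (n+1)) gs hgs N hN
  set pavg : Z := (N:ℝ)⁻¹ • ∑ n ∈ Finset.range N, pseq (n+1) with hpavg
  have hfavg : fstar pavg ≤ (((N:ℝ)⁻¹ * ∑ n ∈ Finset.range N, fs n : ℝ) : EReal) :=
    jensen_avg fstar hf_ne_bot hf_conv (fun n => pseq (n+1)) fs hfs N hN
  obtain ⟨ga, hga⟩ : ∃ r : ℝ, g (uavg N) = (r : EReal) := by
    refine ⟨_, (EReal.coe_toReal ?_ (hg_ne_bot _)).symm⟩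
    intro h; rw [h] at hgavg; exact (EReal.coe_lt_top _).not_ge hgavg
  have hgale : ga ≤ (N:ℝ)⁻¹ * ∑ n ∈ Finset.range N, gs n := by
    rw [hga] at hgavg; exact_mod_cast hgavg
  obtain ⟨fa, hfa⟩ : ∃ r : ℝ, fstar pavg = (r : EReal) := by
    refine ⟨_, (EReal.coe_toReal ?_ (hf_ne_bot _)).symm⟩
    intro h; rw [h] at hfavg; exact (EReal.coe_lt_top _).not_ge hfavg
  have hfale : fa ≤ (N:ℝ)⁻¹ * ∑ n ∈ Finset.range N, fs n := by
    rw [hfa] at hfavg; exact_mod_cast hfavg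
  -- the bounded dual maximizer at the ergodic average
  obtain ⟨pst, hpstC, hpstmax⟩ := hmax_bdd (uavg N)
  obtain ⟨fst, hfst⟩ : ∃ r : ℝ, fstar pst = (r : EReal) := by
    refine ⟨_, (EReal.coe_toReal ?_ (hf_ne_bot _)).symm⟩
    intro h
    have h1 := isMaxOn_iff.mp hpstmax p0 (Set.mem_univ _)
    rw [h, hp0r, EReal.sub_top, ← EReal.coe_sub, le_bot_iff] at h1
    exact EReal.coe_ne_bot _ h1
  -- upper bound on F (uavg N)
  have hFub : F (uavg N) ≤ ((ga + (⟪K (uavg N), pst⟫ - fst) : ℝ) : EReal) := by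
    rw [hF]
    refine iSup_le fun p' => ?_
    rw [hL, hga]
    have h1 := isMaxOn_iff.mp hpstmax p' (Set.mem_univ _)
    calc ((⟪K (uavg N), p'⟫ : ℝ) : EReal) + (ga : ℝ) - fstar p'
        = (ga : ℝ) + (((⟪K (uavg N), p'⟫ : ℝ) : EReal) - fstar p') := by
          rw [sub_eq_add_neg, sub_eq_add_neg, add_comm ((⟪K (uavg N), p'⟫ : ℝ) : EReal)
            ((ga : ℝ) : EReal), add_assoc]
      _ ≤ (ga : ℝ) + (((⟪K (uavg N), pst⟫ : ℝ) : EReal) - fstar pst) := add_le_add_right h1 _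
      _ = ((ga + (⟪K (uavg N), pst⟫ - fst) : ℝ) : EReal) := by
          rw [hfst, ← EReal.coe_sub, ← EReal.coe_add]
  -- per-point bound over the constraint set
  have hperu : ∀ u ∈ {u : H | ‖K (u - u0)‖ ≤ R},
      F (uavg N) ≤ ((R * C / (θ * (N:ℝ)) : ℝ) : EReal) + F u := by
    intro u hu
    by_cases hFu : F u = ⊤
    · rw [hFu, EReal.coe_add_top]; exact le_top
    have hgune : g u ≠ ⊤ := by
      intro h
      have h2 : L u p0 = ⊤ := by
        rw [hL, h, hp0r, EReal.coe_add_top, EReal.top_sub_coe]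
      refine hFu ?_
      rw [hF]
      exact top_le_iff.mp (h2 ▸ le_iSup (L u) p0)
    obtain ⟨gur, hgur⟩ : ∃ r : ℝ, g u = (r : EReal) :=
      ⟨_, (EReal.coe_toReal hgune (hg_ne_bot _)).symm⟩
    have hm := main u pst gur fst hgur hfst
    have huR : ‖u - u0‖ ≤ R := by
      have h3 : ‖K (u - u0)‖ ≤ R := hu
      rwa [hK_isom] at h3
    have hNpos : (0:ℝ) < (N:ℝ) := by positivity
    have hbound : (‖u - u0‖ ^ 2 / (2 * τ) + ‖pst‖ ^ 2 / (2 * σ)) / (N:ℝ)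
        ≤ R * C / (θ * (N:ℝ)) := by
      have h1 : ‖u - u0‖ ^ 2 ≤ R ^ 2 := by nlinarith [norm_nonneg (u - u0)]
      have h2 : ‖pst‖ ^ 2 ≤ C ^ 2 := by nlinarith [norm_nonneg pst]
      have h3 : R ^ 2 / (2 * τ) + C ^ 2 / (2 * σ) = R * C / θ := by
        rw [hτ, hσ]; field_simp; ring
      calc (‖u - u0‖ ^ 2 / (2 * τ) + ‖pst‖ ^ 2 / (2 * σ)) / (N:ℝ)
          ≤ (R ^ 2 / (2 * τ) + C ^ 2 / (2 * σ)) / (N:ℝ) := by gcongr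
        _ = R * C / θ / (N:ℝ) := by rw [h3]
        _ = R * C / (θ * (N:ℝ)) := by rw [div_div]
    have hreal : ga + (⟪K (uavg N), pst⟫ - fst)
        ≤ R * C / (θ * (N:ℝ)) + (⟪K u, pavg⟫ + gur - fa) := by
      linarith [hm, hgale, hfale, hbound]
    have hLlow : ((⟪K u, pavg⟫ + gur - fa : ℝ) : EReal) ≤ F u := by
      rw [hF]
      have h4 : ((⟪K u, pavg⟫ + gur - fa : ℝ) : EReal) = L u pavg := by
        rw [hL, hgur, hfa, ← EReal.coe_add, ← EReal.coe_sub]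
      rw [h4]
      exact le_iSup (L u) pavg
    calc F (uavg N) ≤ ((ga + (⟪K (uavg N), pst⟫ - fst) : ℝ) : EReal) := hFub
      _ ≤ ((R * C / (θ * (N:ℝ)) + (⟪K u, pavg⟫ + gur - fa) : ℝ) : EReal) := by
          exact_mod_cast EReal.coe_le_coe_iff.mpr hreal
      _ = ((R * C / (θ * (N:ℝ)) : ℝ) : EReal) + ((⟪K u, pavg⟫ + gur - fa : ℝ) : EReal) :=
          EReal.coe_add _ _
      _ ≤ ((R * C / (θ * (N:ℝ)) : ℝ) : EReal) + F u := add_le_add_right hLlow _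
  -- wrap up with the infimum
  by_cases hxb : F (uavg N) = ⊥
  · rw [hxb]; exact bot_le
  have hxt : F (uavg N) ≠ ⊤ := by
    intro h; rw [h] at hFub; exact (EReal.coe_lt_top _).not_ge hFub
  obtain ⟨xr, hxr⟩ : ∃ r : ℝ, F (uavg N) = (r : EReal) :=
    ⟨_, (EReal.coe_toReal hxt hxb).symm⟩
  have hstep2 : ∀ u ∈ {u : H | ‖K (u - u0)‖ ≤ R},
      ((xr - R * C / (θ * (N:ℝ)) : ℝ) : EReal) ≤ F u := by
    intro u hu
    have h1 := hperu u hu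
    rw [hxr] at h1
    by_cases hFt : F u = ⊤
    · rw [hFt]; exact le_top
    by_cases hFb : F u = ⊥
    · rw [hFb, EReal.add_bot, le_bot_iff] at h1
      exact absurd h1 (EReal.coe_ne_bot xr)
    obtain ⟨fur, hfur⟩ : ∃ r : ℝ, F u = (r : EReal) :=
      ⟨_, (EReal.coe_toReal hFt hFb).symm⟩
    rw [hfur] at h1 ⊢
    rw [← EReal.coe_add] at h1
    rw [EReal.coe_le_coe_iff] at h1 ⊢
    linarith
  have hIlow : ((xr - R * C / (θ * (N:ℝ)) : ℝ) : EReal)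
      ≤ ⨅ u ∈ {u : H | ‖K (u - u0)‖ ≤ R}, F u :=
    le_iInf₂ hstep2
  set I := ⨅ u ∈ {u : H | ‖K (u - u0)‖ ≤ R}, F u with hI
  by_cases hIt : I = ⊤
  · rw [hxr, hIt, EReal.coe_add_top]; exact le_top
  by_cases hIb : I = ⊥
  · rw [hIb, le_bot_iff] at hIlow
    exact absurd hIlow (EReal.coe_ne_bot _)
  obtain ⟨Ir, hIr⟩ : ∃ r : ℝ, I = (r : EReal) :=
    ⟨_, (EReal.coe_toReal hIt hIb).symm⟩
  rw [hxr, hIr, ← EReal.coe_add]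
  rw [hIr, EReal.coe_le_coe_iff] at hIlow
  rw [EReal.coe_le_coe_iff]
  linarith
end

section
/- Under the G-prox PDHG setup with initial dual point p₀ = 0, suppose that lim_{R→∞} inf { F(u) : ‖K(u − u₀)‖_Z ≤ R } = inf_{u ∈ H} F(u) =: F̄ > −∞. Fix θ ∈ (0,1) and a sequence of radii R_N > 0 with R_N → ∞ and R_N/N → 0, and for each N let u^{(N)} denote the N-step ergodic average produced by the iterates run with step sizes τ = θR_N/C and σ = θC/R_N. Then lim_{N→∞} F(u^{(N)}) = F̄. -/
open Filter Topology

lemma normsq_combo {E : Type*} [NormedAddCommGroup E] [InnerProductSpace ℝ E]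
    (a b w : E) (t : ℝ) :
    ‖t • a + (1-t) • b - w‖^2
      = t*‖a-w‖^2 + (1-t)*‖b-w‖^2 - t*(1-t)*‖a-b‖^2 := by
  have h : t • a + (1-t) • b - w = t • (a-w) + (1-t) • (b-w) := by module
  rw [h]
  have e : ∀ v : E, ‖v‖^2 = (inner ℝ v v : ℝ) := fun v => (real_inner_self_eq_norm_sq v).symm
  have hab : a - b = (a - w) - (b - w) := by abel
  rw [hab, e, e, e, e]
  simp only [inner_add_add_self, inner_sub_sub_self, real_inner_smul_left,
    real_inner_smul_right, real_inner_comm (b-w) (a-w)]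
  ring

/-- Strong convexity estimate for the prox subproblem. -/
lemma strong_min {E : Type*} [NormedAddCommGroup E] [InnerProductSpace ℝ E]
    (g : E → EReal) (hbot : ∀ u, g u ≠ ⊥)
    (hconv : ∀ u v : E, ∀ t : ℝ, 0 ≤ t → t ≤ 1 →
      g (t • u + (1 - t) • v) ≤ (t : EReal) * g u + ((1 - t : ℝ) : EReal) * g v)
    (ℓ : E → ℝ) (hℓ : ∀ u v : E, ∀ t : ℝ, ℓ (t • u + (1-t) • v) = t * ℓ u + (1-t) * ℓ v)
    (w : E) (c : ℝ) (hc : 0 < c) (m : E)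
    (hmin : ∀ u : E, g m + (ℓ m : EReal) + ((‖m - w‖^2 / c : ℝ) : EReal)
      ≤ g u + (ℓ u : EReal) + ((‖u - w‖^2 / c : ℝ) : EReal))
    (v0 : E) (hv0 : g v0 ≠ ⊤) :
    g m ≠ ⊤ ∧ ∀ u : E,
      g m + (ℓ m : EReal) + ((‖m - w‖^2 / c : ℝ) : EReal) + ((‖u - m‖^2 / c : ℝ) : EReal)
        ≤ g u + (ℓ u : EReal) + ((‖u - w‖^2 / c : ℝ) : EReal) := by
  lift g v0 to ℝ using ⟨hv0, hbot v0⟩ with gv0 hgv0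
  have hmtop : g m ≠ ⊤ := by
    intro hm
    have := hmin v0
    rw [hm, ← hgv0] at this
    simp only [EReal.top_add_coe, ← EReal.coe_add] at this
    exact (EReal.coe_lt_top _).not_ge this
  refine ⟨hmtop, fun u => ?_⟩
  by_cases hu : g u = ⊤
  · rw [hu]; simp only [EReal.top_add_coe]; exact le_top
  lift g u to ℝ using ⟨hu, hbot u⟩ with gu hgu
  lift g m to ℝ using ⟨hmtop, hbot m⟩ with gm hgm
  -- reduce to a real inequality
  rw [← EReal.coe_add, ← EReal.coe_add, ← EReal.coe_add, ← EReal.coe_add, ← EReal.coe_add,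
    EReal.coe_le_coe_iff]
  set d : ℝ := ‖u - m‖^2 / c with hd
  have key : ∀ t : ℝ, t ∈ Set.Ioo (0:ℝ) 1 →
      gm + ℓ m + ‖m - w‖^2/c + (1-t)*d ≤ gu + ℓ u + ‖u - w‖^2/c := by
    intro t ht
    have h1 := hmin (t • u + (1-t) • m)
    have h2 := hconv u m t ht.1.le ht.2.le
    have h3 : g (t • u + (1-t) • m) ≤ ((t * gu + (1-t) * gm : ℝ) : EReal) := by
      refine h2.trans_eq ?_
      rw [← hgu, ← hgm]
      push_cast; ring
    have h4 : ((gm : ℝ) : EReal) + (ℓ m : EReal) + ((‖m - w‖^2 / c : ℝ) : EReal)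
        ≤ ((t * gu + (1-t) * gm + ℓ (t • u + (1-t) • m)
            + ‖(t • u + (1-t) • m) - w‖^2/c : ℝ) : EReal) := by
      refine (hmin (t • u + (1-t) • m)).trans ?_
      push_cast
      exact add_le_add (add_le_add h3 le_rfl) le_rfl
    rw [← EReal.coe_add, ← EReal.coe_add, EReal.coe_le_coe_iff] at h4
    rw [hℓ u m t, normsq_combo u m w t] at h4
    have ht0 := ht.1
    have hdle : t * (1-t) * ‖u - m‖^2 / c = t * ((1-t) * d) := by
      rw [hd]; ring
    -- From h4: gm + ℓm + qm ≤ t gu + (1-t) gm + t ℓu + (1-t) ℓm + (t qu + (1-t) qm - t(1-t)d)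
    have expand : (t*‖u-w‖^2 + (1-t)*‖m-w‖^2 - t*(1-t)*‖u-m‖^2)/c
        = t*(‖u-w‖^2/c) + (1-t)*(‖m-w‖^2/c) - t*((1-t)*d) := by
      rw [hd]; field_simp
    rw [expand] at h4
    nlinarith [h4, ht.1, ht.2]
  have hlim : Tendsto (fun t : ℝ => gm + ℓ m + ‖m - w‖^2/c + (1-t)*d)
      (nhdsWithin 0 (Set.Ioo (0:ℝ) 1)) (nhds (gm + ℓ m + ‖m - w‖^2/c + d)) := by
    have : Continuous (fun t : ℝ => gm + ℓ m + ‖m - w‖^2/c + (1-t)*d) := by continuity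
    have h0 : Tendsto (fun t : ℝ => gm + ℓ m + ‖m - w‖^2/c + (1-t)*d)
        (nhdsWithin 0 (Set.Ioo (0:ℝ) 1)) (nhds (gm + ℓ m + ‖m - w‖^2/c + (1-(0:ℝ))*d)) :=
      (this.tendsto 0).mono_left nhdsWithin_le_nhds
    simpa using h0
  have hne : (nhdsWithin (0:ℝ) (Set.Ioo (0:ℝ) 1)).NeBot := by
    apply mem_closure_iff_nhdsWithin_neBot.mp
    rw [closure_Ioo one_ne_zero.symm]
    exact ⟨le_refl 0, zero_le_one⟩
  exact le_of_tendsto hlim (eventually_nhdsWithin_of_forall key)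

lemma ereal_jensen {E : Type*} [AddCommGroup E] [Module ℝ E]
    (g : E → EReal) (hbot : ∀ u, g u ≠ ⊥)
    (hconv : ∀ u v : E, ∀ t : ℝ, 0 ≤ t → t ≤ 1 →
      g (t • u + (1 - t) • v) ≤ (t : EReal) * g u + ((1 - t : ℝ) : EReal) * g v) :
    ∀ (n : ℕ) (w : ℕ → ℝ) (x : ℕ → E) (G : ℕ → ℝ),
      (∀ i, 0 ≤ w i) → (∑ i ∈ Finset.range n, w i) = 1 →
      (∀ i < n, g (x i) ≤ ((G i : ℝ) : EReal)) →
      g (∑ i ∈ Finset.range n, w i • x i) ≤ ((∑ i ∈ Finset.range n, w i * G i : ℝ) : EReal) := by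
  intro n
  induction n with
  | zero => intro w x G hw hsum hG; simp at hsum
  | succ n ih =>
    intro w x G hw hsum hG
    rw [Finset.sum_range_succ] at hsum ⊢
    rw [Finset.sum_range_succ]
    set s : ℝ := ∑ i ∈ Finset.range n, w i with hs
    have hs0 : 0 ≤ s := Finset.sum_nonneg fun i _ => hw i
    rcases eq_or_lt_of_le hs0 with hseq | hspos
    · have hwn : w n = 1 := by rw [← hseq] at hsum; linarith
      have hzero : ∀ i ∈ Finset.range n, w i = 0 := by
        intro i hi
        exact (Finset.sum_eq_zero_iff_of_nonneg (fun i _ => hw i)).mp hseq.symm i hi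
      have hpt : (∑ i ∈ Finset.range n, w i • x i) = 0 :=
        Finset.sum_eq_zero fun i hi => by rw [hzero i hi, zero_smul]
      have hsum0 : (∑ i ∈ Finset.range n, w i * G i) = 0 :=
        Finset.sum_eq_zero fun i hi => by rw [hzero i hi, zero_mul]
      rw [hpt, hsum0, hwn]
      simpa using hG n (Nat.lt_succ_self n)
    · have hwn1 : w n = 1 - s := by linarith
      have hwn0 : 0 ≤ w n := hw n
      have hwnle : w n ≤ 1 := by linarith
      have h1s : (1:ℝ) - w n = s := by linarith
      set y : E := ∑ i ∈ Finset.range n, (w i / s) • x i with hy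
      have hpt : (∑ i ∈ Finset.range n, w i • x i) + w n • x n
          = (w n) • x n + (1 - w n) • y := by
        rw [h1s, hy, Finset.smul_sum, add_comm]
        congr 1
        refine Finset.sum_congr rfl fun i hi => ?_
        rw [smul_smul]
        congr 1
        field_simp
      have hIH := ih (fun i => w i / s) x G (fun i => div_nonneg (hw i) hs0)
        (by rw [← Finset.sum_div, ← hs, div_self hspos.ne'])
        (fun i hi => hG i (hi.trans (Nat.lt_succ_self n)))
      have hGn := hG n (Nat.lt_succ_self n)
      have hyt : g y ≠ ⊤ := by
        intro h; rw [h] at hIH; exact absurd hIH (not_le.mpr (EReal.coe_lt_top _))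
      have hxt : g (x n) ≠ ⊤ := by
        intro h; rw [h] at hGn; exact absurd hGn (not_le.mpr (EReal.coe_lt_top _))
      lift g y to ℝ using ⟨hyt, hbot y⟩ with gy hgy
      lift g (x n) to ℝ using ⟨hxt, hbot (x n)⟩ with gx hgx
      have hc := hconv (x n) y (w n) hwn0 hwnle
      rw [← hgy, ← hgx] at hc
      rw [hpt]
      refine hc.trans ?_
      have h1 : ((w n : ℝ) : EReal) * (gx : EReal) + ((1 - w n : ℝ) : EReal) * (gy : EReal)
          = (((w n) * gx + (1 - w n) * gy : ℝ) : EReal) := by push_cast; ring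
      rw [h1, EReal.coe_le_coe_iff]
      have hIH' : gy ≤ ∑ i ∈ Finset.range n, w i / s * G i := EReal.coe_le_coe_iff.mp (hgy.trans_le hIH)
      have hGn' : gx ≤ G n := by exact_mod_cast hGn
      have hsum' : (1 - w n) * ∑ i ∈ Finset.range n, w i / s * G i
          = ∑ i ∈ Finset.range n, w i * G i := by
        rw [h1s, Finset.mul_sum]
        refine Finset.sum_congr rfl fun i hi => ?_
        field_simp
      calc w n * gx + (1 - w n) * gy
          ≤ w n * G n + (1 - w n) * (∑ i ∈ Finset.range n, w i / s * G i) := by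
            have h2 := mul_le_mul_of_nonneg_left hGn' hwn0
            have h3 := mul_le_mul_of_nonneg_left hIH' (by linarith : (0:ℝ) ≤ 1 - w n)
            linarith
        _ = ∑ i ∈ Finset.range n, w i * G i + w n * G n := by rw [hsum']; ring

lemma young_ineq (x y τ : ℝ) (hτ : 0 < τ) : x * y ≤ x^2/(2*τ) + τ/2 * y^2 := by
  have h := sq_nonneg (x - τ * y)
  have h2 : 2 * τ * (x * y) ≤ x^2 + τ^2 * y^2 := by nlinarith
  rw [div_add' _ _ _ (by positivity : (2*τ:ℝ) ≠ 0)]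
  rw [le_div_iff₀ (by positivity : (0:ℝ) < 2*τ)]
  nlinarith

lemma sum_bound {H Z : Type*} [NormedAddCommGroup H] [InnerProductSpace ℝ H]
    [NormedAddCommGroup Z] [InnerProductSpace ℝ Z]
    (K : H →L[ℝ] Z) (hK : ∀ u : H, ‖K u‖ = ‖u‖)
    (τ σ : ℝ) (hτ : 0 < τ) (hσ : 0 < σ) (hτσ : τ * σ ≤ 1)
    (u : ℕ → H) (p : ℕ → Z) (w : H) (q : Z)
    (G : ℕ → ℝ) (Fs : ℕ → ℝ) (Gu Fp : ℝ)
    (hA : ∀ n : ℕ, G (n+1) + (inner ℝ (K (u (n+1))) (p n + (p n - p (n-1))) : ℝ)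
        + ‖u (n+1) - u n‖^2/(2*τ) + ‖w - u (n+1)‖^2/(2*τ)
        ≤ Gu + (inner ℝ (K w) (p n + (p n - p (n-1))) : ℝ) + ‖w - u n‖^2/(2*τ))
    (hB : ∀ n : ℕ, Fs (n+1) - (inner ℝ (K (u (n+1))) (p (n+1)) : ℝ)
        + ‖p (n+1) - p n‖^2/(2*σ) + ‖q - p (n+1)‖^2/(2*σ)
        ≤ Fp - (inner ℝ (K (u (n+1))) q : ℝ) + ‖q - p n‖^2/(2*σ))
    (N : ℕ) (hN : 1 ≤ N) :
    ∑ n ∈ Finset.range N, ((inner ℝ (K (u (n+1))) q : ℝ) + G (n+1) - Fp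
        - (inner ℝ (K w) (p (n+1)) : ℝ) - Gu + Fs (n+1))
      ≤ ‖w - u 0‖^2/(2*τ) + ‖q - p 0‖^2/(2*σ) := by
  set A : ℕ → ℝ := fun n => ‖w - u n‖^2/(2*τ) with hAdef
  set B : ℕ → ℝ := fun n => ‖q - p n‖^2/(2*σ) with hBdef
  set T : ℕ → ℝ := fun n => (inner ℝ (K (w - u n)) (p (n-1) - p n) : ℝ) with hTdef
  set b : ℕ → ℝ := fun n => ‖p (n+1) - p n‖^2/(2*σ) with hbdef
  set c : ℕ → ℝ := fun n => τ/2 * ‖p n - p (n-1)‖^2 with hcdef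
  set φ : ℕ → ℝ := fun n => T n - A n - B n with hφdef
  -- per-step bound
  have step : ∀ n : ℕ, (inner ℝ (K (u (n+1))) q : ℝ) + G (n+1) - Fp
      - (inner ℝ (K w) (p (n+1)) : ℝ) - Gu + Fs (n+1)
      ≤ (φ (n+1) - φ n) + (c n - b n) := by
    intro n
    have hAn := hA n
    have hBn := hB n
    set a : ℝ := ‖u (n+1) - u n‖^2/(2*τ) with hadef
    -- cross-term decomposition
    have hcross : (inner ℝ (K (w - u (n+1))) ((p n + (p n - p (n-1))) - p (n+1)) : ℝ)
        = T (n+1) - T n + (inner ℝ (K (u n - u (n+1))) (p n - p (n-1)) : ℝ) := by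
      have e1 : (p n + (p n - p (n-1))) - p (n+1) = (p n - p (n+1)) + (p n - p (n-1)) := by abel
      have e2 : w - u (n+1) = (w - u n) + (u n - u (n+1)) := by abel
      rw [e1, inner_add_right, e2, map_add, inner_add_left]
      have : T (n+1) = (inner ℝ (K (w - u (n+1))) (p n - p (n+1))) := by
        simp only [hTdef, Nat.add_sub_cancel]
      rw [this, e2, map_add]
      simp only [hTdef, inner_add_left, inner_sub_right]
      ring
    -- Young on E_n
    have hE : (inner ℝ (K (u n - u (n+1))) (p n - p (n-1)) : ℝ) ≤ a + c n := by
      have h1 := real_inner_le_norm (K (u n - u (n+1))) (p n - p (n-1))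
      rw [hK] at h1
      have h2 : ‖u n - u (n+1)‖ = ‖u (n+1) - u n‖ := norm_sub_rev _ _
      rw [h2] at h1
      have h3 := young_ineq (‖u (n+1) - u n‖) (‖p n - p (n-1)‖) τ hτ
      have h4 : ‖u (n+1) - u n‖ * ‖p n - p (n-1)‖ ≤ a + c n := by
        rw [hadef, hcdef]; exact h3
      exact h1.trans h4
    -- expand hAn cross terms
    have hexp : (inner ℝ (K (w - u (n+1))) ((p n + (p n - p (n-1))) - p (n+1)) : ℝ)
        = (inner ℝ (K w) (p n + (p n - p (n-1))) : ℝ)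
          - (inner ℝ (K (u (n+1))) (p n + (p n - p (n-1))) : ℝ)
          - (inner ℝ (K w) (p (n+1)) : ℝ) + (inner ℝ (K (u (n+1))) (p (n+1)) : ℝ) := by
      rw [map_sub, inner_sub_left, inner_sub_right, inner_sub_right]
      ring
    simp only [hφdef]
    simp only [hAdef, hBdef] at *
    nlinarith [hAn, hBn, hE, hcross.symm.trans hexp]
  -- sum the steps
  obtain ⟨M, rfl⟩ : ∃ M, N = M + 1 := ⟨N - 1, (Nat.succ_pred_eq_of_pos hN).symm⟩
  have hsum := Finset.sum_le_sum (fun n (_ : n ∈ Finset.range (M+1)) => step n)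
  have htel : ∑ n ∈ Finset.range (M+1), (φ (n+1) - φ n) = φ (M+1) - φ 0 :=
    Finset.sum_range_sub φ (M+1)
  have hsum2 : ∑ n ∈ Finset.range (M+1), ((φ (n+1) - φ n) + (c n - b n))
      = (φ (M+1) - φ 0) + (∑ n ∈ Finset.range (M+1), c n - ∑ n ∈ Finset.range (M+1), b n) := by
    rw [Finset.sum_add_distrib, htel, Finset.sum_sub_distrib]
  -- bound on sum of c's
  have hc_shift : ∑ n ∈ Finset.range (M+1), c n = ∑ n ∈ Finset.range M, c (n+1) := by
    rw [Finset.sum_range_succ']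
    have : c 0 = 0 := by simp [hcdef]
    rw [this, add_zero]
  have hcb : ∀ n, c (n+1) ≤ b n := by
    intro n
    simp only [hcdef, hbdef, Nat.add_sub_cancel]
    have hx0 : (0:ℝ) ≤ ‖p (n+1) - p n‖^2 := sq_nonneg _
    have heq : τ/2 * ‖p (n+1) - p n‖^2 = (τ*σ) * (‖p (n+1) - p n‖^2/(2*σ)) := by
      field_simp
    rw [heq]
    have := mul_le_mul_of_nonneg_right hτσ (by positivity : (0:ℝ) ≤ ‖p (n+1) - p n‖^2/(2*σ))
    simpa using this
  have hT0 : T 0 = 0 := by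
    simp only [hTdef, Nat.zero_sub, sub_self, inner_zero_right]
  have hTN : T (M+1) ≤ A (M+1) + c (M+1) := by
    simp only [hTdef, hAdef, hcdef, Nat.add_sub_cancel]
    have h1 := real_inner_le_norm (K (w - u (M+1))) (p M - p (M+1))
    rw [hK, norm_sub_rev (p M)] at h1
    exact h1.trans (young_ineq _ _ τ hτ)
  have hcsum : ∑ n ∈ Finset.range (M+1), c n ≤ ∑ n ∈ Finset.range M, b n := by
    rw [hc_shift]
    exact Finset.sum_le_sum fun n _ => hcb n
  have hbsum : ∑ n ∈ Finset.range (M+1), b n = ∑ n ∈ Finset.range M, b n + b M :=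
    Finset.sum_range_succ b M
  have hBpos : 0 ≤ B (M+1) := by positivity
  have hbMcM : c (M+1) ≤ b M := hcb M
  calc ∑ n ∈ Finset.range (M+1), ((inner ℝ (K (u (n+1))) q : ℝ) + G (n+1) - Fp
        - (inner ℝ (K w) (p (n+1)) : ℝ) - Gu + Fs (n+1))
      ≤ ∑ n ∈ Finset.range (M+1), ((φ (n+1) - φ n) + (c n - b n)) := hsum
    _ = (φ (M+1) - φ 0) + (∑ n ∈ Finset.range (M+1), c n - ∑ n ∈ Finset.range (M+1), b n) := hsum2
    _ ≤ (φ (M+1) - φ 0) + (∑ n ∈ Finset.range M, b n - (∑ n ∈ Finset.range M, b n + b M)) := by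
        have := sub_le_sub hcsum (le_of_eq hbsum.symm)
        linarith
    _ = φ (M+1) - φ 0 - b M := by ring
    _ ≤ ((A (M+1) + c (M+1)) - A (M+1) - B (M+1)) - φ 0 - b M := by
        have : φ (M+1) ≤ (A (M+1) + c (M+1)) - A (M+1) - B (M+1) := by
          simp only [hφdef]
          have := hTN
          linarith
        linarith
    _ ≤ - φ 0 := by linarith
    _ = A 0 + B 0 := by simp only [hφdef, hT0]; ring
section RunBound
variable {H Z : Type*} [NormedAddCommGroup H] [InnerProductSpace ℝ H]
    [NormedAddCommGroup Z] [InnerProductSpace ℝ Z]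

lemma ereal_neg_shape (e : EReal) (he : e ≠ ⊥) (r s : ℝ) :
    -e + (r : EReal) - (s : EReal) = -(e + ((-r : ℝ) : EReal) + (s : EReal)) := by
  induction e using EReal.rec with
  | bot => exact absurd rfl he
  | coe x =>
    norm_cast
    ring
  | top =>
    rw [EReal.neg_top, EReal.bot_add, EReal.bot_sub, EReal.top_add_coe, EReal.top_add_coe,
      EReal.neg_top]

lemma run_bound (K : H →L[ℝ] Z)
    (g : H → EReal) (fstar : Z → EReal)
    (hg_ne_bot : ∀ u, g u ≠ ⊥) (hg_ne_top : ∃ u, g u ≠ ⊤)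
    (hf_ne_bot : ∀ p, fstar p ≠ ⊥) (hf_ne_top : ∃ p, fstar p ≠ ⊤)
    (hg_conv : ∀ u v : H, ∀ t : ℝ, 0 ≤ t → t ≤ 1 →
      g (t • u + (1 - t) • v) ≤ (t : EReal) * g u + ((1 - t : ℝ) : EReal) * g v)
    (hf_conv : ∀ p q : Z, ∀ t : ℝ, 0 ≤ t → t ≤ 1 →
      fstar (t • p + (1 - t) • q) ≤ (t : EReal) * fstar p + ((1 - t : ℝ) : EReal) * fstar q)
    (L : H → Z → EReal)
    (hL : ∀ u p, L u p = ((inner ℝ (K u) p : ℝ) : EReal) + g u - fstar p)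
    (F : H → EReal) (hF : ∀ u, F u = ⨆ p : Z, L u p)
    (hK_isom : ∀ u : H, ‖K u‖ = ‖u‖)
    (C : ℝ) (hC : 0 < C)
    (hmax_bdd : ∀ u : H, ∃ pu : Z, ‖pu‖ ≤ C ∧
      IsMaxOn (fun p : Z => ((inner ℝ (K u) p : ℝ) : EReal) - fstar p) Set.univ pu)
    (τ σ : ℝ) (hτ : 0 < τ) (hσ : 0 < σ) (hτσ : τ * σ ≤ 1)
    (u : ℕ → H) (p pbar : ℕ → Z) (hp0 : p 0 = 0) (hpbar0 : pbar 0 = p 0)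
    (hu_step : ∀ n : ℕ, IsMinOn
      (fun x : H => g x + ((inner ℝ (K x) (pbar n) : ℝ) : EReal)
        + ((‖x - u n‖ ^ 2 / (2 * τ) : ℝ) : EReal)) Set.univ (u (n + 1)))
    (hp_step : ∀ n : ℕ, IsMaxOn
      (fun x : Z => -fstar x + ((inner ℝ (K (u (n + 1))) x : ℝ) : EReal)
        - ((‖x - p n‖ ^ 2 / (2 * σ) : ℝ) : EReal)) Set.univ (p (n + 1)))
    (hpbar_step : ∀ n : ℕ, pbar (n + 1) = (2 : ℝ) • p (n + 1) - p n)
    (N : ℕ) (hN : 1 ≤ N) (w : H) (hw : g w ≠ ⊤) :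
    F ((N:ℝ)⁻¹ • ∑ n ∈ Finset.range N, u (n + 1))
      ≤ F w + (((‖w - u 0‖^2/(2*τ) + C^2/(2*σ))/N : ℝ) : EReal) := by
  obtain ⟨v0, hv0⟩ := hg_ne_top
  obtain ⟨q0, hq0⟩ := hf_ne_top
  have hN0 : (N:ℝ) ≠ 0 := Nat.cast_ne_zero.mpr (by omega)
  have hNpos : (0:ℝ) < N := by positivity
  -- pbar formula
  have hpbar' : ∀ n : ℕ, pbar n = p n + (p n - p (n - 1)) := by
    intro n
    cases n with
    | zero => simp [hpbar0]
    | succ n =>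
      rw [hpbar_step n]
      simp only [Nat.add_sub_cancel]
      rw [two_smul]
      abel
  -- u-steps via strong_min
  have hustep : ∀ n : ℕ, g (u (n+1)) ≠ ⊤ ∧ ∀ x : H,
      g (u (n+1)) + ((inner ℝ (K (u (n+1))) (pbar n) : ℝ) : EReal)
        + ((‖u (n+1) - u n‖^2 / (2*τ) : ℝ) : EReal) + ((‖x - u (n+1)‖^2 / (2*τ) : ℝ) : EReal)
      ≤ g x + ((inner ℝ (K x) (pbar n) : ℝ) : EReal) + ((‖x - u n‖^2 / (2*τ) : ℝ) : EReal) := by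
    intro n
    refine strong_min g hg_ne_bot hg_conv (fun x => (inner ℝ (K x) (pbar n) : ℝ))
      (fun a b t => by simp [map_add, map_smul, inner_add_left, real_inner_smul_left]) (u n)
      (2*τ) (by positivity) (u (n+1)) (fun x => hu_step n (Set.mem_univ x)) v0 hv0
  -- p-steps via strong_min (after negation)
  have hpstep : ∀ n : ℕ, fstar (p (n+1)) ≠ ⊤ ∧ ∀ x : Z,
      fstar (p (n+1)) + ((-(inner ℝ (K (u (n+1))) (p (n+1)) : ℝ) : ℝ) : EReal)
        + ((‖p (n+1) - p n‖^2 / (2*σ) : ℝ) : EReal) + ((‖x - p (n+1)‖^2 / (2*σ) : ℝ) : EReal)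
      ≤ fstar x + ((-(inner ℝ (K (u (n+1))) x : ℝ) : ℝ) : EReal)
        + ((‖x - p n‖^2 / (2*σ) : ℝ) : EReal) := by
    intro n
    refine strong_min fstar hf_ne_bot hf_conv (fun x => -(inner ℝ (K (u (n+1))) x : ℝ))
      (fun a b t => by
        simp [inner_add_right, real_inner_smul_right]; ring) (p n)
      (2*σ) (by positivity) (p (n+1)) (fun x => ?_) q0 hq0
    have h1 := hp_step n (Set.mem_univ x)
    simp only [Set.mem_setOf_eq] at h1
    rw [ereal_neg_shape (fstar x) (hf_ne_bot x) _ _,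
      ereal_neg_shape (fstar (p (n+1))) (hf_ne_bot (p (n+1))) _ _] at h1
    have h2 := EReal.neg_le_neg_iff.mp h1
    simpa using h2
  -- the ergodic average and its dual maximizer
  set uN : H := (N:ℝ)⁻¹ • ∑ n ∈ Finset.range N, u (n + 1) with huN
  obtain ⟨q, hqC, hqmax⟩ := hmax_bdd uN
  have hfq : fstar q ≠ ⊤ := by
    intro h
    have h2 := hqmax (Set.mem_univ q0)
    simp only [Set.mem_setOf_eq] at h2
    rw [h, EReal.sub_top] at h2
    lift fstar q0 to ℝ using ⟨hq0, hf_ne_bot q0⟩ with f0 hf0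
    rw [← EReal.coe_sub] at h2
    exact absurd h2 (EReal.bot_lt_coe _).not_ge
  -- real values
  set Gu : ℝ := (g w).toReal with hGudef
  have hGu : (Gu : EReal) = g w := EReal.coe_toReal hw (hg_ne_bot w)
  set G : ℕ → ℝ := fun n => (g (u n)).toReal with hGdef
  have hGn : ∀ n : ℕ, ((G (n+1) : ℝ) : EReal) = g (u (n+1)) :=
    fun n => EReal.coe_toReal (hustep n).1 (hg_ne_bot _)
  set Fs : ℕ → ℝ := fun n => (fstar (p n)).toReal with hFsdef
  have hFsn : ∀ n : ℕ, ((Fs (n+1) : ℝ) : EReal) = fstar (p (n+1)) :=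
    fun n => EReal.coe_toReal (hpstep n).1 (hf_ne_bot _)
  set Fp : ℝ := (fstar q).toReal with hFpdef
  have hFp : (Fp : EReal) = fstar q := EReal.coe_toReal hfq (hf_ne_bot q)
  -- real per-step inequalities
  have hA : ∀ n : ℕ, G (n+1) + (inner ℝ (K (u (n+1))) (p n + (p n - p (n-1))) : ℝ)
      + ‖u (n+1) - u n‖^2/(2*τ) + ‖w - u (n+1)‖^2/(2*τ)
      ≤ Gu + (inner ℝ (K w) (p n + (p n - p (n-1))) : ℝ) + ‖w - u n‖^2/(2*τ) := by
    intro n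
    have h := (hustep n).2 w
    rw [hpbar' n, ← hGn n, ← hGu] at h
    have h' : G (n+1) + (inner ℝ (K (u (n+1))) (p n + (p n - p (n-1))) : ℝ)
        + ‖u (n+1) - u n‖^2/(2*τ) + ‖w - u (n+1)‖^2/(2*τ)
        ≤ Gu + (inner ℝ (K w) (p n + (p n - p (n-1))) : ℝ) + ‖w - u n‖^2/(2*τ) := by
      exact_mod_cast h
    exact h'
  have hB : ∀ n : ℕ, Fs (n+1) - (inner ℝ (K (u (n+1))) (p (n+1)) : ℝ)
      + ‖p (n+1) - p n‖^2/(2*σ) + ‖q - p (n+1)‖^2/(2*σ)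
      ≤ Fp - (inner ℝ (K (u (n+1))) q : ℝ) + ‖q - p n‖^2/(2*σ) := by
    intro n
    have h := (hpstep n).2 q
    rw [← hFsn n, ← hFp] at h
    have h' : Fs (n+1) + (-(inner ℝ (K (u (n+1))) (p (n+1)) : ℝ))
        + ‖p (n+1) - p n‖^2/(2*σ) + ‖q - p (n+1)‖^2/(2*σ)
        ≤ Fp + (-(inner ℝ (K (u (n+1))) q : ℝ)) + ‖q - p n‖^2/(2*σ) := by
      exact_mod_cast h
    linarith
  -- the sum bound
  have S := sum_bound K hK_isom τ σ hτ hσ hτσ u p w q G Fs Gu Fp hA hB N hN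
  -- Jensen for g and fstar
  have hwsum : (∑ _i ∈ Finset.range N, (N:ℝ)⁻¹) = 1 := by
    rw [Finset.sum_const, Finset.card_range, nsmul_eq_mul, mul_inv_cancel₀ hN0]
  have hGavg : g uN ≤ (((N:ℝ)⁻¹ * ∑ n ∈ Finset.range N, G (n+1) : ℝ) : EReal) := by
    have h := ereal_jensen g hg_ne_bot hg_conv N (fun _ => (N:ℝ)⁻¹) (fun i => u (i+1))
      (fun i => G (i+1)) (fun _ => by positivity) hwsum
      (fun i _ => (hGn i).symm.le)
    rw [huN, Finset.smul_sum]
    refine h.trans_eq ?_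
    congr 1
    rw [Finset.mul_sum]
  set pN : Z := (N:ℝ)⁻¹ • ∑ n ∈ Finset.range N, p (n + 1) with hpN
  have hFavg : fstar pN ≤ (((N:ℝ)⁻¹ * ∑ n ∈ Finset.range N, Fs (n+1) : ℝ) : EReal) := by
    have h := ereal_jensen fstar hf_ne_bot hf_conv N (fun _ => (N:ℝ)⁻¹) (fun i => p (i+1))
      (fun i => Fs (i+1)) (fun _ => by positivity) hwsum
      (fun i _ => (hFsn i).symm.le)
    rw [hpN, Finset.smul_sum]
    refine h.trans_eq ?_
    congr 1
    rw [Finset.mul_sum]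
  -- inner product identities
  have e1 : (inner ℝ (K uN) q : ℝ) = (N:ℝ)⁻¹ * ∑ n ∈ Finset.range N, (inner ℝ (K (u (n+1))) q : ℝ) := by
    rw [huN, map_smul, map_sum, real_inner_smul_left, sum_inner]
  have e2 : (inner ℝ (K w) pN : ℝ) = (N:ℝ)⁻¹ * ∑ n ∈ Finset.range N, (inner ℝ (K w) (p (n+1)) : ℝ) := by
    rw [hpN, real_inner_smul_right, inner_sum]
  -- main real chain
  set SG : ℝ := (N:ℝ)⁻¹ * ∑ n ∈ Finset.range N, G (n+1) with hSG
  set SF : ℝ := (N:ℝ)⁻¹ * ∑ n ∈ Finset.range N, Fs (n+1) with hSF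
  set X : ℝ := (inner ℝ (K uN) q : ℝ) + SG - Fp with hX
  set Y : ℝ := (inner ℝ (K w) pN : ℝ) + Gu - SF with hY
  have e3 : ∑ n ∈ Finset.range N, ((inner ℝ (K (u (n+1))) q : ℝ) + G (n+1) - Fp
        - (inner ℝ (K w) (p (n+1)) : ℝ) - Gu + Fs (n+1))
      = (∑ n ∈ Finset.range N, (inner ℝ (K (u (n+1))) q : ℝ))
        + (∑ n ∈ Finset.range N, G (n+1)) - N * Fp
        - (∑ n ∈ Finset.range N, (inner ℝ (K w) (p (n+1)) : ℝ))
        - N * Gu + (∑ n ∈ Finset.range N, Fs (n+1)) := by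
    simp only [Finset.sum_add_distrib, Finset.sum_sub_distrib, Finset.sum_const,
      Finset.card_range, nsmul_eq_mul]
  have hXY : X - Y = (N:ℝ)⁻¹ * ∑ n ∈ Finset.range N, ((inner ℝ (K (u (n+1))) q : ℝ) + G (n+1)
      - Fp - (inner ℝ (K w) (p (n+1)) : ℝ) - Gu + Fs (n+1)) := by
    rw [e3, hX, hY, e1, e2, hSG, hSF]
    field_simp
    ring
  have hXle : X ≤ Y + ((‖w - u 0‖^2/(2*τ) + ‖q - p 0‖^2/(2*σ))/N : ℝ) := by
    have h := mul_le_mul_of_nonneg_left S (by positivity : (0:ℝ) ≤ (N:ℝ)⁻¹)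
    rw [← hXY] at h
    have : (N:ℝ)⁻¹ * (‖w - u 0‖^2/(2*τ) + ‖q - p 0‖^2/(2*σ))
        = (‖w - u 0‖^2/(2*τ) + ‖q - p 0‖^2/(2*σ))/N := by ring
    linarith [h.trans_eq this]
  -- EReal chain
  have step1 : F uN ≤ L uN q := by
    rw [hF]
    refine iSup_le fun x => ?_
    rw [hL, hL]
    have rearr : ∀ (a : ℝ) (e f : EReal), (a : EReal) + e - f = ((a : EReal) - f) + e := by
      intro a e f
      rw [sub_eq_add_neg, sub_eq_add_neg, add_right_comm]
    rw [rearr, rearr]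
    exact add_le_add_left (show _ ≤ _ from hqmax (Set.mem_univ x)) _
  have step2 : L uN q ≤ (X : EReal) := by
    rw [hL, hX]
    push_cast
    rw [← hFp]
    exact EReal.sub_le_sub (add_le_add le_rfl hGavg) le_rfl
  have step4 : (Y : EReal) ≤ F w := by
    have hYle : (Y : EReal) ≤ L w pN := by
      rw [hL, hY]
      push_cast
      rw [← hGu]
      exact EReal.sub_le_sub le_rfl hFavg
    exact hYle.trans (by rw [hF]; exact le_iSup _ pN)
  have hqnorm : ‖q - p 0‖^2/(2*σ) ≤ C^2/(2*σ) := by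
    rw [hp0, sub_zero]
    have h1 : ‖q‖^2 ≤ C^2 := by nlinarith [norm_nonneg q]
    exact (div_le_div_iff_of_pos_right (by positivity : (0:ℝ) < 2*σ)).mpr h1
  calc F uN ≤ (X : EReal) := step1.trans step2
    _ ≤ ((Y + (‖w - u 0‖^2/(2*τ) + ‖q - p 0‖^2/(2*σ))/N : ℝ) : EReal) :=
        EReal.coe_le_coe_iff.mpr hXle
    _ = (Y : EReal) + (((‖w - u 0‖^2/(2*τ) + ‖q - p 0‖^2/(2*σ))/N : ℝ) : EReal) := by
        rw [← EReal.coe_add]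
    _ ≤ F w + (((‖w - u 0‖^2/(2*τ) + ‖q - p 0‖^2/(2*σ))/N : ℝ) : EReal) :=
        add_le_add_left step4 _
    _ ≤ F w + (((‖w - u 0‖^2/(2*τ) + C^2/(2*σ))/N : ℝ) : EReal) := by
        refine add_le_add_right (EReal.coe_le_coe_iff.mpr ?_) _
        exact (div_le_div_iff_of_pos_right hNpos).mpr (by linarith)

end RunBound
lemma ereal_le_of_forall_add {x : EReal} {z : ℝ}
    (h : ∀ δ : ℝ, 0 < δ → x ≤ ((z + δ : ℝ) : EReal)) : x ≤ (z : EReal) := by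
  by_contra hc
  push_neg at hc
  obtain ⟨y, h1, h2⟩ := EReal.exists_between_coe_real hc
  have hδ : (0:ℝ) < y - z := by exact_mod_cast sub_pos.mpr (EReal.coe_lt_coe_iff.mp h1)
  have := h (y - z) hδ
  rw [show z + (y - z) = y by ring] at this
  exact absurd (this.trans_lt h2) (lt_irrefl x)

/-- **Grid-size-independent convergence of G-prox PDHG (Theorem 1.1, second part).**
Under the G-prox PDHG setup with p₀ = 0, if the restricted infima
inf{F(u) : ‖K(u−u₀)‖ ≤ R} converge to F̄ = inf F > −∞ as R → ∞, and for each N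
the algorithm is run with radius R_N (R_N → ∞, R_N/N → 0) and step sizes
τ = θR_N/C, σ = θC/R_N, then the N-step ergodic averages satisfy F(u^{(N)}) → F̄. -/
theorem gprox_pdhg_convergence
    {H Z : Type*} [NormedAddCommGroup H] [InnerProductSpace ℝ H] [CompleteSpace H]
    [NormedAddCommGroup Z] [InnerProductSpace ℝ Z] [CompleteSpace Z]
    (K : H →L[ℝ] Z)
    (g : H → EReal) (fstar : Z → EReal)
    -- g and f* are proper
    (hg_ne_bot : ∀ u, g u ≠ ⊥) (hg_ne_top : ∃ u, g u ≠ ⊤)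
    (hf_ne_bot : ∀ p, fstar p ≠ ⊥) (hf_ne_top : ∃ p, fstar p ≠ ⊤)
    -- g and f* are convex
    (hg_conv : ∀ u v : H, ∀ t : ℝ, 0 ≤ t → t ≤ 1 →
      g (t • u + (1 - t) • v) ≤ (t : EReal) * g u + ((1 - t : ℝ) : EReal) * g v)
    (hf_conv : ∀ p q : Z, ∀ t : ℝ, 0 ≤ t → t ≤ 1 →
      fstar (t • p + (1 - t) • q) ≤ (t : EReal) * fstar p + ((1 - t : ℝ) : EReal) * fstar q)
    -- g and f* are lower semicontinuous
    (hg_lsc : LowerSemicontinuous g) (hf_lsc : LowerSemicontinuous fstar)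
    -- Lagrangian and primal functional
    (L : H → Z → EReal)
    (hL : ∀ u p, L u p = ((inner ℝ (K u) p : ℝ) : EReal) + g u - fstar p)
    (F : H → EReal) (hF : ∀ u, F u = ⨆ p : Z, L u p)
    -- G-prox setup: K is an isometry
    (hK_isom : ∀ u : H, ‖K u‖ = ‖u‖)
    -- the dual maximizers are uniformly bounded by C
    (C : ℝ) (hC : 0 < C)
    (hmax_bdd : ∀ u : H, ∃ pu : Z, ‖pu‖ ≤ C ∧
      IsMaxOn (fun p : Z => ((inner ℝ (K u) p : ℝ) : EReal) - fstar p) Set.univ pu)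
    -- F̄ = inf F > −∞ and the restricted infima converge to F̄ as R → ∞
    (u0 : H) (Fbar : EReal) (hFbar : Fbar = ⨅ u : H, F u) (hFbar_ne_bot : Fbar ≠ ⊥)
    (hgap : Tendsto (fun R : ℝ => ⨅ u ∈ {u : H | ‖K (u - u0)‖ ≤ R}, F u)
      atTop (nhds Fbar))
    -- θ ∈ (0,1) and radii R_N → ∞ with R_N/N → 0
    (θ : ℝ) (hθ0 : 0 < θ) (hθ1 : θ < 1)
    (R : ℕ → ℝ) (hR_pos : ∀ N, 0 < R N)
    (hR_top : Tendsto R atTop atTop)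
    (hR_sub : Tendsto (fun N : ℕ => R N / (N : ℝ)) atTop (nhds 0))
    -- step sizes for the N-th run
    (τ σ : ℕ → ℝ) (hτ : ∀ N, τ N = θ * R N / C) (hσ : ∀ N, σ N = θ * C / R N)
    -- for each N, a run of G-prox PDHG with step sizes τ N, σ N and p₀ = 0
    (U : ℕ → ℕ → H) (P : ℕ → ℕ → Z) (Pbar : ℕ → ℕ → Z)
    (hU_init : ∀ N, U N 0 = u0) (hP_init : ∀ N, P N 0 = 0)
    (hPbar_init : ∀ N, Pbar N 0 = P N 0)
    (hU_step : ∀ N n : ℕ, IsMinOn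
      (fun u : H => g u + ((inner ℝ (K u) (Pbar N n) : ℝ) : EReal)
        + ((‖u - U N n‖ ^ 2 / (2 * τ N) : ℝ) : EReal)) Set.univ (U N (n + 1)))
    (hP_step : ∀ N n : ℕ, IsMaxOn
      (fun p : Z => -fstar p + ((inner ℝ (K (U N (n + 1))) p : ℝ) : EReal)
        - ((‖p - P N n‖ ^ 2 / (2 * σ N) : ℝ) : EReal)) Set.univ (P N (n + 1)))
    (hPbar_step : ∀ N n : ℕ, Pbar N (n + 1) = (2 : ℝ) • P N (n + 1) - P N n)
    -- N-step ergodic average of the N-th run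
    (uavg : ℕ → H)
    (huavg : ∀ N : ℕ, uavg N = (N : ℝ)⁻¹ • ∑ n ∈ Finset.range N, U N (n + 1)) :
    Tendsto (fun N : ℕ => F (uavg N)) atTop (nhds Fbar) := by
  obtain ⟨q0, hq0⟩ := hf_ne_top
  -- restricted infima and error terms
  set I : ℕ → EReal := fun N => ⨅ u ∈ {u : H | ‖K (u - u0)‖ ≤ R N}, F u with hI
  have hItend : Tendsto I atTop (nhds Fbar) := hgap.comp hR_top
  set ε : ℕ → ℝ := fun N => C / θ * (R N / N) with hε
  have hεtend : Tendsto ε atTop (nhds 0) := by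
    have h := hR_sub.const_mul (C / θ)
    rw [mul_zero] at h
    exact h
  have hεpos : ∀ N : ℕ, 1 ≤ N → 0 ≤ ε N := by
    intro N hN
    have : (0:ℝ) < N := by positivity
    have := hR_pos N
    positivity
  -- lower bound
  have hlow : ∀ N : ℕ, Fbar ≤ F (uavg N) := fun N => by
    rw [hFbar]; exact iInf_le F (uavg N)
  have hIFbar : ∀ N : ℕ, Fbar ≤ I N := by
    intro N
    rw [hFbar]
    exact le_iInf₂ fun w _ => iInf_le F w
  -- upper bound per step
  have hup : ∀ N : ℕ, 1 ≤ N → F (uavg N) ≤ I N + ((ε N : ℝ) : EReal) := by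
    intro N hN
    have hN0 : (N:ℝ) ≠ 0 := Nat.cast_ne_zero.mpr (by omega)
    have hNpos : (0:ℝ) < N := by positivity
    have hRN := hR_pos N
    have hτpos : 0 < τ N := by rw [hτ]; positivity
    have hσpos : 0 < σ N := by rw [hσ]; positivity
    have hτσ : τ N * σ N ≤ 1 := by
      rw [hτ, hσ]
      have : θ * R N / C * (θ * C / R N) = θ * θ := by field_simp
      rw [this]; nlinarith
    -- per test point bound
    have hbd : ∀ w : H, ‖K (w - u0)‖ ≤ R N → F (uavg N) ≤ F w + ((ε N : ℝ) : EReal) := by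
      intro w hwball
      by_cases hFw : F w = ⊤
      · rw [hFw, EReal.top_add_coe]; exact le_top
      have hgw : g w ≠ ⊤ := by
        intro hg
        apply hFw
        have hLw : L w q0 = ⊤ := by
          rw [hL, hg]
          lift fstar q0 to ℝ using ⟨hq0, hf_ne_bot q0⟩ with f0
          rw [add_comm (((inner ℝ (K w) q0 : ℝ) : EReal)) ⊤, EReal.top_add_coe, EReal.top_sub_coe]
        rw [hF]
        exact top_le_iff.mp (hLw ▸ le_iSup (L w) q0)
      have hrb := run_bound K g fstar hg_ne_bot hg_ne_top hf_ne_bot ⟨q0, hq0⟩ hg_conv hf_conv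
        L hL F hF hK_isom C hC hmax_bdd (τ N) (σ N) hτpos hσpos hτσ (U N) (P N) (Pbar N)
        (hP_init N) (hPbar_init N) (hU_step N) (hP_step N) (hPbar_step N) N hN w hgw
      rw [hU_init N, ← huavg N] at hrb
      have hwnorm : ‖w - u0‖ ≤ R N := by rw [← hK_isom (w - u0)]; exact hwball
      have herr : (‖w - u0‖^2/(2*τ N) + C^2/(2*σ N))/N ≤ ε N := by
        rw [hτ, hσ]
        show _ ≤ C / θ * (R N / N)
        have h1 : ‖w - u0‖^2 ≤ R N^2 := by nlinarith [norm_nonneg (w - u0)]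
        have heq : (R N^2/(2*(θ*R N/C)) + C^2/(2*(θ*C/R N)))/N = C/θ * (R N/N) := by
          field_simp
          ring
        have h2 : ‖w - u0‖^2/(2*(θ*R N/C)) ≤ R N^2/(2*(θ*R N/C)) :=
          (div_le_div_iff_of_pos_right (by positivity : (0:ℝ) < 2*(θ*R N/C))).mpr h1
        calc (‖w - u0‖^2/(2*(θ*R N/C)) + C^2/(2*(θ*C/R N)))/N
            ≤ (R N^2/(2*(θ*R N/C)) + C^2/(2*(θ*C/R N)))/N :=
              (div_le_div_iff_of_pos_right hNpos).mpr (by linarith)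
          _ = C/θ * (R N/N) := heq
      exact hrb.trans (add_le_add_right (EReal.coe_le_coe_iff.mpr herr) _)
    -- pass to the restricted infimum
    by_cases hItop : I N = ⊤
    · rw [hItop, EReal.top_add_coe]; exact le_top
    have hIbot : I N ≠ ⊥ := fun h => hFbar_ne_bot (le_bot_iff.mp (h ▸ hIFbar N))
    obtain ⟨r, hr⟩ : ∃ r : ℝ, I N = (r : EReal) :=
      ⟨(I N).toReal, (EReal.coe_toReal hItop hIbot).symm⟩
    rw [hr, ← EReal.coe_add]
    apply ereal_le_of_forall_add
    intro δ hδ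
    have hlt : I N < ((r + δ : ℝ) : EReal) := by
      rw [hr]; exact_mod_cast lt_add_of_pos_right r hδ
    simp only [hI] at hlt
    obtain ⟨w, hw⟩ := iInf_lt_iff.mp hlt
    obtain ⟨hwball, hw2⟩ := iInf_lt_iff.mp hw
    have hfin := (hbd w hwball).trans (add_le_add_left hw2.le _)
    refine hfin.trans_eq ?_
    rw [← EReal.coe_add, EReal.coe_eq_coe_iff]
    ring
  -- squeeze
  have hsum : Tendsto (fun N => I N + ((ε N : ℝ) : EReal)) atTop (nhds Fbar) := by
    have h1 : Tendsto (fun N => ((ε N : ℝ) : EReal)) atTop (nhds ((0:ℝ) : EReal)) :=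
      (continuous_coe_real_ereal.tendsto 0).comp hεtend
    have hcont := EReal.continuousAt_add (p := (Fbar, ((0:ℝ) : EReal)))
      (Or.inr (by simp)) (Or.inl hFbar_ne_bot)
    have h2 := hcont.tendsto.comp (hItend.prodMk_nhds h1)
    simpa [Function.comp_def] using h2
  refine tendsto_of_tendsto_of_tendsto_of_le_of_le' tendsto_const_nhds hsum
    (Eventually.of_forall hlow) ?_
  filter_upwards [eventually_ge_atTop 1] with N hN using hup N hN
end

section
/- Suppose the step sizes satisfy τσ‖K‖² < 1, where ‖K‖ is the operator norm of K. Then for all radii R₁, R₂ ≥ 0 and all N ≥ 1, the partial primal-dual gap of the ergodic averages satisfies G_{R₁,R₂}(u^N, p^N) := sup_{p' ∈ Z, ‖p' − p₀‖_Z ≤ R₁} L(u^N, p') − inf_{u' ∈ H, ‖u' − u₀‖_H ≤ R₂} L(u', p^N) ≤ (1/(2N)) (R₂²/τ + R₁²/σ). -/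
section PDHGhelpers

lemma pdhg_quad_id {X : Type*} [NormedAddCommGroup X] [InnerProductSpace ℝ X]
    (a b c : X) (t : ℝ) :
    ‖(a + t • (b - a)) - c‖ ^ 2
      = (1 - t) * ‖a - c‖ ^ 2 + t * ‖b - c‖ ^ 2 - t * (1 - t) * ‖b - a‖ ^ 2 := by
  have h1 : (a + t • (b - a)) - c = (1 - t) • (a - c) + t • (b - c) := by module
  have e1 : ‖(1 - t) • (a - c) + t • (b - c)‖ ^ 2
      = (1 - t) ^ 2 * ‖a - c‖ ^ 2
        + 2 * ((1 - t) * (t * (inner ℝ (a - c) (b - c) : ℝ)))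
        + t ^ 2 * ‖b - c‖ ^ 2 := by
    rw [@norm_add_sq_real, norm_smul, norm_smul, real_inner_smul_left, real_inner_smul_right]
    try simp only [Real.norm_eq_abs, mul_pow, sq_abs]
    try ring
  have h2 : b - a = (b - c) - (a - c) := by abel
  have e2 : ‖b - a‖ ^ 2
      = ‖b - c‖ ^ 2 - 2 * (inner ℝ (a - c) (b - c) : ℝ) + ‖a - c‖ ^ 2 := by
    rw [h2, @norm_sub_sq_real, real_inner_comm]
    try ring
  rw [h1, e1, e2]; ring

lemma pdhg_ereal_exists_real {a : EReal} (hb : a ≠ ⊥) {r : ℝ} (h : a ≤ (r : EReal)) :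
    ∃ x : ℝ, a = (x : EReal) := by
  lift a to ℝ using ⟨ne_top_of_le_ne_top (EReal.coe_ne_top r) h, hb⟩
  exact ⟨a, rfl⟩

lemma pdhg_ereal_mul_le {t m : ℝ} (ht : 0 < t) {a : EReal} (h : a ≤ (m : EReal)) :
    (t : EReal) * a ≤ ((t * m : ℝ) : EReal) := by
  induction a with
  | bot => rw [EReal.coe_mul_bot_of_pos (by exact_mod_cast ht)]; exact bot_le
  | coe x =>
      rw [← EReal.coe_mul, EReal.coe_le_coe_iff]
      exact mul_le_mul_of_nonneg_left (EReal.coe_le_coe_iff.mp h) ht.le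
  | top => exact absurd h (by simp)

lemma pdhg_finite_of_add_le {x : EReal} (hb : x ≠ ⊥) {A B r : ℝ}
    (h : x + (A : EReal) + (B : EReal) ≤ (r : EReal)) : ∃ y : ℝ, x = (y : EReal) := by
  by_cases ht : x = ⊤
  · rw [ht, EReal.top_add_coe, EReal.top_add_coe] at h
    exact absurd h (by simp)
  · lift x to ℝ using ⟨ht, hb⟩; exact ⟨x, rfl⟩

lemma pdhg_finite_of_le_neg {x : EReal} (hb : x ≠ ⊥) {c d r : ℝ}
    (h : (r : EReal) ≤ -x + (c : EReal) - (d : EReal)) : ∃ y : ℝ, x = (y : EReal) := by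
  by_cases ht : x = ⊤
  · rw [ht] at h
    rw [EReal.neg_top, EReal.bot_add, EReal.bot_sub] at h
    exact absurd h (by simp)
  · lift x to ℝ using ⟨ht, hb⟩; exact ⟨x, rfl⟩

lemma pdhg_coe_sub_ne_top {r : ℝ} {y : EReal} (hy : y ≠ ⊥) : (r : EReal) - y ≠ ⊤ := by
  by_cases ht : y = ⊤
  · rw [ht, EReal.sub_top]; exact bot_ne_top
  · lift y to ℝ using ⟨ht, hy⟩
    rw [← EReal.coe_sub]; exact EReal.coe_ne_top _

lemma pdhg_sub_coe_ne_bot {a : EReal} (ha : a ≠ ⊥) (r : ℝ) : a - (r : EReal) ≠ ⊥ := by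
  by_cases ht : a = ⊤
  · rw [ht, EReal.top_sub_coe]; exact top_ne_bot
  · lift a to ℝ using ⟨ht, ha⟩
    rw [← EReal.coe_sub]; exact EReal.coe_ne_bot _

lemma pdhg_jensen_avg {X : Type*} [AddCommGroup X] [Module ℝ X] (φ : X → EReal)
    (hconv : ∀ u v : X, ∀ t : ℝ, 0 ≤ t → t ≤ 1 →
      φ (t • u + (1 - t) • v) ≤ (t : EReal) * φ u + ((1 - t : ℝ) : EReal) * φ v)
    (x : ℕ → X) (G : ℕ → ℝ) (h : ∀ n, φ (x n) ≤ ((G n : ℝ) : EReal)) :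
    ∀ N : ℕ, 1 ≤ N → φ ((N : ℝ)⁻¹ • ∑ n ∈ Finset.range N, x n)
      ≤ ((((N : ℝ)⁻¹ * ∑ n ∈ Finset.range N, G n) : ℝ) : EReal) := by
  intro N hN
  induction N with
  | zero => omega
  | succ N ih =>
    rcases Nat.lt_or_ge N 1 with h1 | h1
    · interval_cases N
      simpa [Finset.sum_range_one] using h 0
    · have ihN := ih h1
      have hNR : (0 : ℝ) < (N : ℝ) := by exact_mod_cast h1
      have hN1R : (0 : ℝ) < ((N : ℝ) + 1) := by linarith
      set t : ℝ := (N : ℝ) / ((N : ℝ) + 1) with ht_def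
      have ht0 : 0 < t := by positivity
      have ht1 : t ≤ 1 := by rw [div_le_one hN1R]; linarith
      have h1mt : 0 < 1 - t := by
        rw [ht_def]; rw [sub_pos, div_lt_one hN1R]; linarith
      have hsplit : ((N + 1 : ℕ) : ℝ)⁻¹ • ∑ n ∈ Finset.range (N + 1), x n
          = t • ((N : ℝ)⁻¹ • ∑ n ∈ Finset.range N, x n) + (1 - t) • x N := by
        rw [Finset.sum_range_succ]
        push_cast
        match_scalars <;> (rw [ht_def]; field_simp) <;> ring
      rw [hsplit]
      calc φ (t • ((N : ℝ)⁻¹ • ∑ n ∈ Finset.range N, x n) + (1 - t) • x N)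
          ≤ (t : EReal) * φ ((N : ℝ)⁻¹ • ∑ n ∈ Finset.range N, x n)
            + ((1 - t : ℝ) : EReal) * φ (x N) :=
            hconv _ _ t ht0.le ht1
        _ ≤ ((t * ((N : ℝ)⁻¹ * ∑ n ∈ Finset.range N, G n) : ℝ) : EReal)
            + (((1 - t) * G N : ℝ) : EReal) :=
            add_le_add (pdhg_ereal_mul_le ht0 ihN) (pdhg_ereal_mul_le h1mt (h N))
        _ = ((((N + 1 : ℕ) : ℝ)⁻¹ * ∑ n ∈ Finset.range (N + 1), G n : ℝ) : EReal) := by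
            rw [← EReal.coe_add]
            congr 1
            rw [Finset.sum_range_succ, ht_def]
            push_cast
            field_simp
            ring

lemma pdhg_prox_ineq {X : Type*} [NormedAddCommGroup X] [InnerProductSpace ℝ X]
    (φ : X → EReal)
    (hconv : ∀ u v : X, ∀ t : ℝ, 0 ≤ t → t ≤ 1 →
      φ (t • u + (1 - t) • v) ≤ (t : EReal) * φ u + ((1 - t : ℝ) : EReal) * φ v)
    (b c x u' : X) (ρ : ℝ) (hρ : 0 < ρ) (G G' : ℝ)
    (hGx : φ x = (G : EReal)) (hGu : φ u' = (G' : EReal))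
    (hmin : ∀ y : X, (G : EReal) + ((((inner ℝ x b : ℝ)) + ‖x - c‖ ^ 2 / (2 * ρ) : ℝ) : EReal)
      ≤ φ y + ((((inner ℝ y b : ℝ)) + ‖y - c‖ ^ 2 / (2 * ρ) : ℝ) : EReal)) :
    G + (inner ℝ x b : ℝ) + ‖x - c‖ ^ 2 / (2 * ρ) + ‖u' - x‖ ^ 2 / (2 * ρ)
      ≤ G' + (inner ℝ u' b : ℝ) + ‖u' - c‖ ^ 2 / (2 * ρ) := by
  set Ix : ℝ := inner ℝ x b
  set Iu : ℝ := inner ℝ u' b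
  set Qx : ℝ := ‖x - c‖ ^ 2 / (2 * ρ)
  set Qu : ℝ := ‖u' - c‖ ^ 2 / (2 * ρ)
  set D : ℝ := ‖u' - x‖ ^ 2 / (2 * ρ) with hD_def
  have hD : 0 ≤ D := by positivity
  have key : ∀ ε : ℝ, 0 < ε → G + Ix + Qx + D ≤ G' + Iu + Qu + ε := by
    intro ε hε
    set t : ℝ := min 1 (ε / (D + 1)) with ht_def
    have ht0 : 0 < t := lt_min one_pos (by positivity)
    have ht1 : t ≤ 1 := min_le_left _ _
    have htD : t * D ≤ ε := by
      have h1 : t * D ≤ (ε / (D + 1)) * (D + 1) :=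
        mul_le_mul (min_le_right _ _) (by linarith) hD (by positivity)
      rwa [div_mul_cancel₀ _ (by positivity : D + 1 ≠ 0)] at h1
    have hy : x + t • (u' - x) = t • u' + (1 - t) • x := by module
    have hmy := hmin (x + t • (u' - x))
    have hφy : φ (x + t • (u' - x)) ≤ ((t * G' + (1 - t) * G : ℝ) : EReal) := by
      rw [hy]
      calc φ (t • u' + (1 - t) • x)
          ≤ (t : EReal) * φ u' + ((1 - t : ℝ) : EReal) * φ x := hconv _ _ t ht0.le ht1
        _ = ((t * G' + (1 - t) * G : ℝ) : EReal) := by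
            rw [hGx, hGu, ← EReal.coe_mul, ← EReal.coe_mul, ← EReal.coe_add]
    have hchain : (G : EReal) + ((Ix + Qx : ℝ) : EReal)
        ≤ ((t * G' + (1 - t) * G : ℝ) : EReal)
          + ((((inner ℝ (x + t • (u' - x)) b : ℝ)) + ‖(x + t • (u' - x)) - c‖ ^ 2 / (2 * ρ) : ℝ) : EReal) :=
      le_trans hmy (add_le_add_left hφy _)
    rw [← EReal.coe_add, ← EReal.coe_add, EReal.coe_le_coe_iff] at hchain
    have hIy : (inner ℝ (x + t • (u' - x)) b : ℝ) = Ix + t * (Iu - Ix) := by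
      rw [inner_add_left, real_inner_smul_left, inner_sub_left]
      try ring
    have hQy : ‖(x + t • (u' - x)) - c‖ ^ 2 / (2 * ρ)
        = (1 - t) * Qx + t * Qu - t * (1 - t) * D := by
      rw [pdhg_quad_id x u' c t, hD_def]
      simp only [Qx, Qu]
      try field_simp
      try ring
    rw [hIy, hQy] at hchain
    have h2 : t * (G + Ix + Qx + (1 - t) * D) ≤ t * (G' + Iu + Qu) := by nlinarith [hchain]
    have h3 : G + Ix + Qx + (1 - t) * D ≤ G' + Iu + Qu := le_of_mul_le_mul_left h2 ht0
    nlinarith [h3, htD]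
  by_contra hcon
  push_neg at hcon
  have := key ((G + Ix + Qx + D - (G' + Iu + Qu)) / 2) (by linarith)
  linarith

lemma pdhg_sup_sub_inf_le {α β : Type*} (S : Set α) (T : Set β) (A : α → EReal) (B : β → EReal)
    (C : ℝ)
    (hA : ∀ s ∈ S, A s ≠ ⊤) (hB : ∀ t ∈ T, B t ≠ ⊥)
    (h : ∀ s ∈ S, ∀ t ∈ T, A s - B t ≤ (C : EReal)) :
    (⨆ s ∈ S, A s) - (⨅ t ∈ T, B t) ≤ (C : EReal) := by
  set a := ⨆ s ∈ S, A s with ha_def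
  set b := ⨅ t ∈ T, B t with hb_def
  by_cases hbtop : b = ⊤
  · rw [hbtop, EReal.sub_top]; exact bot_le
  by_cases habot : a = ⊥
  · rw [habot, EReal.bot_sub]; exact bot_le
  have hs0 : ∃ s ∈ S, A s ≠ ⊥ := by
    by_contra hc
    push_neg at hc
    exact habot (by rw [ha_def, iSup₂_eq_bot]; exact hc)
  obtain ⟨s₀, hs₀S, hs₀⟩ := hs0
  obtain ⟨α₀, hα₀⟩ : ∃ x : ℝ, A s₀ = (x : EReal) := by
    lift A s₀ to ℝ using ⟨hA s₀ hs₀S, hs₀⟩ with x; exact ⟨x, rfl⟩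
  have ht0 : ∃ t ∈ T, B t ≠ ⊤ := by
    by_contra hc
    push_neg at hc
    exact hbtop (by rw [hb_def, iInf₂_eq_top]; exact hc)
  obtain ⟨t₀, ht₀T, ht₀⟩ := ht0
  obtain ⟨β₀, hβ₀⟩ : ∃ x : ℝ, B t₀ = (x : EReal) := by
    lift B t₀ to ℝ using ⟨ht₀, hB t₀ ht₀T⟩ with x; exact ⟨x, rfl⟩
  have hb_lb : ((α₀ - C : ℝ) : EReal) ≤ b := by
    rw [hb_def]
    refine le_iInf₂ fun t ht => ?_
    have hst := h s₀ hs₀S t ht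
    rw [hα₀] at hst
    by_cases hBtop : B t = ⊤
    · rw [hBtop]; exact le_top
    obtain ⟨β, hβ⟩ : ∃ x : ℝ, B t = (x : EReal) := by
      lift B t to ℝ using ⟨hBtop, hB t ht⟩ with x; exact ⟨x, rfl⟩
    rw [hβ, ← EReal.coe_sub, EReal.coe_le_coe_iff] at hst
    rw [hβ, EReal.coe_le_coe_iff]
    linarith
  have ha_ub : a ≤ ((C + β₀ : ℝ) : EReal) := by
    rw [ha_def]
    refine iSup₂_le fun s hs => ?_
    have hst := h s hs t₀ ht₀T
    rw [hβ₀] at hst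
    rw [EReal.coe_add]
    exact (EReal.sub_le_iff_le_add (.inl (EReal.coe_ne_bot β₀))
      (.inl (EReal.coe_ne_top β₀))).mp hst
  have hb_bot : b ≠ ⊥ := fun hb => by
    rw [hb] at hb_lb; exact (EReal.coe_ne_bot _) (le_bot_iff.mp hb_lb)
  have ha_top : a ≠ ⊤ := fun haa => by
    rw [haa] at ha_ub; exact (EReal.coe_ne_top _) (top_le_iff.mp ha_ub)
  obtain ⟨av, hav⟩ : ∃ x : ℝ, a = (x : EReal) := by
    lift a to ℝ using ⟨ha_top, habot⟩ with x; exact ⟨x, rfl⟩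
  obtain ⟨bv, hbv⟩ : ∃ x : ℝ, b = (x : EReal) := by
    lift b to ℝ using ⟨hbtop, hb_bot⟩ with x; exact ⟨x, rfl⟩
  rw [hav, hbv, ← EReal.coe_sub, EReal.coe_le_coe_iff]
  have key : ∀ ε : ℝ, 0 < ε → av - bv ≤ C + 2 * ε := by
    intro ε hε
    have h1 : ((av - ε : ℝ) : EReal) < a := by
      rw [hav, EReal.coe_lt_coe_iff]; linarith
    rw [ha_def, lt_iSup_iff] at h1
    obtain ⟨s, hs1⟩ := h1
    rw [lt_iSup_iff] at hs1
    obtain ⟨hsS, hs2⟩ := hs1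
    have h2 : b < ((bv + ε : ℝ) : EReal) := by
      rw [hbv, EReal.coe_lt_coe_iff]; linarith
    rw [hb_def, iInf_lt_iff] at h2
    obtain ⟨t, ht1⟩ := h2
    rw [iInf_lt_iff] at ht1
    obtain ⟨htT, ht2⟩ := ht1
    obtain ⟨αs, hαs⟩ : ∃ x : ℝ, A s = (x : EReal) := by
      lift A s to ℝ using ⟨hA s hsS, ne_bot_of_gt hs2⟩ with x; exact ⟨x, rfl⟩
    obtain ⟨βt, hβt⟩ : ∃ x : ℝ, B t = (x : EReal) := by
      lift B t to ℝ using ⟨ne_top_of_lt ht2, hB t htT⟩ with x; exact ⟨x, rfl⟩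
    have hst := h s hsS t htT
    rw [hαs, hβt, ← EReal.coe_sub, EReal.coe_le_coe_iff] at hst
    rw [hαs, EReal.coe_lt_coe_iff] at hs2
    rw [hβt, EReal.coe_lt_coe_iff] at ht2
    linarith
  by_contra hcon
  push_neg at hcon
  have := key ((av - bv - C) / 4) (by linarith)
  linarith

lemma pdhg_cs_real (a b c X Y : ℝ) (ha : 0 < a) (hb : 0 < b) (hc : 0 ≤ c) :
    c * X * Y ≤ (a * b * c) / (2 * a ^ 2) * X ^ 2 + (a * b * c) / (2 * b ^ 2) * Y ^ 2 := by
  have h : (a * b * c) / (2 * a ^ 2) * X ^ 2 + (a * b * c) / (2 * b ^ 2) * Y ^ 2 - c * X * Y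
      = c / (2 * (a * b)) * (b * X - a * Y) ^ 2 := by
    field_simp
    ring
  have h2 : 0 ≤ c / (2 * (a * b)) * (b * X - a * Y) ^ 2 := by positivity
  linarith

end PDHGhelpers

set_option maxHeartbeats 4000000

/-- **Chambolle–Pock convergence theorem for PDHG (Theorem 2.1).**
If τσ‖K‖² < 1, then for all radii R₁, R₂ ≥ 0 and all N ≥ 1, the partial
primal-dual gap of the ergodic averages satisfies
G_{R₁,R₂}(u^N, p^N) ≤ (1/(2N)) (R₂²/τ + R₁²/σ). -/
theorem pdhg_partial_gap_rate
    {H Z : Type*} [NormedAddCommGroup H] [InnerProductSpace ℝ H] [CompleteSpace H]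
    [NormedAddCommGroup Z] [InnerProductSpace ℝ Z] [CompleteSpace Z]
    (K : H →L[ℝ] Z)
    (g : H → EReal) (fstar : Z → EReal)
    -- g and f* are proper
    (hg_ne_bot : ∀ u, g u ≠ ⊥) (hg_ne_top : ∃ u, g u ≠ ⊤)
    (hf_ne_bot : ∀ p, fstar p ≠ ⊥) (hf_ne_top : ∃ p, fstar p ≠ ⊤)
    -- g and f* are convex
    (hg_conv : ∀ u v : H, ∀ t : ℝ, 0 ≤ t → t ≤ 1 →
      g (t • u + (1 - t) • v) ≤ (t : EReal) * g u + ((1 - t : ℝ) : EReal) * g v)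
    (hf_conv : ∀ p q : Z, ∀ t : ℝ, 0 ≤ t → t ≤ 1 →
      fstar (t • p + (1 - t) • q) ≤ (t : EReal) * fstar p + ((1 - t : ℝ) : EReal) * fstar q)
    -- g and f* are lower semicontinuous
    (hg_lsc : LowerSemicontinuous g) (hf_lsc : LowerSemicontinuous fstar)
    -- Lagrangian
    (L : H → Z → EReal)
    (hL : ∀ u p, L u p = ((inner ℝ (K u) p : ℝ) : EReal) + g u - fstar p)
    -- step sizes with τσ‖K‖² < 1
    (τ σ : ℝ) (hτ : 0 < τ) (hσ : 0 < σ) (hstep : τ * σ * ‖K‖ ^ 2 < 1)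
    -- initial points and PDHG iterates
    (u0 : H) (p0 : Z) (useq : ℕ → H) (pseq : ℕ → Z) (pbar : ℕ → Z)
    (hu_init : useq 0 = u0) (hp_init : pseq 0 = p0) (hpbar_init : pbar 0 = p0)
    (hu_step : ∀ n : ℕ, IsMinOn
      (fun u : H => g u + ((inner ℝ (K u) (pbar n) : ℝ) : EReal)
        + ((‖u - useq n‖ ^ 2 / (2 * τ) : ℝ) : EReal)) Set.univ (useq (n + 1)))
    (hp_step : ∀ n : ℕ, IsMaxOn
      (fun p : Z => -fstar p + ((inner ℝ (K (useq (n + 1))) p : ℝ) : EReal)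
        - ((‖p - pseq n‖ ^ 2 / (2 * σ) : ℝ) : EReal)) Set.univ (pseq (n + 1)))
    (hpbar_step : ∀ n : ℕ, pbar (n + 1) = (2 : ℝ) • pseq (n + 1) - pseq n)
    -- ergodic averages
    (uavg : ℕ → H) (pavg : ℕ → Z)
    (huavg : ∀ N : ℕ, uavg N = (N : ℝ)⁻¹ • ∑ n ∈ Finset.range N, useq (n + 1))
    (hpavg : ∀ N : ℕ, pavg N = (N : ℝ)⁻¹ • ∑ n ∈ Finset.range N, pseq (n + 1)) :
    ∀ (R₁ R₂ : ℝ), 0 ≤ R₁ → 0 ≤ R₂ → ∀ N : ℕ, 1 ≤ N →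
      (⨆ p' ∈ {p' : Z | ‖p' - p0‖ ≤ R₁}, L (uavg N) p')
        - (⨅ u' ∈ {u' : H | ‖u' - u0‖ ≤ R₂}, L u' (pavg N))
      ≤ ((1 / (2 * N) * (R₂ ^ 2 / τ + R₁ ^ 2 / σ) : ℝ) : EReal) := by
  intro R₁ R₂ hR₁ hR₂ N hN
  classical
  have hNpos : 0 < N := hN
  have hNR : (0 : ℝ) < (N : ℝ) := by exact_mod_cast hNpos
  have hNne : (N : ℝ) ≠ 0 := ne_of_gt hNR
  obtain ⟨w, hw⟩ := hg_ne_top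
  obtain ⟨Gw, hGw⟩ : ∃ r : ℝ, g w = (r : EReal) := by
    lift g w to ℝ using ⟨hw, hg_ne_bot w⟩ with x
    exact ⟨x, rfl⟩
  obtain ⟨q, hq⟩ := hf_ne_top
  obtain ⟨Fq, hFq⟩ : ∃ r : ℝ, fstar q = (r : EReal) := by
    lift fstar q to ℝ using ⟨hq, hf_ne_bot q⟩ with x
    exact ⟨x, rfl⟩
  -- finiteness of the iterate values
  have hGex : ∀ n : ℕ, ∃ r : ℝ, g (useq (n + 1)) = (r : EReal) := by
    intro n
    have h0 := isMinOn_iff.mp (hu_step n) w (Set.mem_univ w)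
    rw [hGw, ← EReal.coe_add, ← EReal.coe_add] at h0
    exact pdhg_finite_of_add_le (hg_ne_bot _) h0
  choose G hG using hGex
  have hFex : ∀ n : ℕ, ∃ r : ℝ, fstar (pseq (n + 1)) = (r : EReal) := by
    intro n
    have h0 := isMaxOn_iff.mp (hp_step n) q (Set.mem_univ q)
    rw [hFq, ← EReal.coe_neg, ← EReal.coe_add, ← EReal.coe_sub] at h0
    exact pdhg_finite_of_le_neg (hf_ne_bot _) h0
  choose F hF using hFex
  -- prox inequality for the primal step
  have hminU : ∀ n : ℕ, ∀ y : H,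
      ((G n : ℝ) : EReal)
        + ((((inner ℝ (useq (n+1)) ((ContinuousLinearMap.adjoint K) (pbar n)) : ℝ))
            + ‖useq (n+1) - useq n‖ ^ 2 / (2 * τ) : ℝ) : EReal)
      ≤ g y + ((((inner ℝ y ((ContinuousLinearMap.adjoint K) (pbar n)) : ℝ))
            + ‖y - useq n‖ ^ 2 / (2 * τ) : ℝ) : EReal) := by
    intro n y
    have h0 := isMinOn_iff.mp (hu_step n) y (Set.mem_univ y)
    rw [hG n] at h0
    simp only [ContinuousLinearMap.adjoint_inner_right, EReal.coe_add, ← add_assoc]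
    exact h0
  have key1 : ∀ n : ℕ, ∀ v : H, ∀ Gv : ℝ, g v = (Gv : EReal) →
      G n + (inner ℝ (K (useq (n+1))) (pbar n) : ℝ) + ‖useq (n+1) - useq n‖ ^ 2 / (2 * τ)
        + ‖v - useq (n+1)‖ ^ 2 / (2 * τ)
      ≤ Gv + (inner ℝ (K v) (pbar n) : ℝ) + ‖v - useq n‖ ^ 2 / (2 * τ) := by
    intro n v Gv hGv
    have h := pdhg_prox_ineq g hg_conv ((ContinuousLinearMap.adjoint K) (pbar n))
      (useq n) (useq (n+1)) v τ hτ (G n) Gv (hG n) hGv (hminU n)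
    simpa only [ContinuousLinearMap.adjoint_inner_right] using h
  -- prox inequality for the dual step
  have hminP : ∀ n : ℕ, ∀ y : Z,
      ((F n : ℝ) : EReal)
        + ((((inner ℝ (pseq (n+1)) (-(K (useq (n+1)))) : ℝ))
            + ‖pseq (n+1) - pseq n‖ ^ 2 / (2 * σ) : ℝ) : EReal)
      ≤ fstar y + ((((inner ℝ y (-(K (useq (n+1)))) : ℝ))
            + ‖y - pseq n‖ ^ 2 / (2 * σ) : ℝ) : EReal) := by
    intro n y
    have h0 := isMaxOn_iff.mp (hp_step n) y (Set.mem_univ y)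
    rw [hF n] at h0
    by_cases htop : fstar y = ⊤
    · rw [htop, EReal.top_add_coe]; exact le_top
    obtain ⟨Fy, hFy⟩ : ∃ x : ℝ, fstar y = (x : EReal) := by
      lift fstar y to ℝ using ⟨htop, hf_ne_bot y⟩ with x
      exact ⟨x, rfl⟩
    rw [hFy] at h0 ⊢
    rw [← EReal.coe_neg, ← EReal.coe_neg, ← EReal.coe_add, ← EReal.coe_add, ← EReal.coe_sub,
      ← EReal.coe_sub, EReal.coe_le_coe_iff] at h0
    rw [← EReal.coe_add, ← EReal.coe_add, EReal.coe_le_coe_iff]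
    have e1 : (inner ℝ (pseq (n+1)) (-(K (useq (n+1)))) : ℝ)
        = -(inner ℝ (K (useq (n+1))) (pseq (n+1)) : ℝ) := by
      rw [inner_neg_right, real_inner_comm]
    have e2 : (inner ℝ y (-(K (useq (n+1)))) : ℝ) = -(inner ℝ (K (useq (n+1))) y : ℝ) := by
      rw [inner_neg_right, real_inner_comm]
    rw [e1, e2]
    linarith [h0]
  have key2 : ∀ n : ℕ, ∀ pp : Z, ∀ Fp : ℝ, fstar pp = (Fp : EReal) →
      F n - (inner ℝ (K (useq (n+1))) (pseq (n+1)) : ℝ) + ‖pseq (n+1) - pseq n‖ ^ 2 / (2 * σ)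
        + ‖pp - pseq (n+1)‖ ^ 2 / (2 * σ)
      ≤ Fp - (inner ℝ (K (useq (n+1))) pp : ℝ) + ‖pp - pseq n‖ ^ 2 / (2 * σ) := by
    intro n pp Fp hFp
    have h := pdhg_prox_ineq fstar hf_conv (-(K (useq (n+1)))) (pseq n) (pseq (n+1)) pp σ hσ
      (F n) Fp (hF n) hFp (hminP n)
    have e1 : (inner ℝ (pseq (n+1)) (-(K (useq (n+1)))) : ℝ)
        = -(inner ℝ (K (useq (n+1))) (pseq (n+1)) : ℝ) := by
      rw [inner_neg_right, real_inner_comm]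
    have e2 : (inner ℝ pp (-(K (useq (n+1)))) : ℝ) = -(inner ℝ (K (useq (n+1))) pp : ℝ) := by
      rw [inner_neg_right, real_inner_comm]
    rw [e1, e2] at h
    linarith [h]
  -- step-size constant
  set s : ℝ := Real.sqrt (τ * σ) * ‖K‖ with hs_def
  have hs_nn : 0 ≤ s := mul_nonneg (Real.sqrt_nonneg _) (norm_nonneg _)
  have hs_sq : s ^ 2 = τ * σ * ‖K‖ ^ 2 := by
    rw [hs_def, mul_pow, Real.sq_sqrt (by positivity)]
  have hs1 : s ≤ 1 := by nlinarith [hs_nn, hs_sq, hstep]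
  have hcs : ∀ (x : H) (y : Z), (inner ℝ (K x) y : ℝ)
      ≤ s / (2 * τ) * ‖x‖ ^ 2 + s / (2 * σ) * ‖y‖ ^ 2 := by
    intro x y
    have h1 : (inner ℝ (K x) y : ℝ) ≤ ‖K‖ * ‖x‖ * ‖y‖ := by
      calc (inner ℝ (K x) y : ℝ) ≤ ‖K x‖ * ‖y‖ := real_inner_le_norm _ _
        _ ≤ ‖K‖ * ‖x‖ * ‖y‖ := mul_le_mul_of_nonneg_right (K.le_opNorm x) (norm_nonneg _)
    have h2 := pdhg_cs_real (Real.sqrt τ) (Real.sqrt σ) ‖K‖ ‖x‖ ‖y‖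
      (Real.sqrt_pos.mpr hτ) (Real.sqrt_pos.mpr hσ) (norm_nonneg _)
    have e1 : Real.sqrt τ * Real.sqrt σ * ‖K‖ = s := by
      rw [hs_def, ← Real.sqrt_mul hτ.le]
    have e2 : Real.sqrt τ ^ 2 = τ := Real.sq_sqrt hτ.le
    have e3 : Real.sqrt σ ^ 2 = σ := Real.sq_sqrt hσ.le
    rw [e1, e2, e3] at h2
    linarith
  -- the difference sequence Δ
  set Δ : ℕ → Z := fun n => Nat.casesOn n (0 : Z) (fun m => pseq (m+1) - pseq m) with hΔ_def
  have hΔ0 : Δ 0 = 0 := rfl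
  have hΔs : ∀ m : ℕ, Δ (m+1) = pseq (m+1) - pseq m := fun m => rfl
  have hpd : ∀ n : ℕ, pseq (n+1) - pbar n = Δ (n+1) - Δ n := by
    intro n
    cases n with
    | zero => rw [hpbar_init, ← hp_init, hΔs, hΔ0, sub_zero]
    | succ m =>
        rw [hpbar_step m, hΔs, hΔs, two_smul]
        abel
  -- Jensen for the averages
  have hJg : g (uavg N) ≤ ((((N:ℝ)⁻¹ * ∑ n ∈ Finset.range N, G n) : ℝ) : EReal) := by
    rw [huavg]
    exact pdhg_jensen_avg g hg_conv (fun n => useq (n+1)) G (fun n => le_of_eq (hG n)) N hN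
  obtain ⟨ga, hga⟩ := pdhg_ereal_exists_real (hg_ne_bot _) hJg
  have hga_le : ga ≤ (N:ℝ)⁻¹ * ∑ n ∈ Finset.range N, G n := by
    rw [hga] at hJg; exact EReal.coe_le_coe_iff.mp hJg
  have hJf : fstar (pavg N) ≤ ((((N:ℝ)⁻¹ * ∑ n ∈ Finset.range N, F n) : ℝ) : EReal) := by
    rw [hpavg]
    exact pdhg_jensen_avg fstar hf_conv (fun n => pseq (n+1)) F (fun n => le_of_eq (hF n)) N hN
  obtain ⟨fa, hfa⟩ := pdhg_ereal_exists_real (hf_ne_bot _) hJf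
  have hfa_le : fa ≤ (N:ℝ)⁻¹ * ∑ n ∈ Finset.range N, F n := by
    rw [hfa] at hJf; exact EReal.coe_le_coe_iff.mp hJf
  -- inner ℝ products with averages
  have hinnU : ∀ p' : Z, (inner ℝ (K (uavg N)) p' : ℝ)
      = (N:ℝ)⁻¹ * ∑ n ∈ Finset.range N, (inner ℝ (K (useq (n+1))) p' : ℝ) := by
    intro p'
    rw [huavg, map_smul, map_sum, real_inner_smul_left, sum_inner]
  have hinnP : ∀ u' : H, (inner ℝ (K u') (pavg N) : ℝ)
      = (N:ℝ)⁻¹ * ∑ n ∈ Finset.range N, (inner ℝ (K u') (pseq (n+1)) : ℝ) := by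
    intro u'
    rw [hpavg, real_inner_smul_right, inner_sum]
  -- opaque step-size coefficients
  obtain ⟨ct, hct⟩ : ∃ c : ℝ, c = 1/(2*τ) := ⟨_, rfl⟩
  obtain ⟨cs, hcs'⟩ : ∃ c : ℝ, c = 1/(2*σ) := ⟨_, rfl⟩
  obtain ⟨st, hst⟩ : ∃ c : ℝ, c = s/(2*τ) := ⟨_, rfl⟩
  obtain ⟨ss, hss⟩ : ∃ c : ℝ, c = s/(2*σ) := ⟨_, rfl⟩
  have hct0 : 0 ≤ ct := by rw [hct]; positivity
  have hcs0 : 0 ≤ cs := by rw [hcs']; positivity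
  have hstc : st ≤ ct := by
    rw [hst, hct]
    exact (div_le_div_iff_of_pos_right (by positivity)).mpr hs1
  have hssc : ss ≤ cs := by
    rw [hss, hcs']
    exact (div_le_div_iff_of_pos_right (by positivity)).mpr hs1
  have hcsK : ∀ (x : H) (y : Z), (inner ℝ (K x) y : ℝ) ≤ st * ‖x‖ ^ 2 + ss * ‖y‖ ^ 2 := by
    intro x y
    rw [hst, hss]
    have := hcs x y
    have e1 : s / (2 * τ) * ‖x‖ ^ 2 = s/(2*τ) * ‖x‖ ^ 2 := rfl
    linarith [this]
  -- the main real summed bound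
  have hsum : ∀ (u' : H) (Gu : ℝ), g u' = (Gu : EReal) → ‖u' - u0‖ ≤ R₂ →
      ∀ (p' : Z) (Fp : ℝ), fstar p' = (Fp : EReal) → ‖p' - p0‖ ≤ R₁ →
      ∑ n ∈ Finset.range N,
        (((inner ℝ (K (useq (n+1))) p' : ℝ) + G n - Fp)
          - ((inner ℝ (K u') (pseq (n+1)) : ℝ) + Gu - F n))
        ≤ R₂ ^ 2 / (2 * τ) + R₁ ^ 2 / (2 * σ) := by
    intro u' Gu hGu hu'R p' Fp hFp hp'R
    set Au : ℕ → ℝ := fun n => ‖u' - useq n‖ ^ 2 with hAu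
    set Ap : ℕ → ℝ := fun n => ‖p' - pseq n‖ ^ 2 with hAp
    set Du : ℕ → ℝ := fun n => ‖useq (n+1) - useq n‖ ^ 2 with hDu
    set Dp : ℕ → ℝ := fun n => ‖pseq (n+1) - pseq n‖ ^ 2 with hDp
    set E : ℕ → ℝ := fun n => (inner ℝ (K (useq n - u')) (Δ n) : ℝ) with hE
    set rr : ℕ → ℝ := fun n => (inner ℝ (K (useq (n+1) - useq n)) (Δ n) : ℝ) with hrr
    have hstep_all : ∀ n ∈ Finset.range N,
        (((inner ℝ (K (useq (n+1))) p' : ℝ) + G n - Fp)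
          - ((inner ℝ (K u') (pseq (n+1)) : ℝ) + Gu - F n))
        ≤ ct * (Au n - Au (n+1) - Du n)
          + cs * (Ap n - Ap (n+1) - Dp n)
          + (E (n+1) - E n - rr n) := by
      intro n _
      have h1 := key1 n u' Gu hGu
      have h2 := key2 n p' Fp hFp
      have hx : (inner ℝ (K (useq (n+1) - u')) (pseq (n+1) - pbar n) : ℝ)
          = (inner ℝ (K (useq (n+1))) (pseq (n+1)) : ℝ)
            - (inner ℝ (K (useq (n+1))) (pbar n) : ℝ)
            - (inner ℝ (K u') (pseq (n+1)) : ℝ) + (inner ℝ (K u') (pbar n) : ℝ) := by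
        rw [map_sub, inner_sub_left, inner_sub_right, inner_sub_right]
        ring
      have hx2 : (inner ℝ (K (useq (n+1) - u')) (Δ (n+1) - Δ n) : ℝ)
          = E (n+1) - E n - rr n := by
        simp only [hE, hrr]
        rw [inner_sub_right]
        have hKe : K (useq (n+1) - u') = K (useq n - u') + K (useq (n+1) - useq n) := by
          rw [← map_add]; congr 1; abel
        rw [hKe]
        simp only [inner_add_left]
        ring
      rw [hpd n, hx2] at hx
      simp only [hAu, hAp, hDu, hDp]
      rw [hct, hcs']
      ring_nf at h1 h2 hx ⊢
      linarith [h1, h2, hx]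
    have hsplit : ∑ n ∈ Finset.range N,
        (ct * (Au n - Au (n+1) - Du n)
          + cs * (Ap n - Ap (n+1) - Dp n)
          + (E (n+1) - E n - rr n))
        = ct * ((Au 0 - Au N) - ∑ n ∈ Finset.range N, Du n)
          + cs * ((Ap 0 - Ap N) - ∑ n ∈ Finset.range N, Dp n)
          + ((E N - E 0) - ∑ n ∈ Finset.range N, rr n) := by
      rw [Finset.sum_add_distrib, Finset.sum_add_distrib]
      congr 1
      · congr 1
        · rw [← Finset.mul_sum]
          congr 1
          rw [Finset.sum_sub_distrib, Finset.sum_range_sub' Au]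
        · rw [← Finset.mul_sum]
          congr 1
          rw [Finset.sum_sub_distrib, Finset.sum_range_sub' Ap]
      · rw [Finset.sum_sub_distrib, Finset.sum_range_sub E]
    have hE0 : E 0 = 0 := by
      simp only [hE, hΔ0, inner_zero_right]
    have hAuNrev : ‖useq N - u'‖ ^ 2 = Au N := by
      simp only [hAu]; rw [norm_sub_rev]
    have hEN : E N ≤ st * Au N + ss * ‖Δ N‖ ^ 2 := by
      have h := hcsK (useq N - u') (Δ N)
      rw [hAuNrev] at h
      simpa only [hE] using h
    have hrn : ∀ n ∈ Finset.range N, -(rr n) ≤ st * Du n + ss * ‖Δ n‖ ^ 2 := by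
      intro n _
      have h := hcsK (useq n - useq (n+1)) (Δ n)
      have he : (inner ℝ (K (useq n - useq (n+1))) (Δ n) : ℝ) = -(rr n) := by
        simp only [hrr]
        rw [map_sub, map_sub, inner_sub_left, inner_sub_left]
        ring
      rw [he, norm_sub_rev] at h
      simpa only [hDu] using h
    have hsumr : -(∑ n ∈ Finset.range N, rr n)
        ≤ st * (∑ n ∈ Finset.range N, Du n)
          + ss * (∑ n ∈ Finset.range N, ‖Δ n‖ ^ 2) := by
      rw [← Finset.sum_neg_distrib]
      calc ∑ n ∈ Finset.range N, -(rr n)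
          ≤ ∑ n ∈ Finset.range N, (st * Du n + ss * ‖Δ n‖ ^ 2) :=
            Finset.sum_le_sum hrn
        _ = _ := by rw [Finset.sum_add_distrib, ← Finset.mul_sum, ← Finset.mul_sum]
    have hshift : (∑ n ∈ Finset.range N, ‖Δ n‖ ^ 2) + ‖Δ N‖ ^ 2
        = ∑ n ∈ Finset.range N, Dp n := by
      have h1 := Finset.sum_range_succ (fun n => ‖Δ n‖ ^ 2) N
      have h2 := Finset.sum_range_succ' (fun n => ‖Δ n‖ ^ 2) N
      have h3 : ∀ n, ‖Δ (n+1)‖ ^ 2 = Dp n := fun n => by rw [hΔs]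
      rw [h1.symm, h2]
      simp only [hΔ0, norm_zero]
      rw [Finset.sum_congr rfl (fun n _ => h3 n)]
      ring
    have hDusum : 0 ≤ ∑ n ∈ Finset.range N, Du n :=
      Finset.sum_nonneg fun n _ => by positivity
    have hDpsum : 0 ≤ ∑ n ∈ Finset.range N, Dp n :=
      Finset.sum_nonneg fun n _ => by positivity
    have hAuN : (0:ℝ) ≤ Au N := by positivity
    have hApN : (0:ℝ) ≤ Ap N := by positivity
    have hAu0 : Au 0 ≤ R₂ ^ 2 := by
      simp only [hAu, hu_init]
      exact pow_le_pow_left₀ (norm_nonneg _) hu'R 2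
    have hAp0 : Ap 0 ≤ R₁ ^ 2 := by
      simp only [hAp, hp_init]
      exact pow_le_pow_left₀ (norm_nonneg _) hp'R 2
    have hb1 : st * Au N ≤ ct * Au N := mul_le_mul_of_nonneg_right hstc hAuN
    have hb2 : st * (∑ n ∈ Finset.range N, Du n) ≤ ct * (∑ n ∈ Finset.range N, Du n) :=
      mul_le_mul_of_nonneg_right hstc hDusum
    have hb3 : ss * ‖Δ N‖ ^ 2 + ss * (∑ n ∈ Finset.range N, ‖Δ n‖ ^ 2)
        ≤ cs * (∑ n ∈ Finset.range N, Dp n) := by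
      have e : ss * ‖Δ N‖ ^ 2 + ss * (∑ n ∈ Finset.range N, ‖Δ n‖ ^ 2)
          = ss * (∑ n ∈ Finset.range N, Dp n) := by
        rw [← hshift]; ring
      rw [e]
      exact mul_le_mul_of_nonneg_right hssc hDpsum
    have hca : ct * Au 0 ≤ ct * R₂ ^ 2 := mul_le_mul_of_nonneg_left hAu0 hct0
    have hcb : cs * Ap 0 ≤ cs * R₁ ^ 2 := mul_le_mul_of_nonneg_left hAp0 hcs0
    have hcAuN : (0:ℝ) ≤ ct * Au N := mul_nonneg hct0 hAuN
    have hcApN : (0:ℝ) ≤ cs * Ap N := mul_nonneg hcs0 hApN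
    calc ∑ n ∈ Finset.range N,
        (((inner ℝ (K (useq (n+1))) p' : ℝ) + G n - Fp)
          - ((inner ℝ (K u') (pseq (n+1)) : ℝ) + Gu - F n))
        ≤ ∑ n ∈ Finset.range N,
          (ct * (Au n - Au (n+1) - Du n)
            + cs * (Ap n - Ap (n+1) - Dp n)
            + (E (n+1) - E n - rr n)) := Finset.sum_le_sum hstep_all
      _ = ct * ((Au 0 - Au N) - ∑ n ∈ Finset.range N, Du n)
          + cs * ((Ap 0 - Ap N) - ∑ n ∈ Finset.range N, Dp n)
          + ((E N - E 0) - ∑ n ∈ Finset.range N, rr n) := hsplit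
      _ ≤ ct * R₂ ^ 2 + cs * R₁ ^ 2 := by
          linarith [hb1, hb2, hb3, hca, hcb, hEN, hsumr, hE0, hcAuN, hcApN]
      _ = R₂ ^ 2 / (2 * τ) + R₁ ^ 2 / (2 * σ) := by
          rw [hct, hcs']; ring
  -- the pointwise L-gap bound in EReal
  have hCnn : (0:ℝ) ≤ 1 / (2 * (N:ℝ)) * (R₂ ^ 2 / τ + R₁ ^ 2 / σ) := by positivity
  refine pdhg_sup_sub_inf_le {p' : Z | ‖p' - p0‖ ≤ R₁} {u' : H | ‖u' - u0‖ ≤ R₂}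
    (fun p' => L (uavg N) p') (fun u' => L u' (pavg N))
    (1 / (2 * (N:ℝ)) * (R₂ ^ 2 / τ + R₁ ^ 2 / σ)) ?_ ?_ ?_
  · -- never ⊤
    intro p' _
    show L (uavg N) p' ≠ ⊤
    rw [hL, hga, ← EReal.coe_add]
    exact pdhg_coe_sub_ne_top (hf_ne_bot p')
  · -- never ⊥
    intro u' _
    show L u' (pavg N) ≠ ⊥
    rw [hL, hfa]
    by_cases htop : g u' = ⊤
    · rw [htop, EReal.coe_add_top, EReal.top_sub_coe]; exact top_ne_bot
    · obtain ⟨gu, hgu⟩ : ∃ x : ℝ, g u' = (x : EReal) := by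
        lift g u' to ℝ using ⟨htop, hg_ne_bot u'⟩ with x
        exact ⟨x, rfl⟩
      rw [hgu, ← EReal.coe_add, ← EReal.coe_sub]
      exact EReal.coe_ne_bot _
  · -- the pointwise gap bound
    intro p' hp' u' hu'
    show L (uavg N) p' - L u' (pavg N)
      ≤ ((1 / (2 * (N:ℝ)) * (R₂ ^ 2 / τ + R₁ ^ 2 / σ) : ℝ) : EReal)
    have hp'R : ‖p' - p0‖ ≤ R₁ := hp'
    have hu'R : ‖u' - u0‖ ≤ R₂ := hu'
    by_cases hfp : fstar p' = ⊤
    · rw [hL, hfp, EReal.sub_top, EReal.bot_sub]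
      exact bot_le
    by_cases hgu : g u' = ⊤
    · rw [hL u' (pavg N), hgu, hfa, EReal.coe_add_top, EReal.top_sub_coe, EReal.sub_top]
      exact bot_le
    obtain ⟨Fp, hFp⟩ : ∃ x : ℝ, fstar p' = (x : EReal) := by
      lift fstar p' to ℝ using ⟨hfp, hf_ne_bot p'⟩ with x
      exact ⟨x, rfl⟩
    obtain ⟨Gu, hGu⟩ : ∃ x : ℝ, g u' = (x : EReal) := by
      lift g u' to ℝ using ⟨hgu, hg_ne_bot u'⟩ with x
      exact ⟨x, rfl⟩
    have hbound := hsum u' Gu hGu hu'R p' Fp hFp hp'R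
    have hAval : L (uavg N) p' = (((inner ℝ (K (uavg N)) p' : ℝ) + ga - Fp : ℝ) : EReal) := by
      rw [hL, hga, hFp, ← EReal.coe_add, ← EReal.coe_sub]
    have hBval : L u' (pavg N) = (((inner ℝ (K u') (pavg N) : ℝ) + Gu - fa : ℝ) : EReal) := by
      rw [hL, hGu, hfa, ← EReal.coe_add, ← EReal.coe_sub]
    rw [hAval, hBval, ← EReal.coe_sub, EReal.coe_le_coe_iff]
    rw [hinnU p', hinnP u']
    -- expand the sum
    have hexp : ∑ n ∈ Finset.range N,
        (((inner ℝ (K (useq (n+1))) p' : ℝ) + G n - Fp)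
          - ((inner ℝ (K u') (pseq (n+1)) : ℝ) + Gu - F n))
        = (∑ n ∈ Finset.range N, (inner ℝ (K (useq (n+1))) p' : ℝ))
          + (∑ n ∈ Finset.range N, G n) - (N:ℝ) * Fp
          - (∑ n ∈ Finset.range N, (inner ℝ (K u') (pseq (n+1)) : ℝ))
          - (N:ℝ) * Gu + (∑ n ∈ Finset.range N, F n) := by
      rw [Finset.sum_sub_distrib, Finset.sum_sub_distrib, Finset.sum_sub_distrib,
        Finset.sum_add_distrib, Finset.sum_add_distrib, Finset.sum_const, Finset.sum_const,
        Finset.card_range, nsmul_eq_mul, nsmul_eq_mul]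
      ring
    have h3 : (N:ℝ)⁻¹ * (∑ n ∈ Finset.range N,
        (((inner ℝ (K (useq (n+1))) p' : ℝ) + G n - Fp)
          - ((inner ℝ (K u') (pseq (n+1)) : ℝ) + Gu - F n)))
        ≤ (N:ℝ)⁻¹ * (R₂ ^ 2 / (2 * τ) + R₁ ^ 2 / (2 * σ)) :=
      mul_le_mul_of_nonneg_left hbound (by positivity)
    have h4 : (N:ℝ)⁻¹ * (∑ n ∈ Finset.range N,
        (((inner ℝ (K (useq (n+1))) p' : ℝ) + G n - Fp)
          - ((inner ℝ (K u') (pseq (n+1)) : ℝ) + Gu - F n)))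
        = ((N:ℝ)⁻¹ * ∑ n ∈ Finset.range N, (inner ℝ (K (useq (n+1))) p' : ℝ))
          + ((N:ℝ)⁻¹ * ∑ n ∈ Finset.range N, G n) - Fp
          - ((N:ℝ)⁻¹ * ∑ n ∈ Finset.range N, (inner ℝ (K u') (pseq (n+1)) : ℝ))
          - Gu + ((N:ℝ)⁻¹ * ∑ n ∈ Finset.range N, F n) := by
      rw [hexp]
      field_simp
      try ring
    have hCeq : (N:ℝ)⁻¹ * (R₂ ^ 2 / (2 * τ) + R₁ ^ 2 / (2 * σ))
        = 1 / (2 * (N:ℝ)) * (R₂ ^ 2 / τ + R₁ ^ 2 / σ) := by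
      field_simp
    linarith [hga_le, hfa_le, h3, h4, hCeq]
end

section
/- Under the G-prox PDHG setup with initial dual point p₀ = 0, suppose F̄ := inf_{u ∈ H} F(u) > −∞ and φ : (0,∞) → [0,∞) is a function such that inf { F(u) : ‖K(u − u₀)‖_Z ≤ R } − F̄ ≤ φ(R) for every R > 0. Then for every ε > 0, every θ ∈ (0,1), and every R > 0 with φ(R) ≤ ε/2, running the iterates with step sizes τ = θR/C and σ = θC/R for any number N of iterations with N ≥ 2RC/(θε) yields F(u^N) − F̄ ≤ ε. -/
lemma combo_norm_sq {X : Type*} [NormedAddCommGroup X] [InnerProductSpace ℝ X]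
    (t : ℝ) (a b : X) :
    ‖t • a + (1 - t) • b‖ ^ 2
      = t * ‖a‖ ^ 2 + (1 - t) * ‖b‖ ^ 2 - t * (1 - t) * ‖a - b‖ ^ 2 := by
  have h := fun x : X => real_inner_self_eq_norm_sq x
  simp only [← h]
  simp only [inner_add_add_self, inner_sub_sub_self, real_inner_smul_left, real_inner_smul_right,
    real_inner_comm a b]
  ring

lemma le_of_small_t {X Y d : ℝ} (hd : 0 ≤ d)
    (h : ∀ t : ℝ, 0 < t → t ≤ 1 → X ≤ Y + t * d) : X ≤ Y := by
  refine le_of_forall_pos_le_add fun ε hε => ?_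
  have ht0 : 0 < min 1 (ε / (d + 1)) := by positivity
  have ht1 : min 1 (ε / (d + 1)) ≤ 1 := min_le_left _ _
  have := h _ ht0 ht1
  have h2 : min 1 (ε / (d + 1)) ≤ ε / (d + 1) := min_le_right _ _
  have h3 : min 1 (ε / (d + 1)) * d ≤ ε := by
    have : ε / (d + 1) * d ≤ ε := by
      rw [div_mul_eq_mul_div, div_le_iff₀ (by linarith)]
      nlinarith
    nlinarith
  linarith

lemma prox_ineq {X : Type*} [NormedAddCommGroup X] [InnerProductSpace ℝ X]
    (ψ : X → EReal)
    (hψ_conv : ∀ a b : X, ∀ t : ℝ, 0 ≤ t → t ≤ 1 →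
      ψ (t • a + (1 - t) • b) ≤ (t : EReal) * ψ a + ((1 - t : ℝ) : EReal) * ψ b)
    (ℓ : X → ℝ)
    (hℓ : ∀ a b : X, ∀ t : ℝ, ℓ (t • a + (1 - t) • b) = t * ℓ a + (1 - t) * ℓ b)
    (ρ : ℝ) (hρ : 0 < ρ) (z0 z1 : X)
    (hmin : IsMinOn (fun z : X => ψ z + ((ℓ z : ℝ) : EReal)
      + ((‖z - z0‖ ^ 2 / (2 * ρ) : ℝ) : EReal)) Set.univ z1)
    (c1 : ℝ) (hc1 : ψ z1 = (c1 : EReal)) (z : X) (c : ℝ) (hc : ψ z = (c : EReal)) :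
    c1 + ℓ z1 + ‖z1 - z0‖ ^ 2 / (2 * ρ) + ‖z - z1‖ ^ 2 / (2 * ρ)
      ≤ c + ℓ z + ‖z - z0‖ ^ 2 / (2 * ρ) := by
  have hQ : (0:ℝ) ≤ ‖z - z1‖ ^ 2 / (2 * ρ) := by positivity
  have key : ∀ t : ℝ, 0 < t → t ≤ 1 →
      c1 + ℓ z1 + ‖z1 - z0‖ ^ 2 / (2 * ρ) + ‖z - z1‖ ^ 2 / (2 * ρ)
        ≤ (c + ℓ z + ‖z - z0‖ ^ 2 / (2 * ρ)) + t * (‖z - z1‖ ^ 2 / (2 * ρ)) := by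
    intro t ht0 ht1
    set zt := t • z + (1 - t) • z1 with hzt
    have hmem : zt ∈ Set.univ := Set.mem_univ _
    have hmin' := hmin hmem
    simp only at hmin'
    have hψt : ψ zt ≤ ((t * c + (1 - t) * c1 : ℝ) : EReal) := by
      have := hψ_conv z z1 t ht0.le ht1
      rw [hc, hc1] at this
      rw [EReal.coe_add, EReal.coe_mul, EReal.coe_mul]
      exact this
    have hvec : zt - z0 = t • (z - z0) + (1 - t) • (z1 - z0) := by
      rw [hzt]; module
    have hnorm : ‖zt - z0‖ ^ 2 = t * ‖z - z0‖ ^ 2 + (1 - t) * ‖z1 - z0‖ ^ 2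
        - t * (1 - t) * ‖z - z1‖ ^ 2 := by
      rw [hvec, combo_norm_sq]
      congr 3
      abel
    have hlin : ℓ zt = t * ℓ z + (1 - t) * ℓ z1 := hℓ z z1 t
    have hchain : ((c1 + ℓ z1 + ‖z1 - z0‖ ^ 2 / (2 * ρ) : ℝ) : EReal)
        ≤ ((t * c + (1 - t) * c1 + ℓ zt + ‖zt - z0‖ ^ 2 / (2 * ρ) : ℝ) : EReal) := by
      calc ((c1 + ℓ z1 + ‖z1 - z0‖ ^ 2 / (2 * ρ) : ℝ) : EReal)
          = ψ z1 + ((ℓ z1 : ℝ) : EReal) + ((‖z1 - z0‖ ^ 2 / (2 * ρ) : ℝ) : EReal) := by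
            rw [hc1]; push_cast; ring
        _ ≤ ψ zt + ((ℓ zt : ℝ) : EReal) + ((‖zt - z0‖ ^ 2 / (2 * ρ) : ℝ) : EReal) := hmin'
        _ ≤ ((t * c + (1 - t) * c1 : ℝ) : EReal) + ((ℓ zt : ℝ) : EReal)
            + ((‖zt - z0‖ ^ 2 / (2 * ρ) : ℝ) : EReal) := by
            exact add_le_add_left (add_le_add_left hψt _) _
        _ = ((t * c + (1 - t) * c1 + ℓ zt + ‖zt - z0‖ ^ 2 / (2 * ρ) : ℝ) : EReal) := by
            push_cast; ring
    rw [EReal.coe_le_coe_iff] at hchain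
    rw [hlin, hnorm] at hchain
    have h' : t * (c1 + ℓ z1 + ‖z1 - z0‖ ^ 2 / (2 * ρ) + ‖z - z1‖ ^ 2 / (2 * ρ))
        ≤ t * ((c + ℓ z + ‖z - z0‖ ^ 2 / (2 * ρ)) + t * (‖z - z1‖ ^ 2 / (2 * ρ))) := by
      simp only [div_eq_mul_inv] at hchain ⊢
      linarith [hchain]
    exact le_of_mul_le_mul_left h' ht0
  exact le_of_small_t hQ key

lemma ereal_neg_shape_s3 (x : EReal) (a b : ℝ) :
    -(-x + (a : EReal) - (b : EReal)) = x + ((-a : ℝ) : EReal) + ((b : ℝ) : EReal) := by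
  induction x using EReal.rec with
  | bot => simp [sub_eq_add_neg, ← EReal.coe_neg, ← EReal.coe_add]
  | coe r => norm_cast; ring
  | top => simp [sub_eq_add_neg, ← EReal.coe_neg, ← EReal.coe_add]

lemma ereal_rearr (a : ℝ) (x y : EReal) :
    (a : EReal) + x - y = x + ((a : EReal) - y) := by
  rw [sub_eq_add_neg, sub_eq_add_neg, ← add_assoc, add_comm (a : EReal) x, add_assoc]

lemma ereal_jensen_s3 {X : Type*} [AddCommGroup X] [Module ℝ X]
    (ψ : X → EReal)
    (hconv : ∀ a b : X, ∀ t : ℝ, 0 ≤ t → t ≤ 1 →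
      ψ (t • a + (1 - t) • b) ≤ (t : EReal) * ψ a + ((1 - t : ℝ) : EReal) * ψ b)
    (x : ℕ → X) (v : ℕ → ℝ) (hv : ∀ n, ψ (x n) = ((v n : ℝ) : EReal)) :
    ∀ N : ℕ, 1 ≤ N →
      ψ ((N : ℝ)⁻¹ • ∑ n ∈ Finset.range N, x n)
        ≤ (((N : ℝ)⁻¹ * ∑ n ∈ Finset.range N, v n : ℝ) : EReal) := by
  intro N
  induction N with
  | zero => omega
  | succ N ih =>
    intro _
    rcases Nat.eq_zero_or_pos N with hN | hN
    · subst hN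
      simp [hv 0]
    · have ihN := ih hN
      have hNpos : (0:ℝ) < N := by exact_mod_cast hN
      have hN1 : (0:ℝ) < (N:ℝ) + 1 := by linarith
      set t : ℝ := (N : ℝ) / ((N : ℝ) + 1) with ht
      have ht0 : 0 ≤ t := by positivity
      have ht1 : t ≤ 1 := by rw [ht, div_le_one hN1]; linarith
      have h1t : 1 - t = ((N:ℝ) + 1)⁻¹ := by
        rw [ht]; field_simp; ring
      have hcombo : ((N + 1 : ℕ) : ℝ)⁻¹ • ∑ n ∈ Finset.range (N + 1), x n
          = t • ((N : ℝ)⁻¹ • ∑ n ∈ Finset.range N, x n) + (1 - t) • x N := by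
        rw [Finset.sum_range_succ, h1t, smul_smul, ht]
        push_cast
        rw [div_mul_eq_mul_div, mul_inv_cancel₀ (ne_of_gt hNpos)]
        rw [smul_add]
        norm_num
      have hstep := hconv ((N : ℝ)⁻¹ • ∑ n ∈ Finset.range N, x n) (x N) t ht0 ht1
      rw [hcombo]
      refine le_trans hstep ?_
      have h1 : (t : EReal) * ψ ((N : ℝ)⁻¹ • ∑ n ∈ Finset.range N, x n)
          ≤ (t : EReal) * (((N : ℝ)⁻¹ * ∑ n ∈ Finset.range N, v n : ℝ) : EReal) :=
        mul_le_mul_of_nonneg_left ihN (by exact_mod_cast ht0)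
      rw [hv N]
      calc (t : EReal) * ψ ((N : ℝ)⁻¹ • ∑ n ∈ Finset.range N, x n)
            + ((1 - t : ℝ) : EReal) * ((v N : ℝ) : EReal)
          ≤ (t : EReal) * (((N : ℝ)⁻¹ * ∑ n ∈ Finset.range N, v n : ℝ) : EReal)
            + ((1 - t : ℝ) : EReal) * ((v N : ℝ) : EReal) := add_le_add_left h1 _
        _ = ((t * ((N : ℝ)⁻¹ * ∑ n ∈ Finset.range N, v n) + (1 - t) * v N : ℝ) : EReal) := by
            push_cast; ring
        _ = (((N + 1 : ℕ) : ℝ)⁻¹ * ∑ n ∈ Finset.range (N + 1), v n : EReal) := by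
            norm_cast
            rw [Finset.sum_range_succ, ht, h1t]
            push_cast
            field_simp

lemma rc_bound_aux {R C θ ε N : ℝ} (hθ : 0 < θ) (hε : 0 < ε)
    (h : 2 * R * C / (θ * ε) ≤ N) : R * C / (2 * θ) + R * C / (2 * θ) ≤ N * (ε / 2) := by
  rw [div_le_iff₀ (by positivity)] at h
  rw [← add_div, div_le_iff₀ (by positivity)]
  nlinarith

lemma div_bound_aux {x r s t : ℝ} (ht : 0 < t) (hs : 0 < s) (hr : 0 < r)
    (hx : 0 ≤ x) (hxr : x ≤ r) :
    x ^ 2 / (2 * (t * r / s)) ≤ r * s / (2 * t) := by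
  rw [div_le_div_iff₀ (by positivity) (by positivity)]
  have hx2 : x ^ 2 ≤ r ^ 2 := by nlinarith
  have hrw : r * s * (2 * (t * r / s)) = 2 * t * r ^ 2 := by field_simp
  rw [hrw]
  nlinarith

set_option maxHeartbeats 2000000


/-- **Abstract step-size selection rule for G-prox PDHG.**
Under the G-prox PDHG setup with p₀ = 0, if F̄ = inf F > −∞ and φ bounds the gap
inf{F(u) : ‖K(u−u₀)‖ ≤ R} − F̄ ≤ φ(R), then for every ε > 0, θ ∈ (0,1) and R > 0
with φ(R) ≤ ε/2, running with τ = θR/C, σ = θC/R for N ≥ 2RC/(θε) iterations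
yields F(u^N) − F̄ ≤ ε. -/
theorem gprox_pdhg_step_size_rule
    {H Z : Type*} [NormedAddCommGroup H] [InnerProductSpace ℝ H] [CompleteSpace H]
    [NormedAddCommGroup Z] [InnerProductSpace ℝ Z] [CompleteSpace Z]
    (K : H →L[ℝ] Z)
    (g : H → EReal) (fstar : Z → EReal)
    -- g and f* are proper
    (hg_ne_bot : ∀ u, g u ≠ ⊥) (hg_ne_top : ∃ u, g u ≠ ⊤)
    (hf_ne_bot : ∀ p, fstar p ≠ ⊥) (hf_ne_top : ∃ p, fstar p ≠ ⊤)
    -- g and f* are convex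
    (hg_conv : ∀ u v : H, ∀ t : ℝ, 0 ≤ t → t ≤ 1 →
      g (t • u + (1 - t) • v) ≤ (t : EReal) * g u + ((1 - t : ℝ) : EReal) * g v)
    (hf_conv : ∀ p q : Z, ∀ t : ℝ, 0 ≤ t → t ≤ 1 →
      fstar (t • p + (1 - t) • q) ≤ (t : EReal) * fstar p + ((1 - t : ℝ) : EReal) * fstar q)
    -- g and f* are lower semicontinuous
    (hg_lsc : LowerSemicontinuous g) (hf_lsc : LowerSemicontinuous fstar)
    -- Lagrangian and primal functional
    (L : H → Z → EReal)
    (hL : ∀ u p, L u p = ((inner ℝ (K u) p : ℝ) : EReal) + g u - fstar p)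
    (F : H → EReal) (hF : ∀ u, F u = ⨆ p : Z, L u p)
    -- G-prox setup: K is an isometry
    (hK_isom : ∀ u : H, ‖K u‖ = ‖u‖)
    -- the dual maximizers are uniformly bounded by C
    (C : ℝ) (hC : 0 < C)
    (hmax_bdd : ∀ u : H, ∃ pu : Z, ‖pu‖ ≤ C ∧
      IsMaxOn (fun p : Z => ((inner ℝ (K u) p : ℝ) : EReal) - fstar p) Set.univ pu)
    -- F̄ = inf F > −∞ and φ bounds the restricted gap
    (u0 : H) (Fbar : EReal) (hFbar : Fbar = ⨅ u : H, F u) (hFbar_ne_bot : Fbar ≠ ⊥)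
    (φ : ℝ → ℝ) (hφ_nonneg : ∀ R > (0 : ℝ), 0 ≤ φ R)
    (hφ : ∀ R > (0 : ℝ),
      (⨅ u ∈ {u : H | ‖K (u - u0)‖ ≤ R}, F u) - Fbar ≤ ((φ R : ℝ) : EReal))
    -- parameters: tolerance ε, θ ∈ (0,1), radius R with φ(R) ≤ ε/2, step sizes
    (ε θ R : ℝ) (hε : 0 < ε) (hθ0 : 0 < θ) (hθ1 : θ < 1) (hR : 0 < R)
    (hφR : φ R ≤ ε / 2)
    (τ σ : ℝ) (hτ : τ = θ * R / C) (hσ : σ = θ * C / R)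
    -- iterates of G-prox PDHG with initial dual point p₀ = 0
    (useq : ℕ → H) (pseq : ℕ → Z) (pbar : ℕ → Z)
    (hu_init : useq 0 = u0) (hp_init : pseq 0 = 0) (hpbar_init : pbar 0 = pseq 0)
    (hu_step : ∀ n : ℕ, IsMinOn
      (fun u : H => g u + ((inner ℝ (K u) (pbar n) : ℝ) : EReal)
        + ((‖u - useq n‖ ^ 2 / (2 * τ) : ℝ) : EReal)) Set.univ (useq (n + 1)))
    (hp_step : ∀ n : ℕ, IsMaxOn
      (fun p : Z => -fstar p + ((inner ℝ (K (useq (n + 1))) p : ℝ) : EReal)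
        - ((‖p - pseq n‖ ^ 2 / (2 * σ) : ℝ) : EReal)) Set.univ (pseq (n + 1)))
    (hpbar_step : ∀ n : ℕ, pbar (n + 1) = (2 : ℝ) • pseq (n + 1) - pseq n)
    -- ergodic averages
    (uavg : ℕ → H)
    (huavg : ∀ N : ℕ, uavg N = (N : ℝ)⁻¹ • ∑ n ∈ Finset.range N, useq (n + 1)) :
    ∀ N : ℕ, 2 * R * C / (θ * ε) ≤ (N : ℝ) →
      F (uavg N) - Fbar ≤ ((ε : ℝ) : EReal) := by
  intro N hNge
  have hτ0 : 0 < τ := by rw [hτ]; positivity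
  have hσ0 : 0 < σ := by rw [hσ]; positivity
  have hτσ : τ * σ ≤ 1 := by
    rw [hτ, hσ]
    rw [div_mul_div_comm, div_le_one (by positivity)]
    have hθθ : θ * θ ≤ 1 := by nlinarith
    nlinarith [mul_pos hR hC]
  have hN0 : 0 < (N : ℝ) := lt_of_lt_of_le (by positivity) hNge
  have hN1 : 1 ≤ N := by
    have : 0 < N := by exact_mod_cast hN0
    omega
  -- AM-GM with the isometry
  have am : ∀ (x : H) (q : Z), -(inner ℝ (K x) q : ℝ) ≤ ‖x‖ ^ 2 / (2 * τ) + ‖q‖ ^ 2 / (2 * σ) := by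
    intro x q
    have h1 : |(inner ℝ (K x) q : ℝ)| ≤ ‖K x‖ * ‖q‖ := abs_real_inner_le_norm _ _
    rw [hK_isom] at h1
    have h2 : -(inner ℝ (K x) q : ℝ) ≤ ‖x‖ * ‖q‖ := by
      have := neg_abs_le (inner ℝ (K x) q : ℝ); linarith
    have hA : τ * ‖q‖ ^ 2 / 2 ≤ ‖q‖ ^ 2 / (2 * σ) := by
      rw [div_le_div_iff₀ (by norm_num) (by positivity)]
      nlinarith [sq_nonneg ‖q‖]
    have hB : ‖x‖ * ‖q‖ ≤ ‖x‖ ^ 2 / (2 * τ) + τ * ‖q‖ ^ 2 / 2 := by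
      have h0 : 0 ≤ (‖x‖ - τ * ‖q‖) ^ 2 / (2 * τ) := by positivity
      have heq : (‖x‖ - τ * ‖q‖) ^ 2 / (2 * τ)
          = ‖x‖ ^ 2 / (2 * τ) + τ * ‖q‖ ^ 2 / 2 - ‖x‖ * ‖q‖ := by
        field_simp
        ring
      linarith [heq ▸ h0]
    linarith
  -- previous-index dual sequence
  set pm : ℕ → Z := fun n => pseq (n - 1) with hpm
  have hpm0 : pm 0 = pseq 0 := rfl
  have hpmS : ∀ n : ℕ, pm (n + 1) = pseq n := fun n => rfl
  have hpbar' : ∀ n : ℕ, pbar n = (2 : ℝ) • pseq n - pm n := by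
    intro n
    cases n with
    | zero =>
      rw [hpbar_init, hpm0, two_smul]
      abel
    | succ k => rw [hpbar_step k, hpmS]
  -- finiteness of values along iterates
  obtain ⟨ustar, hustar⟩ := hg_ne_top
  have hgustar : g ustar = (((g ustar).toReal : ℝ) : EReal) :=
    (EReal.coe_toReal hustar (hg_ne_bot _)).symm
  set gval : ℕ → ℝ := fun n => (g (useq (n + 1))).toReal with hgvaldef
  have hgval : ∀ n : ℕ, g (useq (n + 1)) = ((gval n : ℝ) : EReal) := by
    intro n
    refine (EReal.coe_toReal ?_ (hg_ne_bot _)).symm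
    intro htop
    have h1 := hu_step n (Set.mem_univ ustar)
    simp only [Set.mem_setOf_eq] at h1
    rw [htop, EReal.top_add_coe, EReal.top_add_coe] at h1
    have h2 := top_le_iff.mp h1
    rw [hgustar, ← EReal.coe_add, ← EReal.coe_add] at h2
    exact EReal.coe_ne_top _ h2
  obtain ⟨pstar, hpstar⟩ := hf_ne_top
  have hfpstar : fstar pstar = (((fstar pstar).toReal : ℝ) : EReal) :=
    (EReal.coe_toReal hpstar (hf_ne_bot _)).symm
  set fval : ℕ → ℝ := fun n => (fstar (pseq (n + 1))).toReal with hfvaldef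
  have hfval : ∀ n : ℕ, fstar (pseq (n + 1)) = ((fval n : ℝ) : EReal) := by
    intro n
    refine (EReal.coe_toReal ?_ (hf_ne_bot _)).symm
    intro htop
    have h1 := hp_step n (Set.mem_univ pstar)
    simp only [Set.mem_setOf_eq] at h1
    rw [htop, EReal.neg_top, EReal.bot_add, EReal.bot_sub] at h1
    have h2 := le_bot_iff.mp h1
    rw [hfpstar, ← EReal.coe_neg, ← EReal.coe_add, ← EReal.coe_sub] at h2
    exact EReal.coe_ne_bot _ h2
  -- prox inequalities
  have hu_prox : ∀ (n : ℕ) (z : H) (c : ℝ), g z = (c : EReal) →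
      gval n + (inner ℝ (K (useq (n + 1))) (pbar n) : ℝ)
        + ‖useq (n + 1) - useq n‖ ^ 2 / (2 * τ) + ‖z - useq (n + 1)‖ ^ 2 / (2 * τ)
      ≤ c + (inner ℝ (K z) (pbar n) : ℝ) + ‖z - useq n‖ ^ 2 / (2 * τ) := by
    intro n z c hz
    exact prox_ineq g hg_conv (fun w => (inner ℝ (K w) (pbar n) : ℝ))
      (by
        intro x y t
        simp [map_add, map_smul, inner_add_left, real_inner_smul_left])
      τ hτ0 (useq n) (useq (n + 1)) (hu_step n) (gval n) (hgval n) z c hz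
  have hp_min : ∀ n : ℕ, IsMinOn (fun q : Z => fstar q
      + ((-(inner ℝ (K (useq (n + 1))) q : ℝ) : ℝ) : EReal)
      + ((‖q - pseq n‖ ^ 2 / (2 * σ) : ℝ) : EReal)) Set.univ (pseq (n + 1)) := by
    intro n y hy
    have h1 := hp_step n (Set.mem_univ y)
    have h2 := EReal.neg_le_neg_iff.mpr h1
    simp only [Set.mem_setOf_eq] at h2 ⊢
    rw [ereal_neg_shape_s3, ereal_neg_shape_s3] at h2
    exact h2
  have hp_prox : ∀ (n : ℕ) (q : Z) (c : ℝ), fstar q = (c : EReal) →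
      fval n + (-(inner ℝ (K (useq (n + 1))) (pseq (n + 1)) : ℝ))
        + ‖pseq (n + 1) - pseq n‖ ^ 2 / (2 * σ) + ‖q - pseq (n + 1)‖ ^ 2 / (2 * σ)
      ≤ c + (-(inner ℝ (K (useq (n + 1))) q : ℝ)) + ‖q - pseq n‖ ^ 2 / (2 * σ) := by
    intro n q c hq
    exact prox_ineq fstar hf_conv (fun w => -(inner ℝ (K (useq (n + 1))) w : ℝ))
      (by
        intro x y t
        simp [inner_add_right, real_inner_smul_right]
        ring)
      σ hσ0 (pseq n) (pseq (n + 1)) (hp_min n) (fval n) (hfval n) q c hq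
  -- the summed Lagrangian gap bound
  have main_bound : ∀ (u : H) (a : ℝ), g u = (a : EReal) → ∀ (p : Z) (b : ℝ),
      fstar p = (b : EReal) →
      ∑ n ∈ Finset.range N,
        (((inner ℝ (K (useq (n + 1))) p : ℝ) + gval n - b)
          - ((inner ℝ (K u) (pseq (n + 1)) : ℝ) + a - fval n))
        ≤ ‖u - u0‖ ^ 2 / (2 * τ) + ‖p‖ ^ 2 / (2 * σ) := by
    intro u a ha p b hb
    set E : ℕ → ℝ := fun k => (inner ℝ (K (useq k) - K u) (pseq k - pm k) : ℝ)
      - ‖u - useq k‖ ^ 2 / (2 * τ) - ‖p - pseq k‖ ^ 2 / (2 * σ)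
      - ‖pseq k - pm k‖ ^ 2 / (2 * σ) with hE
    have key : ∀ n : ℕ,
        ((inner ℝ (K (useq (n + 1))) p : ℝ) + gval n - b)
          - ((inner ℝ (K u) (pseq (n + 1)) : ℝ) + a - fval n) ≤ E (n + 1) - E n := by
      intro n
      have I := hu_prox n u a ha
      rw [hpbar' n] at I
      have II := hp_prox n p b hb
      have am1 := am (useq (n + 1) - useq n) (pseq n - pm n)
      simp only [hE, hpmS, map_sub, inner_sub_left, inner_sub_right, inner_smul_right,
        real_inner_smul_right] at I am1 ⊢
      simp only [div_eq_mul_inv] at I II am1 ⊢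
      linarith [I, II, am1]
    have hsum : ∑ n ∈ Finset.range N,
        (((inner ℝ (K (useq (n + 1))) p : ℝ) + gval n - b)
          - ((inner ℝ (K u) (pseq (n + 1)) : ℝ) + a - fval n)) ≤ E N - E 0 := by
      rw [← Finset.sum_range_sub E]
      exact Finset.sum_le_sum fun n _ => key n
    have hEN : E N ≤ 0 := by
      have am2 := am (u - useq N) (pseq N - pm N)
      have hdP : 0 ≤ ‖p - pseq N‖ ^ 2 / (2 * σ) := by positivity
      simp only [hE, map_sub, inner_sub_left, inner_sub_right] at am2 ⊢
      linarith [am2]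
    have hE0 : E 0 = -(‖u - u0‖ ^ 2 / (2 * τ)) - ‖p‖ ^ 2 / (2 * σ) := by
      simp only [hE, hpm0, hu_init, hp_init, sub_self, inner_zero_right, sub_zero,
        norm_zero]
      ring_nf
    rw [hE0] at hsum
    refine le_trans hsum ?_
    have hrw : E N - (-(‖u - u0‖ ^ 2 / (2 * τ)) - ‖p‖ ^ 2 / (2 * σ))
        = E N + (‖u - u0‖ ^ 2 / (2 * τ) + ‖p‖ ^ 2 / (2 * σ)) := by ring
    rw [hrw]
    calc E N + (‖u - u0‖ ^ 2 / (2 * τ) + ‖p‖ ^ 2 / (2 * σ))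
        ≤ 0 + (‖u - u0‖ ^ 2 / (2 * τ) + ‖p‖ ^ 2 / (2 * σ)) := add_le_add_left hEN _
      _ = ‖u - u0‖ ^ 2 / (2 * τ) + ‖p‖ ^ 2 / (2 * σ) := zero_add _
  -- dual maximizer at the ergodic average
  obtain ⟨phat, hphatC, hphatmax⟩ := hmax_bdd (uavg N)
  have hbtop : fstar phat ≠ ⊤ := by
    intro htop
    have h1 := hphatmax (Set.mem_univ pstar)
    simp only [Set.mem_setOf_eq] at h1
    rw [htop, EReal.sub_top] at h1
    have h2 := le_bot_iff.mp h1
    rw [hfpstar, ← EReal.coe_sub] at h2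
    exact EReal.coe_ne_bot _ h2
  have hb : fstar phat = (((fstar phat).toReal : ℝ) : EReal) :=
    (EReal.coe_toReal hbtop (hf_ne_bot _)).symm
  set b : ℝ := (fstar phat).toReal with hbdef
  -- Jensen for g at the ergodic average
  have jensen_g : g (uavg N) ≤ (((N : ℝ)⁻¹ * ∑ n ∈ Finset.range N, gval n : ℝ) : EReal) := by
    rw [huavg N]
    exact ereal_jensen_s3 g hg_conv (fun n => useq (n + 1)) gval hgval N hN1
  -- upper bound for F (uavg N)
  have hFuavg : F (uavg N) ≤ (((inner ℝ (K (uavg N)) phat : ℝ)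
      + ((N : ℝ)⁻¹ * ∑ n ∈ Finset.range N, gval n) - b : ℝ) : EReal) := by
    rw [hF]
    refine iSup_le fun q => ?_
    rw [hL]
    have h1 := hphatmax (Set.mem_univ q)
    simp only [Set.mem_setOf_eq] at h1
    rw [hb] at h1
    rw [← EReal.coe_sub] at h1
    calc ((inner ℝ (K (uavg N)) q : ℝ) : EReal) + g (uavg N) - fstar q
        = g (uavg N) + (((inner ℝ (K (uavg N)) q : ℝ) : EReal) - fstar q) := ereal_rearr _ _ _
      _ ≤ g (uavg N) + (((inner ℝ (K (uavg N)) phat : ℝ) - b : ℝ) : EReal) :=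
          add_le_add_right h1 _
      _ ≤ (((N : ℝ)⁻¹ * ∑ n ∈ Finset.range N, gval n : ℝ) : EReal)
          + (((inner ℝ (K (uavg N)) phat : ℝ) - b : ℝ) : EReal) := add_le_add_left jensen_g _
      _ = (((inner ℝ (K (uavg N)) phat : ℝ)
          + ((N : ℝ)⁻¹ * ∑ n ∈ Finset.range N, gval n) - b : ℝ) : EReal) := by
          rw [← EReal.coe_add]
          norm_cast
          ring
  -- it suffices to prove the bound with arbitrary slack
  suffices hsuff : ∀ δ : ℝ, 0 < δ → F (uavg N) - Fbar ≤ ((ε + δ : ℝ) : EReal) by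
    by_cases hbotx : F (uavg N) - Fbar = ⊥
    · rw [hbotx]; exact bot_le
    have h1 := hsuff 1 one_pos
    have hntop : F (uavg N) - Fbar ≠ ⊤ := by
      intro htop
      rw [htop] at h1
      exact (EReal.coe_ne_top _) (top_le_iff.mp h1)
    have hxre : F (uavg N) - Fbar = (((F (uavg N) - Fbar).toReal : ℝ) : EReal) :=
      (EReal.coe_toReal hntop hbotx).symm
    rw [hxre]
    rw [EReal.coe_le_coe_iff]
    refine le_of_forall_pos_le_add fun δ hδ => ?_
    have h2 := hsuff δ hδ
    rw [hxre, EReal.coe_le_coe_iff] at h2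
    linarith
  intro δ hδ
  by_cases htopF : Fbar = ⊤
  · rw [htopF, EReal.sub_top]; exact bot_le
  have hfb : Fbar = ((Fbar.toReal : ℝ) : EReal) := (EReal.coe_toReal htopF hFbar_ne_bot).symm
  set fb : ℝ := Fbar.toReal with hfbdef
  -- extract a good test point u
  have h2 : (⨅ u ∈ {u : H | ‖K (u - u0)‖ ≤ R}, F u) ≤ ((φ R : ℝ) : EReal) + Fbar :=
    (EReal.sub_le_iff_le_add (Or.inl hFbar_ne_bot) (Or.inr (EReal.coe_ne_bot _))).mp (hφ R hR)
  have h3 : (⨅ u ∈ {u : H | ‖K (u - u0)‖ ≤ R}, F u) < ((φ R + fb + δ : ℝ) : EReal) := by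
    refine lt_of_le_of_lt h2 ?_
    rw [hfb, ← EReal.coe_add]
    exact_mod_cast (by linarith : φ R + fb < φ R + fb + δ)
  rw [iInf_lt_iff] at h3
  obtain ⟨u, hu3⟩ := h3
  rw [iInf_lt_iff] at hu3
  obtain ⟨huS, huF⟩ := hu3
  -- g u is real
  have hgu_ne_top : g u ≠ ⊤ := by
    intro htop
    have hFtop : (⊤ : EReal) ≤ F u := by
      rw [hF]
      refine le_trans ?_ (le_iSup _ pstar)
      rw [hL, htop, hfpstar]
      rw [EReal.coe_add_top, EReal.top_sub_coe]
    rw [top_le_iff.mp hFtop] at huF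
    exact (not_top_lt) huF
  have hgu : g u = (((g u).toReal : ℝ) : EReal) :=
    (EReal.coe_toReal hgu_ne_top (hg_ne_bot _)).symm
  set a : ℝ := (g u).toReal with hadef
  -- dual ergodic average
  set pavg : Z := (N : ℝ)⁻¹ • ∑ n ∈ Finset.range N, pseq (n + 1) with hpavg
  have jensen_f : fstar pavg ≤ (((N : ℝ)⁻¹ * ∑ n ∈ Finset.range N, fval n : ℝ) : EReal) :=
    ereal_jensen_s3 fstar hf_conv (fun n => pseq (n + 1)) fval hfval N hN1
  -- lower bound for F u
  have hFu_lb : (((inner ℝ (K u) pavg : ℝ) + a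
      - ((N : ℝ)⁻¹ * ∑ n ∈ Finset.range N, fval n) : ℝ) : EReal) ≤ F u := by
    rw [hF]
    refine le_trans ?_ (le_iSup _ pavg)
    rw [hL]
    calc (((inner ℝ (K u) pavg : ℝ) + a
          - ((N : ℝ)⁻¹ * ∑ n ∈ Finset.range N, fval n) : ℝ) : EReal)
        = (((inner ℝ (K u) pavg : ℝ) + a : ℝ) : EReal)
          - (((N : ℝ)⁻¹ * ∑ n ∈ Finset.range N, fval n : ℝ) : EReal) := by
          rw [← EReal.coe_sub]
      _ ≤ (((inner ℝ (K u) pavg : ℝ) + a : ℝ) : EReal) - fstar pavg :=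
          EReal.sub_le_sub le_rfl jensen_f
      _ = ((inner ℝ (K u) pavg : ℝ) : EReal) + g u - fstar pavg := by
          rw [hgu, ← EReal.coe_add]
  have hXa : (inner ℝ (K u) pavg : ℝ) + a
      - ((N : ℝ)⁻¹ * ∑ n ∈ Finset.range N, fval n) < φ R + fb + δ := by
    have := lt_of_le_of_lt hFu_lb huF
    exact_mod_cast this
  -- inner product averages
  have hKuavg : (inner ℝ (K (uavg N)) phat : ℝ)
      = (N : ℝ)⁻¹ * ∑ n ∈ Finset.range N, (inner ℝ (K (useq (n + 1))) phat : ℝ) := by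
    rw [huavg N]
    rw [map_smul, map_sum]
    rw [inner_smul_left, sum_inner]
    simp
  have hKpavg : (inner ℝ (K u) pavg : ℝ)
      = (N : ℝ)⁻¹ * ∑ n ∈ Finset.range N, (inner ℝ (K u) (pseq (n + 1)) : ℝ) := by
    rw [hpavg, inner_smul_right, inner_sum]
  -- instantiate the main bound
  have MB := main_bound u a hgu phat b hb
  -- step-size arithmetic
  have huu0 : ‖u - u0‖ ≤ R := by
    have := huS
    simp only [Set.mem_setOf_eq] at this
    rwa [hK_isom] at this
  have hD : ‖u - u0‖ ^ 2 / (2 * τ) + ‖phat‖ ^ 2 / (2 * σ) ≤ (N : ℝ) * (ε / 2) := by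
    have hD1 : ‖u - u0‖ ^ 2 / (2 * τ) ≤ R * C / (2 * θ) := by
      rw [hτ]
      exact div_bound_aux hθ0 hC hR (norm_nonneg _) huu0
    have hD2 : ‖phat‖ ^ 2 / (2 * σ) ≤ R * C / (2 * θ) := by
      rw [hσ]
      have := div_bound_aux hθ0 hR hC (norm_nonneg phat) hphatC
      rw [mul_comm C R] at this
      exact this
    have hRC : R * C / (2 * θ) + R * C / (2 * θ) ≤ (N : ℝ) * (ε / 2) :=
      rc_bound_aux hθ0 hε hNge
    linarith
  -- combine everything in ℝ
  have hsplit : ∑ n ∈ Finset.range N,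
      (((inner ℝ (K (useq (n + 1))) phat : ℝ) + gval n - b)
        - ((inner ℝ (K u) (pseq (n + 1)) : ℝ) + a - fval n))
      = (∑ n ∈ Finset.range N, (inner ℝ (K (useq (n + 1))) phat : ℝ))
        + (∑ n ∈ Finset.range N, gval n) - (N : ℝ) * b
        - (∑ n ∈ Finset.range N, (inner ℝ (K u) (pseq (n + 1)) : ℝ))
        - (N : ℝ) * a + (∑ n ∈ Finset.range N, fval n) := by
    simp only [Finset.sum_sub_distrib, Finset.sum_add_distrib, Finset.sum_const,
      Finset.card_range, nsmul_eq_mul]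
    ring
  rw [hsplit] at MB
  have hfinal : (inner ℝ (K (uavg N)) phat : ℝ)
      + ((N : ℝ)⁻¹ * ∑ n ∈ Finset.range N, gval n) - b - fb ≤ ε + δ := by
    have hdiv := mul_le_mul_of_nonneg_left MB (by positivity : (0:ℝ) ≤ (N : ℝ)⁻¹)
    have hinv : (N : ℝ)⁻¹ * (N : ℝ) = 1 := inv_mul_cancel₀ (ne_of_gt hN0)
    have hDN : (N : ℝ)⁻¹ * ((N : ℝ) * (ε / 2)) = ε / 2 := by
      rw [← mul_assoc, hinv, one_mul]
    have hdiv2 : (inner ℝ (K (uavg N)) phat : ℝ)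
        + ((N : ℝ)⁻¹ * ∑ n ∈ Finset.range N, gval n) - b
        - ((inner ℝ (K u) pavg : ℝ) + a - ((N : ℝ)⁻¹ * ∑ n ∈ Finset.range N, fval n))
        ≤ ε / 2 := by
      rw [hKuavg, hKpavg]
      have h5 := le_trans hdiv (by
        calc (N : ℝ)⁻¹ * (‖u - u0‖ ^ 2 / (2 * τ) + ‖phat‖ ^ 2 / (2 * σ))
            ≤ (N : ℝ)⁻¹ * ((N : ℝ) * (ε / 2)) :=
              mul_le_mul_of_nonneg_left hD (by positivity)
          _ = ε / 2 := hDN)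
      have hb' : (N : ℝ)⁻¹ * ((N : ℝ) * b) = b := by rw [← mul_assoc, hinv, one_mul]
      have ha' : (N : ℝ)⁻¹ * ((N : ℝ) * a) = a := by rw [← mul_assoc, hinv, one_mul]
      linarith [h5, hb', ha']
    linarith [hXa, hφR, hdiv2]
  -- back to EReal
  calc F (uavg N) - Fbar
      ≤ (((inner ℝ (K (uavg N)) phat : ℝ)
        + ((N : ℝ)⁻¹ * ∑ n ∈ Finset.range N, gval n) - b : ℝ) : EReal) - Fbar :=
        EReal.sub_le_sub hFuavg le_rfl
    _ = (((inner ℝ (K (uavg N)) phat : ℝ)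
        + ((N : ℝ)⁻¹ * ∑ n ∈ Finset.range N, gval n) - b - fb : ℝ) : EReal) := by
        rw [hfb, ← EReal.coe_sub]
    _ ≤ ((ε + δ : ℝ) : EReal) := by exact_mod_cast hfinal
end

section
/- Let d ≥ 1, let x₀, x₁ ∈ ℝ^d, set v = x₁ − x₀, and let δ > 0. Define f_δ : ℝ^d → ℝ^d by f_δ(x) = ∫_0^1 v · G_δ(x − x₀ − t v) dt. Then ∫_{ℝ^d} |f_δ(x)|² dx ≤ 2^{(1−d)/2} δ^{1−d} |v|. -/
open MeasureTheory Real Set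
open scoped ENNReal

private lemma gauss_int' (d : ℕ) (b : ℝ) (hb : 0 < b) :
    ∫ v : EuclideanSpace ℝ (Fin d), rexp (-(b * ‖v‖^2)) = (π / b) ^ ((d:ℝ) / 2) := by
  simp_rw [← neg_mul b]
  rw [GaussianFourier.integral_rexp_neg_mul_sq_norm hb]
  simp

private lemma gauss_integrable' (d : ℕ) (b : ℝ) (hb : 0 < b) :
    Integrable (fun x : EuclideanSpace ℝ (Fin d) => rexp (-(b * ‖x‖^2))) := by
  have h := (GaussianFourier.integrable_cexp_neg_mul_sq_norm_add (V := EuclideanSpace ℝ (Fin d))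
    (b := (b:ℂ)) (by simpa using hb) 0 0).norm
  simp only [Complex.norm_exp] at h
  refine h.congr (Filter.Eventually.of_forall fun x => ?_)
  norm_num; ring_nf; norm_cast; exact Or.inl rfl

set_option maxHeartbeats 1000000 in
/-- **L² bound for the mollified transport flux between two delta measures
(second appendix lemma, delta-measure case).** With v = x₁ − x₀ and
f_δ(x) = ∫₀¹ v G_δ(x − x₀ − t v) dt, one has ∫ |f_δ|² ≤ 2^{(1−d)/2} δ^{1−d} |v|. -/
theorem delta_flux_L2_bound
    (d : ℕ) (hd : 1 ≤ d) (x₀ x₁ : EuclideanSpace ℝ (Fin d))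
    (v : EuclideanSpace ℝ (Fin d)) (hv : v = x₁ - x₀)
    (δ : ℝ) (hδ : 0 < δ)
    (fδ : EuclideanSpace ℝ (Fin d) → EuclideanSpace ℝ (Fin d))
    (hfδ : ∀ x, fδ x =
      (∫ t in (0 : ℝ)..1,
        δ ^ (-(d : ℤ)) * Real.exp (-(π * ‖x - x₀ - t • v‖ ^ 2 / δ ^ 2))) • v) :
    ∫ x : EuclideanSpace ℝ (Fin d), ‖fδ x‖ ^ 2
      ≤ (2 : ℝ) ^ (((1 : ℝ) - d) / 2) * δ ^ ((1 : ℝ) - d) * ‖v‖ := by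
  rcases eq_or_ne v 0 with hv0 | hv0
  · have hz : ∀ x, ‖fδ x‖ ^ 2 = (0:ℝ) := fun x => by
      rw [hfδ x, hv0, smul_zero]; simp
    simp_rw [hz]
    rw [integral_zero, hv0]
    simp only [norm_zero, mul_zero]
    exact le_refl 0
  · have hvpos : (0:ℝ) < ‖v‖ := norm_pos_iff.mpr hv0
    set A : ℝ := δ ^ (-(d : ℤ)) with hA_def
    have hApos : 0 < A := by positivity
    set c : ℝ := π * ‖v‖^2 / (2 * δ^2) with hc_def
    have hcpos : 0 < c := by positivity
    set g : (EuclideanSpace ℝ (Fin d)) → ℝ := fun z => δ ^ (-(d : ℤ)) * rexp (-(π * ‖z‖ ^ 2 / δ ^ 2)) with hg_def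
    have hg0 : ∀ z, 0 ≤ g z := fun z => by positivity
    have hgle : ∀ z, g z ≤ A := by
      intro z
      have : rexp (-(π * ‖z‖ ^ 2 / δ ^ 2)) ≤ 1 := Real.exp_le_one_iff.mpr (neg_nonpos.mpr (by positivity))
      calc g z ≤ A * 1 := by
            rw [hg_def]; exact mul_le_mul_of_nonneg_left this hApos.le
        _ = A := mul_one A
    have hgc : Continuous g := by fun_prop
    set GG : ℝ → (EuclideanSpace ℝ (Fin d)) → ℝ≥0∞ := fun t x => ENNReal.ofReal (g (x - x₀ - t • v)) with hGG_def
    have hcont2 : Continuous fun p : ℝ × (EuclideanSpace ℝ (Fin d)) => g (p.2 - x₀ - p.1 • v) := by fun_prop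
    have hGGm : Measurable fun p : ℝ × (EuclideanSpace ℝ (Fin d)) => GG p.1 p.2 :=
      (ENNReal.continuous_ofReal.comp hcont2).measurable
    have hcont2' : Continuous fun p : (EuclideanSpace ℝ (Fin d)) × ℝ => g (p.1 - x₀ - p.2 • v) := by fun_prop
    have hGGm' : Measurable fun p : (EuclideanSpace ℝ (Fin d)) × ℝ => GG p.2 p.1 :=
      (ENNReal.continuous_ofReal.comp hcont2').measurable
    have hgm1 : ∀ x, Measurable fun t => GG t x := fun x =>
      (ENNReal.continuous_ofReal.comp
        (show Continuous fun t : ℝ => g (x - x₀ - t • v) by fun_prop)).measurable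
    have hgm2 : ∀ t, Measurable fun x => GG t x := fun t =>
      (ENNReal.continuous_ofReal.comp
        (show Continuous fun x : EuclideanSpace ℝ (Fin d) => g (x - x₀ - t • v) by
          fun_prop)).measurable
    set I : Set ℝ := Set.Ioc (0:ℝ) 1 with hI_def
    set L : (EuclideanSpace ℝ (Fin d)) → ℝ≥0∞ := fun x => ∫⁻ t in I, GG t x with hL_def
    have hLtop : ∀ x, L x ≠ ⊤ := by
      intro x
      have h1 : L x ≤ ∫⁻ _t in I, ENNReal.ofReal A := by
        exact lintegral_mono fun t => ENNReal.ofReal_le_ofReal (hgle _)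
      have h2 : ∫⁻ _t in I, ENNReal.ofReal A = ENNReal.ofReal A * volume I :=
        setLIntegral_const I _
      refine ne_top_of_le_ne_top ?_ h1
      rw [h2, hI_def, Real.volume_Ioc]
      exact ENNReal.mul_ne_top ENNReal.ofReal_ne_top ENNReal.ofReal_ne_top
    have hLmeas : Measurable L := by
      exact Measurable.lintegral_prod_right' (ν := volume.restrict I) hGGm'
    set F : (EuclideanSpace ℝ (Fin d)) → ℝ := fun x => ∫ t in (0:ℝ)..1, g (x - x₀ - t • v) with hF_def
    have hFeq : ∀ x, F x = (L x).toReal := by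
      intro x
      rw [hF_def]
      simp only
      rw [intervalIntegral.integral_of_le zero_le_one,
        integral_eq_lintegral_of_nonneg_ae (Filter.Eventually.of_forall fun t => hg0 _)
          ((hgc.comp (by fun_prop)).aestronglyMeasurable)]
    have hFm : Measurable F := by
      have : F = fun x => (L x).toReal := funext hFeq
      rw [this]; exact hLmeas.ennreal_toReal
    have hF2 : ∀ x, ENNReal.ofReal (F x ^ 2) = L x * L x := by
      intro x
      rw [hFeq, sq, ← ENNReal.toReal_mul,
        ENNReal.ofReal_toReal (ENNReal.mul_ne_top (hLtop x) (hLtop x))]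
    -- step 1
    have step1 : ∫ x : (EuclideanSpace ℝ (Fin d)), ‖fδ x‖ ^ 2 = (∫ x : (EuclideanSpace ℝ (Fin d)), F x ^ 2) * ‖v‖^2 := by
      have h : ∀ x, ‖fδ x‖ ^ 2 = F x ^ 2 * ‖v‖ ^ 2 := by
        intro x
        rw [hfδ x, norm_smul, mul_pow, Real.norm_eq_abs, sq_abs]
      simp_rw [h]
      exact integral_mul_const _ _
    -- step 2
    have step2 : ∫ x : (EuclideanSpace ℝ (Fin d)), F x ^ 2 = (∫⁻ x : (EuclideanSpace ℝ (Fin d)), L x * L x).toReal := by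
      rw [integral_eq_lintegral_of_nonneg_ae
        (Filter.Eventually.of_forall fun x => sq_nonneg _)
        ((hFm.pow_const 2).aestronglyMeasurable)]
      congr 1
      exact lintegral_congr fun x => hF2 x
    -- step 3 : Tonelli
    have step3 : ∫⁻ x : (EuclideanSpace ℝ (Fin d)), L x * L x
        = ∫⁻ t in I, ∫⁻ s in I, ∫⁻ x : (EuclideanSpace ℝ (Fin d)), GG t x * GG s x := by
      calc ∫⁻ x : (EuclideanSpace ℝ (Fin d)), L x * L x
          = ∫⁻ x : (EuclideanSpace ℝ (Fin d)), ∫⁻ t in I, GG t x * L x := by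
            refine lintegral_congr fun x => ?_
            rw [lintegral_mul_const _ (hgm1 x)]
        _ = ∫⁻ t in I, ∫⁻ x : (EuclideanSpace ℝ (Fin d)), GG t x * L x := by
            refine lintegral_lintegral_swap ?_
            exact (hGGm'.mul (hLmeas.comp measurable_fst)).aemeasurable
        _ = ∫⁻ t in I, ∫⁻ s in I, ∫⁻ x : (EuclideanSpace ℝ (Fin d)), GG t x * GG s x := by
            refine lintegral_congr fun t => ?_
            calc ∫⁻ x : (EuclideanSpace ℝ (Fin d)), GG t x * L x
                = ∫⁻ x : (EuclideanSpace ℝ (Fin d)), ∫⁻ s in I, GG t x * GG s x := by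
                  refine lintegral_congr fun x => ?_
                  rw [lintegral_const_mul _ (hgm1 x)]
              _ = ∫⁻ s in I, ∫⁻ x : (EuclideanSpace ℝ (Fin d)), GG t x * GG s x := by
                  refine lintegral_lintegral_swap ?_
                  exact (((hgm2 t).comp measurable_fst).mul hGGm').aemeasurable
    -- step 4 : inner Gaussian integral
    set K : ℝ := A * A * (δ^2/2) ^ ((d:ℝ)/2) with hK_def
    have hKpos : 0 < K := by positivity
    have hinner : ∀ t s : ℝ, ∫⁻ x : (EuclideanSpace ℝ (Fin d)), GG t x * GG s x
        = ENNReal.ofReal (K * rexp (-(c * (t - s)^2))) := by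
      intro t s
      set w : (EuclideanSpace ℝ (Fin d)) := x₀ + ((t + s)/2) • v with hw_def
      have hpt : ∀ x : (EuclideanSpace ℝ (Fin d)), g (x - x₀ - t • v) * g (x - x₀ - s • v)
          = (A * A * rexp (-(c * (t-s)^2))) * rexp (-(2 * (π/δ^2) * ‖x - w‖^2)) := by
        intro x
        have h1 : x - x₀ - t • v = (x - w) - ((t - s)/2) • v := by
          rw [hw_def]; module
        have h2 : x - x₀ - s • v = (x - w) + ((t - s)/2) • v := by
          rw [hw_def]; module
        have hpar : ‖(x - w) - ((t-s)/2) • v‖^2 + ‖(x - w) + ((t-s)/2) • v‖^2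
            = 2*‖x - w‖^2 + 2*(((t-s)/2)^2 * ‖v‖^2) := by
          rw [norm_sub_sq_real, norm_add_sq_real, norm_smul, Real.norm_eq_abs,
            mul_pow, sq_abs]
          ring
        have hExp : -(π * ‖(x - w) - ((t - s)/2) • v‖ ^ 2 / δ ^ 2)
              + -(π * ‖(x - w) + ((t - s)/2) • v‖ ^ 2 / δ ^ 2)
            = -(c * (t - s)^2) + -(2 * (π/δ^2) * ‖x - w‖^2) := by
          rw [hc_def]
          linear_combination (-(π/δ^2)) * hpar
        rw [h1, h2, hA_def]
        simp only [hg_def]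
        rw [mul_mul_mul_comm, ← Real.exp_add, hExp, Real.exp_add]
        ring
      calc ∫⁻ x : (EuclideanSpace ℝ (Fin d)), GG t x * GG s x
          = ∫⁻ x : (EuclideanSpace ℝ (Fin d)), ENNReal.ofReal
              ((A * A * rexp (-(c * (t-s)^2))) * rexp (-(2 * (π/δ^2) * ‖x - w‖^2))) := by
            refine lintegral_congr fun x => ?_
            rw [hGG_def]
            simp only
            rw [← ENNReal.ofReal_mul (hg0 _)]
            exact congrArg _ (hpt x)
        _ = ENNReal.ofReal (∫ x : (EuclideanSpace ℝ (Fin d)),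
              (A * A * rexp (-(c * (t-s)^2))) * rexp (-(2 * (π/δ^2) * ‖x - w‖^2))) := by
            rw [ofReal_integral_eq_lintegral_ofReal]
            · exact (((gauss_integrable' d _ (by positivity)).comp_sub_right w).const_mul _)
            · exact Filter.Eventually.of_forall fun x => by positivity
        _ = ENNReal.ofReal (K * rexp (-(c * (t - s)^2))) := by
            rw [integral_const_mul,
              integral_sub_right_eq_self (fun z : (EuclideanSpace ℝ (Fin d)) => rexp (-(2 * (π/δ^2) * ‖z‖^2))) w,
              gauss_int' d _ (by positivity)]
            have hpi : π / (2 * (π/δ^2)) = δ^2/2 := by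
              field_simp
            rw [hpi, hK_def]
            ring
    -- step 5 : outer bound
    have hgauss1 : ∀ t : ℝ, ∫⁻ s : ℝ, ENNReal.ofReal (rexp (-(c * (t - s)^2)))
        = ENNReal.ofReal (Real.sqrt (π/c)) := by
      intro t
      rw [← ofReal_integral_eq_lintegral_ofReal]
      · congr 1
        have hsw : ∀ s : ℝ, (t - s)^2 = (s - t)^2 := fun s => by ring
        simp_rw [hsw]
        rw [integral_sub_right_eq_self (fun s : ℝ => rexp (-(c * s^2))) t]
        simp_rw [← neg_mul]
        exact integral_gaussian c
      · have h := (integrable_exp_neg_mul_sq hcpos).comp_sub_right t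
        refine h.congr (Filter.Eventually.of_forall fun s => ?_)
        simp only
        rw [neg_mul]
        congr 2
        ring
      · exact Filter.Eventually.of_forall fun s => (Real.exp_pos _).le
    have hmeasexp : ∀ t : ℝ, Measurable fun s : ℝ =>
        ENNReal.ofReal (rexp (-(c * (t - s)^2))) := by
      intro t
      have : Continuous fun s : ℝ => rexp (-(c * (t - s)^2)) := by fun_prop
      exact (ENNReal.continuous_ofReal.comp this).measurable
    have hbound : ∫⁻ t in I, ∫⁻ s in I, ENNReal.ofReal (K * rexp (-(c*(t-s)^2)))
        ≤ ENNReal.ofReal (K * Real.sqrt (π/c)) := by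
      have hstep : ∀ t : ℝ, ∫⁻ s in I, ENNReal.ofReal (K * rexp (-(c*(t-s)^2)))
          ≤ ENNReal.ofReal K * ENNReal.ofReal (Real.sqrt (π/c)) := by
        intro t
        calc ∫⁻ s in I, ENNReal.ofReal (K * rexp (-(c*(t-s)^2)))
            = ENNReal.ofReal K * ∫⁻ s in I, ENNReal.ofReal (rexp (-(c*(t-s)^2))) := by
              simp_rw [ENNReal.ofReal_mul hKpos.le]
              rw [lintegral_const_mul _ (hmeasexp t)]
          _ ≤ ENNReal.ofReal K * ∫⁻ s : ℝ, ENNReal.ofReal (rexp (-(c*(t-s)^2))) := by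
              gcongr
              exact Measure.restrict_le_self
          _ = ENNReal.ofReal K * ENNReal.ofReal (Real.sqrt (π/c)) := by rw [hgauss1 t]
      calc ∫⁻ t in I, ∫⁻ s in I, ENNReal.ofReal (K * rexp (-(c*(t-s)^2)))
          ≤ ∫⁻ _t in I, ENNReal.ofReal K * ENNReal.ofReal (Real.sqrt (π/c)) :=
            lintegral_mono fun t => hstep t
        _ = ENNReal.ofReal K * ENNReal.ofReal (Real.sqrt (π/c)) * volume I :=
            setLIntegral_const I _
        _ = ENNReal.ofReal (K * Real.sqrt (π/c)) := by
            rw [hI_def, Real.volume_Ioc, ENNReal.ofReal_mul hKpos.le]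
            norm_num
    -- combine
    have hLL : ∫⁻ x : (EuclideanSpace ℝ (Fin d)), L x * L x ≤ ENNReal.ofReal (K * Real.sqrt (π/c)) := by
      rw [step3]
      calc ∫⁻ t in I, ∫⁻ s in I, ∫⁻ x : (EuclideanSpace ℝ (Fin d)), GG t x * GG s x
          = ∫⁻ t in I, ∫⁻ s in I, ENNReal.ofReal (K * rexp (-(c*(t-s)^2))) := by
            exact lintegral_congr fun t => lintegral_congr fun s => hinner t s
        _ ≤ ENNReal.ofReal (K * Real.sqrt (π/c)) := hbound
    have hmain : ∫ x : (EuclideanSpace ℝ (Fin d)), ‖fδ x‖ ^ 2 ≤ K * Real.sqrt (π/c) * ‖v‖^2 := by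
      rw [step1, step2]
      have h1 : (∫⁻ x : (EuclideanSpace ℝ (Fin d)), L x * L x).toReal ≤ K * Real.sqrt (π/c) :=
        ENNReal.toReal_le_of_le_ofReal (by positivity) hLL
      have h2 : (0:ℝ) ≤ ‖v‖^2 := sq_nonneg _
      nlinarith [h1, h2]
    refine hmain.trans_eq ?_
    -- final algebra
    have hsqrt : Real.sqrt (π/c) = Real.sqrt 2 * δ / ‖v‖ := by
      rw [hc_def]
      have h1 : π / (π * ‖v‖^2 / (2 * δ^2)) = 2 * δ^2 / ‖v‖^2 := by
        field_simp
      rw [h1]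
      rw [show (2 * δ^2 / ‖v‖^2 : ℝ) = (Real.sqrt 2 * δ / ‖v‖)^2 by
        rw [div_pow, mul_pow, Real.sq_sqrt (by norm_num : (0:ℝ) ≤ 2)]]
      exact Real.sqrt_sq (by positivity)
    rw [hsqrt, hK_def, hA_def]
    have hzpow : (δ : ℝ) ^ (-(d : ℤ)) = δ ^ (-(d : ℝ)) := by
      rw [← Real.rpow_intCast δ (-(d:ℤ))]
      norm_num
    have hhalf : ((δ:ℝ)^2/2) ^ ((d:ℝ)/2) = δ ^ (d:ℝ) / 2 ^ ((d:ℝ)/2) := by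
      rw [Real.div_rpow (by positivity) (by norm_num)]
      congr 1
      rw [← Real.rpow_natCast δ 2, ← Real.rpow_mul hδ.le]
      push_cast
      rw [show (2:ℝ) * ((d:ℝ)/2) = (d:ℝ) by ring, Real.rpow_natCast]
    have hsqrt2 : Real.sqrt 2 = (2:ℝ) ^ ((1:ℝ)/2) := by
      rw [Real.sqrt_eq_rpow]
    rw [hzpow, hhalf, hsqrt2]
    rw [show (δ:ℝ) ^ (-(d:ℝ)) * δ ^ (-(d:ℝ)) * (δ ^ (d:ℝ) / 2 ^ ((d:ℝ)/2)) *
        ((2:ℝ) ^ ((1:ℝ)/2) * δ / ‖v‖) * ‖v‖^2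
        = (2 ^ ((1:ℝ)/2) / 2 ^ ((d:ℝ)/2)) *
          (δ ^ (-(d:ℝ)) * δ ^ (-(d:ℝ)) * δ ^ (d:ℝ) * δ) * (‖v‖^2 / ‖v‖) from by ring]
    have hv2 : (‖v‖^2 / ‖v‖ : ℝ) = ‖v‖ := by
      field_simp
    have h2e : ((2:ℝ) ^ ((1:ℝ)/2) / 2 ^ ((d:ℝ)/2)) = (2:ℝ) ^ (((1:ℝ) - d)/2) := by
      rw [← Real.rpow_sub (by norm_num)]
      congr 1
      ring
    have hde : (δ ^ (-(d:ℝ)) * δ ^ (-(d:ℝ)) * δ ^ (d:ℝ) * δ : ℝ) = δ ^ ((1:ℝ) - d) := by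
      have h : δ ^ (-(d:ℝ)) * δ ^ (-(d:ℝ)) * δ ^ (d:ℝ) * δ ^ (1:ℝ) = δ ^ ((1:ℝ) - d) := by
        rw [← Real.rpow_add hδ, ← Real.rpow_add hδ, ← Real.rpow_add hδ]
        congr 1
        ring
      simpa [Real.rpow_one] using h
    rw [hv2, h2e, hde]
end
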